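/- arXiv:1008.2608 — 3 statements merged into one kernel-verified Lean document; each statement's English description precedes it below -/
import Mathlib

section
/- Let Π be an extendable polyhedral complex in ℝⁿ, i.e., Π is a subcomplex of some complete polyhedral complex. Then rec(Π) = {rec(Λ) | Λ ∈ Π} is a conic polyhedral complex and c(Π) = {c(Λ) | Λ ∈ Π} ∪ {rec(Λ) × {0} | Λ ∈ Π} is a conic polyhedral complex. -/
open Set Pointwise

variable {E : Type*} [NormedAddCommGroup E] [NormedSpace ℝ E]

/-- A polyhedron: an intersection of finitely many closed halfspaces. -/
def IsPolyhedron (S : Set E) : Prop :=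
  ∃ (m : ℕ) (f : Fin m → E →ₗ[ℝ] ℝ) (b : Fin m → ℝ), S = {x | ∀ i, f i x ≤ b i}

/-- A polytope: the convex hull of a (nonempty) finite set of points. -/
def IsPolytope (S : Set E) : Prop :=
  ∃ F : Finset E, F.Nonempty ∧ S = convexHull ℝ (F : Set E)

/-- A convex polyhedral cone: the set of nonnegative combinations of finitely
many vectors. -/
def IsPolyhedralCone (S : Set E) : Prop :=
  ∃ F : Finset E, S = {x | ∃ c : E → ℝ, (∀ v, 0 ≤ c v) ∧ x = ∑ v ∈ F, c v • v}

/-- The local recession cone of `S` at `p`: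
`{u | p + t • u ∈ S for all t ≥ 0}`. -/
def locRec (S : Set E) (p : E) : Set E := {u | ∀ t : ℝ, 0 ≤ t → p + t • u ∈ S}

/-- The recession cone of a set: the intersection of all local recession
cones. -/
def recSet (S : Set E) : Set E := ⋂ p ∈ S, locRec S p

/-- The recession cone of a polyhedron: `{u | S + u ⊆ S}`. -/
def recPoly (S : Set E) : Set E := {u | ∀ x ∈ S, x + u ∈ S}

/-- `S_x`: the set of points of `S` minimizing the linear functional `x`. -/
def faceSet (S : Set E) (x : E →ₗ[ℝ] ℝ) : Set E := {u ∈ S | ∀ v ∈ S, x u ≤ x v}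

/-- A face of `S`: a nonempty subset of the form `S_x`. -/
def IsFaceOf (F S : Set E) : Prop := F.Nonempty ∧ ∃ x : E →ₗ[ℝ] ℝ, F = faceSet S x

/-- A polyhedral complex: a nonempty finite collection of (nonempty) polyhedra,
closed under taking faces, in which any two members that meet intersect in a
common face. -/
def IsPolyComplex (P : Set (Set E)) : Prop :=
  P.Nonempty ∧ P.Finite ∧ (∀ S ∈ P, IsPolyhedron S ∧ S.Nonempty) ∧
  (∀ S ∈ P, ∀ F : Set E, IsFaceOf F S → F ∈ P) ∧
  ∀ S ∈ P, ∀ T ∈ P, (S ∩ T).Nonempty → IsFaceOf (S ∩ T) S ∧ IsFaceOf (S ∩ T) T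

/-- The support of a collection of sets. -/
def polySupport (P : Set (Set E)) : Set E := ⋃ S ∈ P, S

/-- The Minkowski-Weyl condition: every local recession cone equals the global
recession cone. -/
def MWCondition (S : Set E) : Prop := ∀ p ∈ S, locRec S p = recSet S

/-- A conic polyhedral complex: a polyhedral complex all of whose members are
convex polyhedral cones. -/
def IsConicPolyComplex (P : Set (Set E)) : Prop :=
  IsPolyComplex P ∧ ∀ S ∈ P, IsPolyhedralCone S

/-- Strongly convex: contains no affine line. -/
def StronglyConvexSet (S : Set E) : Prop :=
  ¬ ∃ p d : E, d ≠ 0 ∧ ∀ t : ℝ, p + t • d ∈ S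

/-- A fan: a conic polyhedral complex all of whose members are strongly
convex. -/
def IsFan (P : Set (Set E)) : Prop :=
  IsConicPolyComplex P ∧ ∀ S ∈ P, StronglyConvexSet S

/-- The recession of a complex: the collection of recession cones of its
members. -/
def recComplex (P : Set (Set E)) : Set (Set E) := {C | ∃ Λ ∈ P, C = recPoly Λ}

/-- The cone `c(S)` over a set `S ⊆ E`, inside `E × ℝ`: the closure of
`{t • (u, 1) | u ∈ S, t > 0}`. -/
def coneOver (S : Set E) : Set (E × ℝ) :=
  closure {y | ∃ u ∈ S, ∃ t : ℝ, 0 < t ∧ y = t • (u, (1 : ℝ))}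

/-- The open cone `c°(S)` over `S`: `{t • (u, 1) | u ∈ S, t > 0}`. -/
def openCone (S : Set E) : Set (E × ℝ) :=
  {y | ∃ u ∈ S, ∃ t : ℝ, 0 < t ∧ y = t • (u, (1 : ℝ))}

/-- The cone `c(Π)` of a complex: the cones over its members together with the
recession cones of its members placed at height `0`. -/
def coneComplex (P : Set (Set E)) : Set (Set (E × ℝ)) :=
  {C | ∃ Λ ∈ P, C = coneOver Λ} ∪
  {C | ∃ Λ ∈ P, C = (recPoly Λ) ×ˢ ({0} : Set ℝ)}

/-- `aff` of a conic complex in `E × ℝ`: the nonempty intersections of its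
members with the hyperplane `E × {1}`, regarded as subsets of `E`. -/
def affOf (P : Set (Set (E × ℝ))) : Set (Set E) :=
  {L | L.Nonempty ∧ ∃ σ ∈ P, L = {u | (u, (1 : ℝ)) ∈ σ}}

/-- A polyhedral set: a finite union of polyhedra. -/
def IsPolyhedralSet (S : Set E) : Prop :=
  ∃ (k : ℕ) (f : Fin k → Set E), (∀ i, IsPolyhedron (f i)) ∧ S = ⋃ i, f i

/-- A finite union of polytopes. -/
def IsFiniteUnionOfPolytopes (S : Set E) : Prop :=
  ∃ (k : ℕ) (f : Fin k → Set E), (∀ i, IsPolytope (f i)) ∧ S = ⋃ i, f i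

/-! ### Auxiliary development -/
set_option linter.unusedSectionVars false
set_option linter.unusedTactic false
set_option maxHeartbeats 1000000

section AuxBasics

variable {E : Type*} [NormedAddCommGroup E] [NormedSpace ℝ E]

lemma aux_arch_nat {A B c : ℝ} (h : ∀ k : ℕ, A + (k : ℝ) * c ≤ B) : c ≤ 0 := by
  by_contra hc
  push_neg at hc
  obtain ⟨k, hk⟩ := exists_nat_gt ((B - A) / c)
  have h1 := h k
  have h2 := (div_lt_iff₀ hc).mp hk
  linarith

lemma aux_arch {A B c s₀ : ℝ} (h : ∀ s : ℝ, s₀ ≤ s → A + s * c ≤ B) : c ≤ 0 := by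
  by_contra hc
  push_neg at hc
  have h2 := h (max s₀ ((B - A + 1) / c)) (le_max_left _ _)
  have h3 : (B - A + 1) / c ≤ max s₀ ((B - A + 1) / c) := le_max_right _ _
  have h4 := (div_le_iff₀ hc).mp h3
  nlinarith

lemma aux_convex {ι : Type*} (f : ι → E →ₗ[ℝ] ℝ) (b : ι → ℝ) :
    Convex ℝ {x : E | ∀ i, f i x ≤ b i} := by
  intro x hx y hy a a' ha ha' hab
  intro i
  have h1 : f i x ≤ b i := hx i
  have h2 : f i y ≤ b i := hy i
  have h3 : a * b i + a' * b i = b i := by rw [← add_mul, hab, one_mul]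
  simp only [map_add, map_smul, smul_eq_mul]
  have h4 := mul_le_mul_of_nonneg_left h1 ha
  have h5 := mul_le_mul_of_nonneg_left h2 ha'
  linarith

lemma aux_recPoly_zero (S : Set E) : (0 : E) ∈ recPoly S := fun x hx => by simpa using hx

lemma aux_recPoly_add {S : Set E} {u v : E} (hu : u ∈ recPoly S) (hv : v ∈ recPoly S) :
    u + v ∈ recPoly S := fun x hx => by
  rw [← add_assoc]
  exact hv _ (hu _ hx)

lemma aux_recPoly_nsmul {S : Set E} {u x : E} (hu : u ∈ recPoly S) (hx : x ∈ S) (k : ℕ) :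
    x + (k : ℝ) • u ∈ S := by
  induction k with
  | zero => simpa using hx
  | succ n ih =>
      have h1 := hu _ ih
      have h2 : x + (n : ℝ) • u + u = x + ((n : ℕ) + 1 : ℝ) • u := by
        push_cast
        module
      rw [h2] at h1
      push_cast at h1 ⊢
      exact h1

lemma aux_mem_recPoly {ι : Type*} [Fintype ι] {f : ι → E →ₗ[ℝ] ℝ} {b : ι → ℝ} {S : Set E}
    (hrep : S = {x : E | ∀ i, f i x ≤ b i}) (hne : S.Nonempty) {u : E} :
    u ∈ recPoly S ↔ ∀ i, f i u ≤ 0 := by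
  constructor
  · intro hu i
    obtain ⟨p, hp⟩ := hne
    refine aux_arch_nat (A := f i p) (B := b i) fun k => ?_
    have h1 := aux_recPoly_nsmul hu hp k
    rw [hrep] at h1
    have h2 := h1 i
    simpa [map_add, map_smul, smul_eq_mul] using h2
  · intro hu x hx
    rw [hrep] at hx ⊢
    intro i
    have h1 := hx i
    have h2 := hu i
    simp only [Set.mem_setOf_eq, map_add]
    linarith

lemma aux_ray_mem {ι : Type*} [Fintype ι] {f : ι → E →ₗ[ℝ] ℝ} {b : ι → ℝ} {S : Set E}
    (hrep : S = {x : E | ∀ i, f i x ≤ b i}) {x u : E} (hx : x ∈ S)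
    (hu : ∀ i, f i u ≤ 0) {s : ℝ} (hs : 0 ≤ s) : x + s • u ∈ S := by
  rw [hrep] at hx ⊢
  intro i
  have h1 := hx i
  have h2 := mul_nonneg hs (neg_nonneg.mpr (hu i))
  simp only [Set.mem_setOf_eq, map_add, map_smul, smul_eq_mul]
  nlinarith

lemma aux_tail_rec {ι : Type*} [Fintype ι] {f : ι → E →ₗ[ℝ] ℝ} {b : ι → ℝ} {S : Set E}
    (hrep : S = {x : E | ∀ i, f i x ≤ b i}) {z u : E} {s₀ : ℝ}
    (h : ∀ s : ℝ, s₀ ≤ s → z + s • u ∈ S) : ∀ i, f i u ≤ 0 := by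
  intro i
  refine aux_arch (A := f i z) (B := b i) (s₀ := s₀) fun s hs => ?_
  have h1 := h s hs
  rw [hrep] at h1
  have h2 := h1 i
  simpa [map_add, map_smul, smul_eq_mul] using h2

lemma aux_recPoly_mono {S T : Set E} (hT : IsPolyhedron T) (hST : S ⊆ T) (hne : S.Nonempty)
    {u : E} (hu : u ∈ recPoly S) : u ∈ recPoly T := by
  obtain ⟨m, f, b, hrep⟩ := hT
  obtain ⟨z, hz⟩ := hne
  rw [aux_mem_recPoly hrep ⟨z, hST hz⟩]
  intro i
  refine aux_arch_nat (A := f i z) (B := b i) fun k => ?_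
  have h1 := hST (aux_recPoly_nsmul hu hz k)
  rw [hrep] at h1
  simpa [map_add, map_smul, smul_eq_mul] using h1 i

lemma aux_rec_inter {S T : Set E} (hS : IsPolyhedron S) (hT : IsPolyhedron T)
    (hne : (S ∩ T).Nonempty) : recPoly (S ∩ T) = recPoly S ∩ recPoly T := by
  ext u
  constructor
  · intro hu
    exact ⟨aux_recPoly_mono hS Set.inter_subset_left hne hu,
      aux_recPoly_mono hT Set.inter_subset_right hne hu⟩
  · rintro ⟨h1, h2⟩ x hx
    exact ⟨h1 x hx.1, h2 x hx.2⟩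

end AuxBasics

section AuxEngine

variable {E : Type*} [NormedAddCommGroup E] [NormedSpace ℝ E]

/-- The finitely generated cone on a finite set. -/
def fgSet (F : Finset E) : Set E :=
  {x | ∃ c : E → ℝ, (∀ v, 0 ≤ c v) ∧ x = ∑ v ∈ F, c v • v}

lemma aux_isPolyhedralCone_iff {S : Set E} : IsPolyhedralCone S ↔ ∃ F : Finset E, S = fgSet F :=
  Iff.rfl

lemma fgSet_zero_mem (F : Finset E) : (0 : E) ∈ fgSet F :=
  ⟨0, fun _ => le_rfl, by simp⟩

lemma fgSet_gen_mem {F : Finset E} {v : E} (hv : v ∈ F) : v ∈ fgSet F := by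
  classical
  refine ⟨fun w => if w = v then 1 else 0, fun w => by positivity, ?_⟩
  have h1 : ∀ w ∈ F, (if w = v then (1 : ℝ) else 0) • w = if w = v then w else 0 := by
    intro w _
    split_ifs <;> simp
  rw [Finset.sum_congr rfl h1, Finset.sum_ite_eq' F v (fun w => w), if_pos hv]

lemma fgSet_smul_mem {F : Finset E} {x : E} {s : ℝ} (hs : 0 ≤ s) (hx : x ∈ fgSet F) :
    s • x ∈ fgSet F := by
  obtain ⟨c, hc, rfl⟩ := hx
  refine ⟨fun w => s * c w, fun w => mul_nonneg hs (hc w), ?_⟩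
  rw [Finset.smul_sum]
  exact Finset.sum_congr rfl fun w _ => smul_smul s (c w) w

lemma fgSet_add_mem {F : Finset E} {x y : E} (hx : x ∈ fgSet F) (hy : y ∈ fgSet F) :
    x + y ∈ fgSet F := by
  obtain ⟨c, hc, rfl⟩ := hx
  obtain ⟨d, hd, rfl⟩ := hy
  refine ⟨fun w => c w + d w, fun w => add_nonneg (hc w) (hd w), ?_⟩
  rw [← Finset.sum_add_distrib]
  exact Finset.sum_congr rfl fun w _ => (add_smul (c w) (d w) w).symm

lemma fgSet_convex (F : Finset E) : Convex ℝ (fgSet F) := by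
  intro x hx y hy a a' ha ha' _
  exact fgSet_add_mem (fgSet_smul_mem ha hx) (fgSet_smul_mem ha' hy)

/-- Fourier–Motzkin elimination of one variable, for homogeneous systems. -/
lemma aux_fm {ι : Type} [Fintype ι] (a : ι → ℝ) (h : ι → E →ₗ[ℝ] ℝ) :
    ∃ (κ : Type) (_ : Fintype κ) (g : κ → E →ₗ[ℝ] ℝ),
      {x : E | ∃ t : ℝ, ∀ i, a i * t + h i x ≤ 0} = {x : E | ∀ k, g k x ≤ 0} := by
  classical
  refine ⟨ι ⊕ ι × ι, inferInstance,
    Sum.elim (fun i => if a i = 0 then h i else 0)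
      (fun p => if 0 < a p.1 ∧ a p.2 < 0 then a p.1 • h p.2 - a p.2 • h p.1 else 0), ?_⟩
  ext x
  simp only [Set.mem_setOf_eq]
  constructor
  · rintro ⟨t, ht⟩ k
    rcases k with i | ⟨i, j⟩
    · simp only [Sum.elim_inl]
      split_ifs with h0
      · have := ht i
        rw [h0] at this
        linarith
      · simp
    · simp only [Sum.elim_inr]
      split_ifs with h0
      · obtain ⟨hi, hj⟩ := h0
        have h1 := ht i
        have h2 := ht j
        simp only [LinearMap.sub_apply, LinearMap.smul_apply, smul_eq_mul]
        nlinarith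
      · simp
  · intro hx
    set P := Finset.univ.filter (fun i => 0 < a i) with hP
    set N := Finset.univ.filter (fun i => a i < 0) with hN
    have hcross : ∀ i j, 0 < a i → a j < 0 → a i * h j x - a j * h i x ≤ 0 := by
      intro i j hi hj
      have := hx (Sum.inr (i, j))
      simp only [Sum.elim_inr, if_pos (And.intro hi hj), LinearMap.sub_apply,
        LinearMap.smul_apply, smul_eq_mul] at this
      linarith
    have hzero : ∀ i, a i = 0 → h i x ≤ 0 := by
      intro i hi
      have := hx (Sum.inl i)
      simp only [Sum.elim_inl, if_pos hi] at this
      exact this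
    by_cases hPne : P.Nonempty
    · refine ⟨P.inf' hPne (fun i => -(h i x) / a i), fun i => ?_⟩
      rcases lt_trichotomy (a i) 0 with hlt | heq | hgt
      · obtain ⟨i0, hi0P, hi0⟩ := Finset.exists_mem_eq_inf' hPne (fun i => -(h i x) / a i)
        rw [hi0]
        have hi0pos : 0 < a i0 := by
          have := hi0P
          rw [hP, Finset.mem_filter] at this
          exact this.2
        have hc := hcross i0 i hi0pos hlt
        have key : a i * (-(h i0 x) / a i0) ≤ -(h i x) := by
          rw [← mul_div_assoc, div_le_iff₀ hi0pos]
          nlinarith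
        linarith
      · have := hzero i heq
        rw [heq]
        linarith
      · have hiP : i ∈ P := by
          rw [hP, Finset.mem_filter]
          exact ⟨Finset.mem_univ i, hgt⟩
        have h1 : P.inf' hPne (fun i => -(h i x) / a i) ≤ -(h i x) / a i :=
          Finset.inf'_le _ hiP
        have h2 := mul_le_mul_of_nonneg_left h1 (le_of_lt hgt)
        have h3 : a i * (-(h i x) / a i) = -(h i x) := by
          rw [mul_comm]
          exact div_mul_cancel₀ _ (ne_of_gt hgt)
        linarith
    · by_cases hNne : N.Nonempty
      · refine ⟨N.sup' hNne (fun j => -(h j x) / a j), fun i => ?_⟩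
        rcases lt_trichotomy (a i) 0 with hlt | heq | hgt
        · have hiN : i ∈ N := by
            rw [hN, Finset.mem_filter]
            exact ⟨Finset.mem_univ i, hlt⟩
          have h1 : -(h i x) / a i ≤ N.sup' hNne (fun j => -(h j x) / a j) :=
            Finset.le_sup' (fun j => -(h j x) / a j) hiN
          have h2 := mul_le_mul_of_nonpos_left h1 (le_of_lt hlt)
          have h3 : a i * (-(h i x) / a i) = -(h i x) := by
            rw [mul_comm]
            exact div_mul_cancel₀ _ (ne_of_lt hlt)
          linarith
        · have := hzero i heq
          rw [heq]
          linarith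
        · exact (hPne ⟨i, by rw [hP, Finset.mem_filter]; exact ⟨Finset.mem_univ i, hgt⟩⟩).elim
      · refine ⟨0, fun i => ?_⟩
        have hi0 : a i = 0 := by
          by_contra hne
          rcases lt_or_gt_of_ne hne with hlt | hgt
          · exact hNne ⟨i, by rw [hN, Finset.mem_filter]; exact ⟨Finset.mem_univ i, hlt⟩⟩
          · exact hPne ⟨i, by rw [hP, Finset.mem_filter]; exact ⟨Finset.mem_univ i, hgt⟩⟩
        have := hzero i hi0
        rw [hi0]
        linarith

/-- Weyl: a finitely generated cone is an intersection of homogeneous halfspaces. -/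
lemma aux_weyl [FiniteDimensional ℝ E] (F : Finset E) :
    ∃ (ι : Type) (_ : Fintype ι) (g : ι → E →ₗ[ℝ] ℝ),
      fgSet F = {x : E | ∀ i, g i x ≤ 0} := by
  classical
  induction F using Finset.induction_on with
  | empty =>
      set B := Module.finBasis ℝ E with hB
      refine ⟨Fin (Module.finrank ℝ E) ⊕ Fin (Module.finrank ℝ E), inferInstance,
        Sum.elim (fun i => B.coord i) (fun i => -B.coord i), ?_⟩
      ext x
      simp only [fgSet, Finset.sum_empty, Set.mem_setOf_eq]
      constructor
      · rintro ⟨c, hc, rfl⟩ k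
        rcases k with i | i <;> simp
      · intro hx
        have hco : ∀ i, B.coord i x = 0 := by
          intro i
          have h1 := hx (Sum.inl i)
          have h2 := hx (Sum.inr i)
          simp only [Sum.elim_inl, Sum.elim_inr, LinearMap.neg_apply] at h1 h2
          linarith
        have hx0 : x = 0 := (B.forall_coord_eq_zero_iff).mp hco
        exact ⟨0, fun _ => le_rfl, hx0⟩
  | @insert v F hvF ih =>
      obtain ⟨ι, _, g, hg⟩ := ih
      set a : Option ι → ℝ := fun o => o.elim (-1) (fun i' => -(g i' v)) with ha
      set hh : Option ι → E →ₗ[ℝ] ℝ := fun o => o.elim 0 (fun i' => g i') with hhh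
      have claim1 : fgSet (insert v F) = {x : E | ∃ t : ℝ, ∀ o, a o * t + hh o x ≤ 0} := by
        ext x
        simp only [Set.mem_setOf_eq]
        constructor
        · rintro ⟨c, hc, rfl⟩
          refine ⟨c v, fun o => ?_⟩
          have hmem : (∑ w ∈ insert v F, c w • w) - c v • v ∈ fgSet F := by
            rw [Finset.sum_insert hvF]
            refine ⟨c, hc, by abel⟩
          rw [hg] at hmem
          rcases o with _ | i
          · simp only [ha, hhh, Option.elim, map_zero, LinearMap.zero_apply]
            have := hc v
            linarith
          · have := hmem i
            simp only [map_sub, map_smul, smul_eq_mul] at this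
            simp only [ha, hhh, Option.elim]
            linarith
        · rintro ⟨t, ht⟩
          have ht0 : 0 ≤ t := by
            have := ht none
            simp only [ha, hhh, Option.elim, LinearMap.zero_apply] at this
            linarith
          have hmem : x - t • v ∈ fgSet F := by
            rw [hg]
            intro i
            have := ht (some i)
            simp only [ha, hhh, Option.elim] at this
            simp only [map_sub, map_smul, smul_eq_mul]
            linarith
          obtain ⟨c, hc, hxc⟩ := hmem
          refine ⟨Function.update c v t, fun w => ?_, ?_⟩
          · rcases eq_or_ne w v with rfl | hw
            · simpa using ht0
            · simpa [Function.update_apply, hw] using hc w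
          · rw [Finset.sum_insert hvF]
            have h1 : Function.update c v t v = t := Function.update_self v t c
            have h2 : ∑ w ∈ F, Function.update c v t w • w = ∑ w ∈ F, c w • w := by
              refine Finset.sum_congr rfl fun w hw => ?_
              have : w ≠ v := fun hwv => hvF (hwv ▸ hw)
              rw [Function.update_apply, if_neg this]
            rw [h1, h2, ← hxc]
            abel
      obtain ⟨κ, _, g', hg'⟩ := aux_fm a hh
      exact ⟨κ, ‹_›, g', by rw [claim1, hg']⟩

end AuxEngine

section AuxMinkowski

variable {E : Type*} [NormedAddCommGroup E] [NormedSpace ℝ E]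

/-- Minkowski: a polyhedral cone given by homogeneous inequalities is finitely generated. -/
lemma aux_minkowski [FiniteDimensional ℝ E] {ι : Type*} [Fintype ι] (g : ι → E →ₗ[ℝ] ℝ) :
    IsPolyhedralCone {x : E | ∀ i, g i x ≤ 0} := by
  classical
  set B := Module.finBasis ℝ E with hB
  set dotL : E → E →ₗ[ℝ] ℝ := fun y => ∑ i, B.repr y i • B.coord i with hdotL
  have hdot_apply : ∀ y x : E, dotL y x = ∑ i, B.repr y i * B.repr x i := by
    intro y x
    rw [hdotL]
    simp [LinearMap.sum_apply, LinearMap.smul_apply, Module.Basis.coord_apply, smul_eq_mul]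
  have hsym : ∀ y x : E, dotL y x = dotL x y := by
    intro y x
    rw [hdot_apply, hdot_apply]
    exact Finset.sum_congr rfl fun i _ => mul_comm _ _
  set vec : (E →ₗ[ℝ] ℝ) → E := fun φ => ∑ i, φ (B i) • B i with hvec
  have hreprcoord : ∀ (φ : E →ₗ[ℝ] ℝ) i, B.repr (vec φ) i = φ (B i) := by
    intro φ i
    rw [hvec, map_sum, Finsupp.finset_sum_apply]
    have h3 : ∀ j, (B.repr (φ (B j) • B j)) i = if j = i then φ (B j) else 0 := by
      intro j
      rw [map_smul, Finsupp.smul_apply, Module.Basis.repr_self, Finsupp.single_apply]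
      split_ifs <;> simp
    rw [Finset.sum_congr rfl fun j _ => h3 j, Finset.sum_ite_eq' Finset.univ i
      (fun j => φ (B j)), if_pos (Finset.mem_univ i)]
  have hrepr : ∀ (φ : E →ₗ[ℝ] ℝ) (x : E), dotL (vec φ) x = φ x := by
    intro φ x
    rw [hdot_apply]
    conv_rhs => rw [← B.sum_repr x, map_sum]
    simp only [map_smul, smul_eq_mul, hreprcoord]
    exact Finset.sum_congr rfl fun i _ => mul_comm _ _
  set av : ι → E := fun i => vec (g i) with hav
  have hgdot : ∀ (i : ι) (x : E), dotL (av i) x = g i x := fun i x => hrepr (g i) x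
  obtain ⟨κ, instκ, k, hk⟩ := aux_weyl (E := E) (Finset.univ.image av)
  set cv : κ → E := fun l => vec (k l) with hcv
  have hkdot : ∀ (l : κ) (x : E), dotL (cv l) x = k l x := fun l x => hrepr (k l) x
  refine ⟨Finset.univ.image cv, ?_⟩
  show {x : E | ∀ i, g i x ≤ 0} = fgSet (Finset.univ.image cv)
  apply Set.Subset.antisymm
  · intro x hx
    by_contra hnot
    obtain ⟨κ', instκ', k', hk'⟩ := aux_weyl (E := E) (Finset.univ.image cv)
    have hDclosed : IsClosed (fgSet (Finset.univ.image cv)) := by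
      rw [hk']
      have heq : {x : E | ∀ l, k' l x ≤ 0} = ⋂ l, {x : E | k' l x ≤ 0} := by
        ext z
        simp [Set.mem_iInter]
      rw [heq]
      refine isClosed_iInter fun l => ?_
      have : {x : E | k' l x ≤ 0} = (k' l) ⁻¹' Set.Iic 0 := rfl
      rw [this]
      exact IsClosed.preimage (k' l).continuous_of_finiteDimensional isClosed_Iic
    have hDconv : Convex ℝ (fgSet (Finset.univ.image cv)) := fgSet_convex _
    obtain ⟨f, u, hfx, hfD⟩ := geometric_hahn_banach_point_closed hDconv hDclosed hnot
    have hu0 : u < 0 := by simpa using hfD 0 (fgSet_zero_mem _)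
    have hfnn : ∀ z ∈ fgSet (Finset.univ.image cv), 0 ≤ f z := by
      intro z hz
      by_contra hneg
      push_neg at hneg
      have hs : 0 ≤ u / f z := le_of_lt (div_pos_of_neg_of_neg hu0 hneg)
      have h5 := hfD _ (fgSet_smul_mem hs hz)
      rw [map_smul, smul_eq_mul, div_mul_cancel₀ _ (ne_of_lt hneg)] at h5
      exact lt_irrefl u h5
    set y := vec (-f.toLinearMap) with hy
    have hyK : y ∈ fgSet (Finset.univ.image av) := by
      rw [hk]
      intro l
      have h1 : k l y = dotL (cv l) y := (hkdot l y).symm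
      have h2 : dotL (cv l) y = dotL y (cv l) := hsym _ _
      have h3 : dotL y (cv l) = (-f.toLinearMap) (cv l) := hrepr _ _
      have h4 : (0:ℝ) ≤ f (cv l) :=
        hfnn _ (fgSet_gen_mem (Finset.mem_image_of_mem cv (Finset.mem_univ l)))
      rw [h1, h2, h3]
      simpa using h4
    obtain ⟨c, hc, hyc⟩ := hyK
    have hle : dotL y x ≤ 0 := by
      rw [hyc, hsym, map_sum]
      simp only [map_smul, smul_eq_mul]
      refine Finset.sum_nonpos fun w hw => ?_
      obtain ⟨i, _, rfl⟩ := Finset.mem_image.mp hw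
      have h6 : dotL x (av i) = dotL (av i) x := hsym _ _
      rw [h6, hgdot]
      exact mul_nonpos_of_nonneg_of_nonpos (hc _) (hx i)
    have h7 : dotL y x = (-f.toLinearMap) x := hrepr _ x
    rw [h7] at hle
    simp only [LinearMap.neg_apply, ContinuousLinearMap.coe_coe, neg_nonpos] at hle
    linarith
  · rintro x ⟨c, hc, rfl⟩
    intro i
    rw [map_sum]
    simp only [map_smul, smul_eq_mul]
    refine Finset.sum_nonpos fun w hw => ?_
    obtain ⟨l, _, rfl⟩ := Finset.mem_image.mp hw
    have h4 : av i ∈ fgSet (Finset.univ.image av) :=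
      fgSet_gen_mem (Finset.mem_image_of_mem av (Finset.mem_univ i))
    rw [hk] at h4
    have h5 := h4 l
    have h1 : g i (cv l) = dotL (av i) (cv l) := (hgdot i _).symm
    have h2 : dotL (av i) (cv l) = dotL (cv l) (av i) := hsym _ _
    have h3 : dotL (cv l) (av i) = k l (av i) := hkdot l _
    refine mul_nonpos_of_nonneg_of_nonpos (hc _) ?_
    rw [h1, h2, h3]
    exact h5

end AuxMinkowski

section AuxFaces

variable {E : Type*} [NormedAddCommGroup E] [NormedSpace ℝ E]

lemma aux_isPolyhedron_of_rep {ι : Type*} [Fintype ι] (f : ι → E →ₗ[ℝ] ℝ) (b : ι → ℝ) :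
    IsPolyhedron {x : E | ∀ i, f i x ≤ b i} := by
  classical
  set e := Fintype.equivFin ι with he
  refine ⟨Fintype.card ι, fun j => f (e.symm j), fun j => b (e.symm j), ?_⟩
  ext z
  constructor
  · intro h j
    exact h _
  · intro h i
    have h1 := h (e i)
    simpa using h1

lemma aux_recPoly_rep {ι : Type*} [Fintype ι] {f : ι → E →ₗ[ℝ] ℝ} {b : ι → ℝ} {S : Set E}
    (hrep : S = {x : E | ∀ i, f i x ≤ b i}) (hne : S.Nonempty) :
    recPoly S = {z : E | ∀ i, f i z ≤ 0} := by
  ext u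
  rw [aux_mem_recPoly hrep hne]
  rfl

lemma aux_faceSet_char {S : Set E} {x : E →ₗ[ℝ] ℝ} {w : E} (hw : w ∈ faceSet S x) :
    faceSet S x = {v ∈ S | x v = x w} := by
  ext v
  constructor
  · rintro ⟨hvS, hv⟩
    exact ⟨hvS, le_antisymm (hv w hw.1) (hw.2 v hvS)⟩
  · rintro ⟨hvS, hv⟩
    exact ⟨hvS, fun v' hv' => hv ▸ hw.2 v' hv'⟩

lemma aux_cone_min {ι : Type*} [Fintype ι] {f : ι → E →ₗ[ℝ] ℝ} {S : Set E}
    (hrep : S = {z : E | ∀ i, f i z ≤ 0}) {x : E →ₗ[ℝ] ℝ}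
    (hne : (faceSet S x).Nonempty) :
    (∀ v ∈ S, 0 ≤ x v) ∧ faceSet S x = {v ∈ S | x v = 0} := by
  obtain ⟨w, hw⟩ := hne
  have h0S : (0 : E) ∈ S := by
    rw [hrep]
    intro i
    simp
  have h2w : (2 : ℝ) • w ∈ S := by
    have h1 : w ∈ S := hw.1
    rw [hrep] at h1 ⊢
    intro i
    have := h1 i
    simp only [Set.mem_setOf_eq, map_smul, smul_eq_mul]
    linarith
  have hw0 : x w = 0 := by
    have h1 : x w ≤ x 0 := hw.2 0 h0S
    have h2 : x w ≤ x ((2:ℝ) • w) := hw.2 _ h2w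
    rw [map_zero] at h1
    rw [map_smul, smul_eq_mul] at h2
    linarith
  have hnn : ∀ v ∈ S, 0 ≤ x v := fun v hv => hw0 ▸ hw.2 v hv
  refine ⟨hnn, ?_⟩
  rw [aux_faceSet_char hw, hw0]

lemma aux_cone_face' {ι : Type*} [Fintype ι] {f : ι → E →ₗ[ℝ] ℝ} {S : Set E}
    (hrep : S = {z : E | ∀ i, f i z ≤ 0}) {x : E →ₗ[ℝ] ℝ} (hx : ∀ v ∈ S, 0 ≤ x v) :
    faceSet S x = {v ∈ S | x v = 0} ∧ IsFaceOf {v ∈ S | x v = 0} S := by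
  have h0S : (0 : E) ∈ S := by
    rw [hrep]
    intro i
    simp
  have h0face : (0 : E) ∈ faceSet S x := ⟨h0S, fun v hv => by
    rw [map_zero]
    exact hx v hv⟩
  have heq : faceSet S x = {v ∈ S | x v = 0} := by
    rw [aux_faceSet_char h0face, map_zero]
  exact ⟨heq, ⟨⟨0, by rw [← heq]; exact h0face⟩, x, heq.symm⟩⟩

lemma aux_rec_nonneg {S : Set E} {x : E →ₗ[ℝ] ℝ} {w : E} (hw : w ∈ faceSet S x) :
    ∀ u ∈ recPoly S, 0 ≤ x u := by
  intro u hu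
  have h1 := hw.2 _ (hu w hw.1)
  rw [map_add] at h1
  linarith

lemma aux_rec_faceSet {ι : Type*} [Fintype ι] {f : ι → E →ₗ[ℝ] ℝ} {b : ι → ℝ} {S : Set E}
    (hrep : S = {z : E | ∀ i, f i z ≤ b i}) {x : E →ₗ[ℝ] ℝ}
    (hne : (faceSet S x).Nonempty) :
    recPoly (faceSet S x) = {u ∈ recPoly S | x u = 0} := by
  obtain ⟨w, hw⟩ := hne
  have hchar := aux_faceSet_char hw
  ext u
  constructor
  · intro hu
    have hSpoly : IsPolyhedron S := by
      rw [hrep]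
      exact aux_isPolyhedron_of_rep f b
    have huS : u ∈ recPoly S :=
      aux_recPoly_mono hSpoly (Set.sep_subset _ _) ⟨w, hw⟩ hu
    have hwu : w + u ∈ faceSet S x := hu w hw
    rw [hchar] at hwu
    have : x (w + u) = x w := hwu.2
    rw [map_add] at this
    exact ⟨huS, by linarith⟩
  · rintro ⟨huS, hxu⟩ v hv
    rw [hchar] at hv ⊢
    exact ⟨huS v hv.1, by rw [map_add, hxu, add_zero, hv.2]⟩

lemma aux_exists_min [FiniteDimensional ℝ E] {ι : Type*} [Fintype ι]
    {f : ι → E →ₗ[ℝ] ℝ} {b : ι → ℝ} {S : Set E}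
    (hrep : S = {z : E | ∀ i, f i z ≤ b i}) (hne : S.Nonempty) {x : E →ₗ[ℝ] ℝ}
    (hx : ∀ u ∈ recPoly S, 0 ≤ x u) : (faceSet S x).Nonempty := by
  classical
  set fh : Option ι → (E × ℝ) →ₗ[ℝ] ℝ := fun o => o.elim
      (-(LinearMap.snd ℝ E ℝ))
      (fun i => (f i).comp (LinearMap.fst ℝ E ℝ) - (b i) • (LinearMap.snd ℝ E ℝ)) with hfh
  have hmemC : ∀ z : E × ℝ, (∀ o, fh o z ≤ 0) ↔ (0 ≤ z.2 ∧ ∀ i, f i z.1 ≤ z.2 * b i) := by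
    intro z
    constructor
    · intro h
      refine ⟨?_, fun i => ?_⟩
      · have h1 := h none
        simp only [hfh, Option.elim, LinearMap.neg_apply, LinearMap.snd_apply] at h1
        linarith
      · have h1 := h (some i)
        simp only [hfh, Option.elim, LinearMap.sub_apply, LinearMap.comp_apply,
          LinearMap.fst_apply, LinearMap.smul_apply, LinearMap.snd_apply, smul_eq_mul] at h1
        linarith
    · rintro ⟨ht, h⟩ o
      rcases o with _ | i
      · simp only [hfh, Option.elim, LinearMap.neg_apply, LinearMap.snd_apply]
        linarith
      · have h1 := h i
        simp only [hfh, Option.elim, LinearMap.sub_apply, LinearMap.comp_apply,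
          LinearMap.fst_apply, LinearMap.smul_apply, LinearMap.snd_apply, smul_eq_mul]
        linarith
  obtain ⟨G, hG0⟩ := aux_minkowski fh
  have hG : {z : E × ℝ | ∀ o, fh o z ≤ 0} = fgSet G := hG0
  obtain ⟨p, hp⟩ := hne
  have hpC : ((p, 1) : E × ℝ) ∈ fgSet G := by
    rw [← hG]
    refine (hmemC (p, 1)).mpr ⟨by norm_num, fun i => ?_⟩
    have h1 : p ∈ {z : E | ∀ i, f i z ≤ b i} := hrep ▸ hp
    simpa using h1 i
  have hGen : ∀ gv ∈ G, 0 ≤ gv.2 ∧ ∀ i, f i gv.1 ≤ gv.2 * b i := by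
    intro gv hgv
    refine (hmemC gv).mp ?_
    have : gv ∈ fgSet G := fgSet_gen_mem hgv
    rw [← hG] at this
    exact this
  set G₁ := G.filter (fun gv => 0 < gv.2) with hG₁def
  obtain ⟨c, hc, hpc⟩ := hpC
  have hsnd : ∀ (d : E × ℝ → ℝ), (∑ gv ∈ G, d gv • gv).2 = ∑ gv ∈ G, d gv * gv.2 := by
    intro d
    rw [Prod.snd_sum]
    exact Finset.sum_congr rfl fun gv _ => rfl
  have hfst : ∀ (d : E × ℝ → ℝ), (∑ gv ∈ G, d gv • gv).1 = ∑ gv ∈ G, d gv • gv.1 := by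
    intro d
    rw [Prod.fst_sum]
    exact Finset.sum_congr rfl fun gv _ => rfl
  have hone : (1 : ℝ) = ∑ gv ∈ G, c gv * gv.2 := by
    have := congrArg Prod.snd hpc
    rw [hsnd] at this
    simpa using this
  have hG₁ne : G₁.Nonempty := by
    by_contra hG₁e
    rw [Finset.not_nonempty_iff_eq_empty] at hG₁e
    have hz : ∀ gv ∈ G, c gv * gv.2 = 0 := by
      intro gv hgv
      have h0 : ¬ (0 < gv.2) := by
        intro hlt
        have : gv ∈ G₁ := Finset.mem_filter.mpr ⟨hgv, hlt⟩
        rw [hG₁e] at this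
        exact absurd this (Finset.notMem_empty gv)
      have h1 := (hGen gv hgv).1
      have : gv.2 = 0 := le_antisymm (not_lt.mp h0) h1
      rw [this, mul_zero]
    rw [Finset.sum_congr rfl hz, Finset.sum_const_zero] at hone
    norm_num at hone
  obtain ⟨gm, hgm, hgmmin⟩ := Finset.exists_min_image G₁ (fun gv => x (gv.2⁻¹ • gv.1)) hG₁ne
  have hgmG : gm ∈ G := (Finset.mem_filter.mp hgm).1
  have hgmpos : 0 < gm.2 := (Finset.mem_filter.mp hgm).2
  set w := gm.2⁻¹ • gm.1 with hwdef
  have hnorm : ∀ gv ∈ G₁, (gv.2⁻¹ • gv.1) ∈ S := by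
    intro gv hgv
    have hpos : 0 < gv.2 := (Finset.mem_filter.mp hgv).2
    have h1 := (hGen gv (Finset.mem_filter.mp hgv).1).2
    rw [hrep]
    intro i
    have h2 := h1 i
    have h3 := mul_le_mul_of_nonneg_left h2 (le_of_lt (inv_pos.mpr hpos))
    rw [← mul_assoc, inv_mul_cancel₀ (ne_of_gt hpos), one_mul] at h3
    simpa [map_smul, smul_eq_mul] using h3
  have hwS : w ∈ S := hnorm gm hgm
  refine ⟨w, hwS, ?_⟩
  intro v hv
  -- v ∈ S ; write (v,1) as a conical combination
  have hvC : ((v, 1) : E × ℝ) ∈ fgSet G := by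
    rw [← hG]
    refine (hmemC (v, 1)).mpr ⟨by norm_num, fun i => ?_⟩
    have h1 : v ∈ {z : E | ∀ i, f i z ≤ b i} := hrep ▸ hv
    simpa using h1 i
  obtain ⟨d, hd, hvd⟩ := hvC
  have hword : (1 : ℝ) = ∑ gv ∈ G, d gv * gv.2 := by
    have := congrArg Prod.snd hvd
    rw [hsnd] at this
    simpa using this
  have hvx : x v = ∑ gv ∈ G, d gv * x gv.1 := by
    have := congrArg Prod.fst hvd
    rw [hfst] at this
    simp only [Prod.fst] at this
    rw [this, map_sum]
    exact Finset.sum_congr rfl fun gv _ => by rw [map_smul, smul_eq_mul]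
  have hsplitx := Finset.sum_filter_add_sum_filter_not G (fun gv => 0 < gv.2)
      (fun gv => d gv * x gv.1)
  have hsplit2 := Finset.sum_filter_add_sum_filter_not G (fun gv => 0 < gv.2)
      (fun gv => d gv * gv.2)
  have hrest0 : ∀ gv ∈ G.filter (fun gv => ¬ 0 < gv.2), gv.2 = 0 := by
    intro gv hgv
    obtain ⟨h1, h2⟩ := Finset.mem_filter.mp hgv
    exact le_antisymm (not_lt.mp h2) (hGen gv h1).1
  have hsum2rest : ∑ gv ∈ G.filter (fun gv => ¬ 0 < gv.2), d gv * gv.2 = 0 := by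
    refine Finset.sum_eq_zero fun gv hgv => ?_
    rw [hrest0 gv hgv, mul_zero]
  have hG₁sum : ∑ gv ∈ G₁, d gv * gv.2 = 1 := by
    rw [hG₁def]
    have := hsplit2
    rw [hsum2rest, add_zero] at this
    rw [this, ← hword]
  have hrestnn : 0 ≤ ∑ gv ∈ G.filter (fun gv => ¬ 0 < gv.2), d gv * x gv.1 := by
    refine Finset.sum_nonneg fun gv hgv => ?_
    obtain ⟨h1, _⟩ := Finset.mem_filter.mp hgv
    have hrec : gv.1 ∈ recPoly S := by
      rw [aux_mem_recPoly hrep ⟨p, hp⟩]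
      intro i
      have h3 := (hGen gv h1).2 i
      rw [hrest0 gv hgv, zero_mul] at h3
      exact h3
    exact mul_nonneg (hd gv) (hx gv.1 hrec)
  have hmain : ∑ gv ∈ G₁, (d gv * gv.2) * x w ≤ ∑ gv ∈ G₁, d gv * x gv.1 := by
    refine Finset.sum_le_sum fun gv hgv => ?_
    have hpos : 0 < gv.2 := (Finset.mem_filter.mp hgv).2
    have hmin2 : x w ≤ x (gv.2⁻¹ • gv.1) := hgmmin gv hgv
    have hexp : x gv.1 = gv.2 * x (gv.2⁻¹ • gv.1) := by
      rw [map_smul, smul_eq_mul, ← mul_assoc, mul_inv_cancel₀ (ne_of_gt hpos), one_mul]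
    rw [hexp]
    calc (d gv * gv.2) * x w ≤ (d gv * gv.2) * x (gv.2⁻¹ • gv.1) :=
          mul_le_mul_of_nonneg_left hmin2 (mul_nonneg (hd gv) hpos.le)
      _ = d gv * (gv.2 * x (gv.2⁻¹ • gv.1)) := by ring
  have hfinal : ∑ gv ∈ G₁, (d gv * gv.2) * x w = x w := by
    rw [← Finset.sum_mul, hG₁sum, one_mul]
  rw [hvx, ← hsplitx]
  rw [hfinal] at hmain
  have : ∑ gv ∈ G.filter (fun gv => 0 < gv.2), d gv * x gv.1
      = ∑ gv ∈ G₁, d gv * x gv.1 := by rw [hG₁def]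
  linarith [hmain, hrestnn, this ▸ hmain]

lemma aux_rec_face [FiniteDimensional ℝ E] {ι : Type*} [Fintype ι]
    {f : ι → E →ₗ[ℝ] ℝ} {b : ι → ℝ} {Λ : Set E}
    (hrep : Λ = {z : E | ∀ i, f i z ≤ b i}) (hne : Λ.Nonempty) {x : E →ₗ[ℝ] ℝ}
    (hfne : (faceSet (recPoly Λ) x).Nonempty) :
    (faceSet Λ x).Nonempty ∧ faceSet (recPoly Λ) x = recPoly (faceSet Λ x) := by
  have hrecrep : recPoly Λ = {z : E | ∀ i, f i z ≤ 0} := aux_recPoly_rep hrep hne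
  obtain ⟨hnn, hface⟩ := aux_cone_min hrecrep hfne
  have hΛmin : (faceSet Λ x).Nonempty := aux_exists_min hrep hne hnn
  refine ⟨hΛmin, ?_⟩
  rw [hface, aux_rec_faceSet hrep hΛmin]

end AuxFaces

section AuxComplex

variable {E : Type*} [NormedAddCommGroup E] [NormedSpace ℝ E]

/-- A ray from `z` in direction `u` eventually stays in `ρ`. -/
def auxTail (ρ : Set E) (z u : E) : Prop := ∃ s₀ : ℝ, ∀ s, s₀ ≤ s → z + s • u ∈ ρ

lemma aux_poly_convex {S : Set E} (hS : IsPolyhedron S) : Convex ℝ S := by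
  obtain ⟨m, f, b, rfl⟩ := hS
  exact aux_convex f b

lemma aux_tail_cell {Q : Set (Set E)} (hQ : IsPolyComplex Q)
    (hcomp : polySupport Q = Set.univ) (z u : E) :
    ∃ ρ ∈ Q, auxTail ρ z u := by
  classical
  have hbddfalse : ¬ ∀ ρ ∈ Q, BddAbove {s : ℝ | 0 ≤ s ∧ z + s • u ∈ ρ} := by
    intro hbdd
    have hcover : Set.Ici (0:ℝ) ⊆ ⋃ ρ ∈ Q, {s : ℝ | 0 ≤ s ∧ z + s • u ∈ ρ} := by
      intro s hs
      have hz : z + s • u ∈ polySupport Q := by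
        rw [hcomp]
        exact Set.mem_univ _
      obtain ⟨ρ, hρ, hmem⟩ := by
        simpa only [polySupport, Set.mem_iUnion, exists_prop] using hz
      exact Set.mem_biUnion hρ ⟨hs, hmem⟩
    have hbU : BddAbove (⋃ ρ ∈ Q, {s : ℝ | 0 ≤ s ∧ z + s • u ∈ ρ}) :=
      (Set.Finite.bddAbove_biUnion hQ.2.1).mpr hbdd
    obtain ⟨M, hM⟩ := hbU.mono hcover
    have h1 : max 0 (M + 1) ≤ M := hM (Set.mem_Ici.mpr (le_max_left 0 (M + 1)))
    have h2 : M + 1 ≤ max 0 (M + 1) := le_max_right _ _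
    linarith
  push_neg at hbddfalse
  obtain ⟨ρ, hρ, hnb⟩ := hbddfalse
  refine ⟨ρ, hρ, ?_⟩
  have hne : {s : ℝ | 0 ≤ s ∧ z + s • u ∈ ρ}.Nonempty := by
    by_contra hne
    rw [Set.not_nonempty_iff_eq_empty] at hne
    exact hnb (hne ▸ bddAbove_empty)
  obtain ⟨s₁, hs₁⟩ := hne
  refine ⟨s₁, fun s hs => ?_⟩
  obtain ⟨s₂, hs₂, hss₂⟩ : ∃ s₂ ∈ {s : ℝ | 0 ≤ s ∧ z + s • u ∈ ρ}, s ≤ s₂ := by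
    by_contra hnot
    push_neg at hnot
    exact hnb ⟨s, fun t ht => le_of_lt (hnot t ht)⟩
  have hconv : Convex ℝ ((fun lam : ℝ => z + lam • u) ⁻¹' ρ) := by
    have h1 := (aux_poly_convex ((hQ.2.2.1 ρ hρ).1)).affine_preimage
      (AffineMap.lineMap z (z + u))
    have h2 : ∀ lam : ℝ, (AffineMap.lineMap z (z + u)) lam = z + lam • u := by
      intro lam
      rw [AffineMap.lineMap_apply]
      simp [vsub_eq_sub]
      module
    have h3 : (fun lam : ℝ => z + lam • u) = ⇑(AffineMap.lineMap z (z + u)) :=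
      funext fun lam => (h2 lam).symm
    rw [h3]
    exact h1
  have hOC := hconv.ordConnected
  have := hOC.out (show s₁ ∈ _ from hs₁.2) (show s₂ ∈ _ from hs₂.2) ⟨hs, hss₂⟩
  exact this

lemma aux_I_closed {m : ℕ} {f : Fin m → E →ₗ[ℝ] ℝ} {b : Fin m → ℝ} {ρ : Set E}
    (hrep : ρ = {x : E | ∀ i, f i x ≤ b i}) (z w u : E) :
    IsClosed {lam : ℝ | auxTail ρ (z + lam • w) u} := by
  classical
  by_cases hall : ∀ i, f i u ≤ 0
  · have hchar : {lam : ℝ | auxTail ρ (z + lam • w) u}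
        = ⋂ i ∈ {i : Fin m | f i u = 0}, {lam : ℝ | f i z + lam * f i w ≤ b i} := by
      ext lam
      simp only [Set.mem_iInter, Set.mem_setOf_eq]
      constructor
      · rintro ⟨s₀, hs₀⟩ i hi
        have h1 := hs₀ (max s₀ 0) (le_max_left _ _)
        rw [hrep] at h1
        have h2 := h1 i
        rw [map_add, map_add, map_smul, map_smul, smul_eq_mul, smul_eq_mul, hi, mul_zero,
          add_zero] at h2
        exact h2
      · intro hlam
        refine ⟨∑ i, max (0:ℝ) ((f i z + lam * f i w - b i) / (-(f i u))), fun s hs => ?_⟩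
        rw [hrep]
        intro i
        show f i (z + lam • w + s • u) ≤ b i
        rw [map_add, map_add, map_smul, map_smul, smul_eq_mul, smul_eq_mul]
        rcases lt_or_eq_of_le (hall i) with hlt | heq
        · have hterm : max (0:ℝ) ((f i z + lam * f i w - b i) / (-(f i u)))
              ≤ ∑ i', max (0:ℝ) ((f i' z + lam * f i' w - b i') / (-(f i' u))) :=
            Finset.single_le_sum
              (f := fun i' => max (0:ℝ) ((f i' z + lam * f i' w - b i') / (-(f i' u))))
              (fun i' _ => le_max_left _ _) (Finset.mem_univ i)
          have hs' : (f i z + lam * f i w - b i) / (-(f i u)) ≤ s :=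
            le_trans (le_trans (le_max_right _ _) hterm) hs
          rw [div_le_iff₀ (by linarith : (0:ℝ) < -(f i u))] at hs'
          nlinarith
        · rw [heq, mul_zero, add_zero]
          exact hlam i heq
    rw [hchar]
    exact isClosed_biInter fun i _ =>
      isClosed_le (by fun_prop) continuous_const
  · push_neg at hall
    obtain ⟨i, hi⟩ := hall
    have hempty : {lam : ℝ | auxTail ρ (z + lam • w) u} = ∅ := by
      rw [Set.eq_empty_iff_forall_notMem]
      rintro lam ⟨s₀, hs₀⟩
      have := aux_tail_rec hrep hs₀ i
      linarith
    rw [hempty]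
    exact isClosed_empty

lemma aux_wedge_step {Q : Set (Set E)} (hQ : IsPolyComplex Q) {ρ ρ' : Set E}
    (hρ : ρ ∈ Q) (hρ' : ρ' ∈ Q) {z u₀ y : E} {ε : ℝ} (hε : 0 < ε)
    (ht : auxTail ρ z u₀) (ht' : auxTail ρ' z u₀)
    (hwedge : ∀ β : ℝ, -ε ≤ β → u₀ + β • y ∈ recPoly ρ) :
    ∀ β : ℝ, -ε ≤ β → u₀ + β • y ∈ recPoly ρ' := by
  obtain ⟨s₀, hs₀⟩ := ht
  obtain ⟨s₀', hs₀'⟩ := ht'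
  set z' := z + (max s₀ s₀') • u₀ with hz'
  have hz'mem : ∀ s : ℝ, 0 ≤ s → z' + s • u₀ ∈ ρ ∩ ρ' := by
    intro s hs
    have heq : z' + s • u₀ = z + (max s₀ s₀' + s) • u₀ := by
      rw [hz']
      module
    rw [heq]
    exact ⟨hs₀ _ (by linarith [le_max_left s₀ s₀']),
      hs₀' _ (by linarith [le_max_right s₀ s₀'])⟩
  have hz'0 : z' ∈ ρ ∩ ρ' := by
    have := hz'mem 0 le_rfl
    simpa using this
  have hne : (ρ ∩ ρ').Nonempty := ⟨z', hz'0⟩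
  obtain ⟨hface, _⟩ := hQ.2.2.2.2 ρ hρ ρ' hρ' hne
  obtain ⟨hFne, x, hFx⟩ := hface
  have hz'F : z' ∈ faceSet ρ x := by
    rw [← hFx]
    exact hz'0
  have hz'u₀F : z' + u₀ ∈ faceSet ρ x := by
    rw [← hFx]
    have := hz'mem 1 (by norm_num)
    simpa using this
  have hxu₀ : x u₀ = 0 := by
    have h1 := hz'F.2 _ hz'u₀F.1
    have h2 := hz'u₀F.2 _ hz'F.1
    have h3 : x (z' + u₀) = x z' + x u₀ := map_add x z' u₀
    linarith
  have hxnn : ∀ v ∈ recPoly ρ, 0 ≤ x v := aux_rec_nonneg hz'F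
  have hxy : x y = 0 := by
    have h1 := hxnn _ (hwedge 1 (by linarith))
    have h2 := hxnn _ (hwedge (-ε) le_rfl)
    rw [map_add, map_smul, hxu₀, smul_eq_mul] at h1 h2
    nlinarith
  intro β hβ
  have hw : u₀ + β • y ∈ recPoly ρ := hwedge β hβ
  have hxw : x (u₀ + β • y) = 0 := by
    rw [map_add, map_smul, hxu₀, smul_eq_mul, hxy]
    ring
  have hchar := aux_faceSet_char hz'F
  have hrecint : u₀ + β • y ∈ recPoly (ρ ∩ ρ') := by
    intro v hv
    have hv' : v ∈ faceSet ρ x := by rw [← hFx]; exact hv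
    have hvval : x v = x z' := by
      rw [hchar] at hv'
      exact hv'.2
    have hmem : v + (u₀ + β • y) ∈ faceSet ρ x := by
      rw [hchar]
      exact ⟨hw v hv'.1, by rw [map_add, hxw, add_zero, hvval]⟩
    rw [hFx]
    exact hmem
  exact aux_recPoly_mono (hQ.2.2.1 ρ' hρ').1 Set.inter_subset_right hne hrecint

lemma aux_chain_wedge {Q : Set (Set E)} (hQ : IsPolyComplex Q)
    (hcomp : polySupport Q = Set.univ)
    {σ τ : Set E} (hσ : σ ∈ Q) (hτ : τ ∈ Q) {p q u₀ y : E} (hp : p ∈ σ) (hq : q ∈ τ)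
    {ε : ℝ} (hε : 0 < ε) (hu₀τ : u₀ ∈ recPoly τ)
    (hwσ : ∀ β : ℝ, -ε ≤ β → u₀ + β • y ∈ recPoly σ) :
    ∀ β : ℝ, -ε ≤ β → u₀ + β • y ∈ recPoly τ := by
  classical
  set B : Set ℝ := ⋃ ρ ∈ {ρ ∈ Q | ∀ β : ℝ, -ε ≤ β → u₀ + β • y ∈ recPoly ρ},
      {lam : ℝ | auxTail ρ (q + lam • (p - q)) u₀} with hB
  set B' : Set ℝ := ⋃ ρ ∈ {ρ ∈ Q | ¬ ∀ β : ℝ, -ε ≤ β → u₀ + β • y ∈ recPoly ρ},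
      {lam : ℝ | auxTail ρ (q + lam • (p - q)) u₀} with hB'
  have hIclosed : ∀ ρ ∈ Q, IsClosed {lam : ℝ | auxTail ρ (q + lam • (p - q)) u₀} := by
    intro ρ hρ
    obtain ⟨m, f, b, hrep⟩ := (hQ.2.2.1 ρ hρ).1
    exact aux_I_closed hrep q (p - q) u₀
  have hBclosed : IsClosed B :=
    Set.Finite.isClosed_biUnion (hQ.2.1.subset (Set.sep_subset _ _))
      (fun ρ hρ => hIclosed ρ hρ.1)
  have hB'closed : IsClosed B' :=
    Set.Finite.isClosed_biUnion (hQ.2.1.subset (Set.sep_subset _ _))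
      (fun ρ hρ => hIclosed ρ hρ.1)
  have hcov : Set.Icc (0:ℝ) 1 ⊆ B ∪ B' := by
    intro lam _
    obtain ⟨ρ, hρ, htail⟩ := aux_tail_cell hQ hcomp (q + lam • (p - q)) u₀
    by_cases hg : ∀ β : ℝ, -ε ≤ β → u₀ + β • y ∈ recPoly ρ
    · exact Or.inl (Set.mem_biUnion ⟨hρ, hg⟩ htail)
    · exact Or.inr (Set.mem_biUnion ⟨hρ, hg⟩ htail)
  have hdisj : Set.Icc (0:ℝ) 1 ∩ (B ∩ B') = ∅ := by
    rw [Set.eq_empty_iff_forall_notMem]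
    rintro lam ⟨_, hlB, hlB'⟩
    rw [hB] at hlB
    rw [hB'] at hlB'
    simp only [Set.mem_iUnion, exists_prop] at hlB hlB'
    obtain ⟨ρ, ⟨hρQ, hρg⟩, hρt⟩ := hlB
    obtain ⟨ρ', ⟨hρ'Q, hρ'g⟩, hρ't⟩ := hlB'
    exact hρ'g (aux_wedge_step hQ hρQ hρ'Q hε hρt hρ't hρg)
  have h1σI : (1:ℝ) ∈ {lam : ℝ | auxTail σ (q + lam • (p - q)) u₀} := by
    obtain ⟨m, f, b, hrep⟩ := (hQ.2.2.1 σ hσ).1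
    have hu₀σ : u₀ ∈ recPoly σ := by
      have := hwσ 0 (by linarith)
      simpa using this
    refine ⟨0, fun s hs => ?_⟩
    have hbase : q + (1:ℝ) • (p - q) = p := by module
    rw [hbase]
    exact aux_ray_mem hrep hp ((aux_mem_recPoly hrep ⟨p, hp⟩).mp hu₀σ) hs
  have h1B : (1:ℝ) ∈ Set.Icc (0:ℝ) 1 ∩ B := by
    refine ⟨⟨by norm_num, le_rfl⟩, ?_⟩
    rw [hB]
    exact Set.mem_biUnion ⟨hσ, hwσ⟩ h1σI
  have hB'empty : ¬ (Set.Icc (0:ℝ) 1 ∩ B').Nonempty := by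
    intro hne
    have hpc := isPreconnected_Icc (a := (0:ℝ)) (b := 1)
    rw [isPreconnected_closed_iff] at hpc
    obtain ⟨lam, hlam⟩ := hpc B B' hBclosed hB'closed hcov ⟨1, h1B⟩ hne
    rw [← Set.inter_assoc] at hlam
    have hx : lam ∈ Set.Icc (0:ℝ) 1 ∩ (B ∩ B') := ⟨hlam.1.1, hlam.1.2, hlam.2⟩
    rw [hdisj] at hx
    exact hx
  have h0B : (0:ℝ) ∈ B := by
    have h0m : (0:ℝ) ∈ Set.Icc (0:ℝ) 1 := ⟨le_rfl, by norm_num⟩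
    rcases hcov h0m with h | h
    · exact h
    · exact absurd ⟨h0m, h⟩ (fun hc => hB'empty ⟨0, hc⟩)
  have h0τI : (0:ℝ) ∈ {lam : ℝ | auxTail τ (q + lam • (p - q)) u₀} := by
    obtain ⟨m, f, b, hrep⟩ := (hQ.2.2.1 τ hτ).1
    refine ⟨0, fun s hs => ?_⟩
    have hbase : q + (0:ℝ) • (p - q) = q := by module
    rw [hbase]
    exact aux_ray_mem hrep hq ((aux_mem_recPoly hrep ⟨q, hq⟩).mp hu₀τ) hs
  rw [hB] at h0B
  simp only [Set.mem_iUnion, exists_prop] at h0B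
  obtain ⟨ρ₀, ⟨hρ₀Q, hρ₀g⟩, hρ₀t⟩ := h0B
  exact aux_wedge_step hQ hρ₀Q hτ hε hρ₀t h0τI hρ₀g

end AuxComplex

section AuxX

variable {E : Type*} [NormedAddCommGroup E] [NormedSpace ℝ E]

/-- Key theorem: in a complete complex, recession cones of two cells intersect in a face. -/
theorem aux_rec_inter_face [FiniteDimensional ℝ E] {Q : Set (Set E)}
    (hQ : IsPolyComplex Q) (hcomp : polySupport Q = Set.univ)
    {σ τ : Set E} (hσ : σ ∈ Q) (hτ : τ ∈ Q) :
    ∃ x : E →ₗ[ℝ] ℝ, (∀ u ∈ recPoly σ, 0 ≤ x u) ∧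
      recPoly σ ∩ recPoly τ = {u ∈ recPoly σ | x u = 0} := by
  classical
  obtain ⟨mσ, g, bσ, hgrep⟩ := (hQ.2.2.1 σ hσ).1
  obtain ⟨mτ, h, bτ, hhrep⟩ := (hQ.2.2.1 τ hτ).1
  obtain ⟨p, hp⟩ := (hQ.2.2.1 σ hσ).2
  obtain ⟨q, hq⟩ := (hQ.2.2.1 τ hτ).2
  have hCrep : recPoly σ = {z : E | ∀ i, g i z ≤ 0} := aux_recPoly_rep hgrep ⟨p, hp⟩
  have hDrep : recPoly τ = {z : E | ∀ j, h j z ≤ 0} := aux_recPoly_rep hhrep ⟨q, hq⟩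
  set k : (Fin mσ ⊕ Fin mτ) → E →ₗ[ℝ] ℝ := Sum.elim g h with hk
  have hCD : recPoly σ ∩ recPoly τ = {z : E | ∀ l, k l z ≤ 0} := by
    ext z
    rw [hCrep, hDrep]
    constructor
    · rintro ⟨h1, h2⟩ l
      rcases l with i | j
      · exact h1 i
      · exact h2 j
    · intro h1
      exact ⟨fun i => h1 (Sum.inl i), fun j => h1 (Sum.inr j)⟩
  set Jbad := Finset.univ.filter
    (fun l : Fin mσ ⊕ Fin mτ => ¬ ∀ z ∈ recPoly σ ∩ recPoly τ, k l z = 0) with hJbad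
  have hwit : ∀ l ∈ Jbad, ∃ z, z ∈ recPoly σ ∩ recPoly τ ∧ k l z < 0 := by
    intro l hl
    have hl' := (Finset.mem_filter.mp hl).2
    push_neg at hl'
    obtain ⟨z, hz, hlz⟩ := hl'
    have hle : k l z ≤ 0 := by
      rw [hCD] at hz
      exact hz l
    exact ⟨z, hz, lt_of_le_of_ne hle hlz⟩
  choose wz hwzmem hwzlt using fun (l : {l // l ∈ Jbad}) => hwit l.1 l.2
  set u₀ : E := ∑ l ∈ Jbad.attach, wz l with hu₀
  have hu₀mem : u₀ ∈ recPoly σ ∩ recPoly τ := by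
    rw [hCD]
    intro l
    rw [hu₀, map_sum]
    refine Finset.sum_nonpos fun l' _ => ?_
    have h1 := hwzmem l'
    rw [hCD] at h1
    exact h1 l
  have hu₀bad : ∀ l (hl : l ∈ Jbad), k l u₀ < 0 := by
    intro l hl
    rw [hu₀, map_sum]
    have hsplit : ∑ l' ∈ Jbad.attach, k l (wz l')
        = k l (wz ⟨l, hl⟩) + ∑ l' ∈ Jbad.attach.erase ⟨l, hl⟩, k l (wz l') :=
      (Finset.add_sum_erase _ _ (Finset.mem_attach _ ⟨l, hl⟩)).symm
    rw [hsplit]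
    have h1 := hwzlt ⟨l, hl⟩
    have h2 : ∑ l' ∈ Jbad.attach.erase ⟨l, hl⟩, k l (wz l') ≤ 0 :=
      Finset.sum_nonpos fun l' _ => by
        have h3 := hwzmem l'
        rw [hCD] at h3
        exact h3 l
    linarith
  have hu₀good : ∀ l, l ∉ Jbad → ∀ z ∈ recPoly σ ∩ recPoly τ, k l z = 0 := by
    intro l hl
    by_contra h'
    exact hl (Finset.mem_filter.mpr ⟨Finset.mem_univ l, h'⟩)
  set I₀ := Finset.univ.filter (fun i : Fin mσ => g i u₀ = 0) with hI₀
  set x₀ : E →ₗ[ℝ] ℝ := ∑ i ∈ I₀, -(g i) with hx₀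
  have hx₀app : ∀ z, x₀ z = ∑ i ∈ I₀, -(g i z) := by
    intro z
    rw [hx₀]
    simp [LinearMap.sum_apply]
  have hx₀nn : ∀ u ∈ recPoly σ, 0 ≤ x₀ u := by
    intro u hu
    rw [hx₀app]
    refine Finset.sum_nonneg fun i _ => ?_
    have h1 : g i u ≤ 0 := by
      rw [hCrep] at hu
      exact hu i
    linarith
  refine ⟨x₀, hx₀nn, ?_⟩
  apply Set.Subset.antisymm
  · intro z hz
    refine ⟨hz.1, ?_⟩
    rw [hx₀app]
    refine Finset.sum_eq_zero fun i hi => ?_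
    have higi : g i u₀ = 0 := (Finset.mem_filter.mp hi).2
    have hnotbad : Sum.inl i ∉ Jbad := by
      intro hbad
      have h1 := hu₀bad _ hbad
      rw [hk] at h1
      simp only [Sum.elim_inl] at h1
      rw [higi] at h1
      exact lt_irrefl 0 h1
    have h2 := hu₀good _ hnotbad z hz
    rw [hk] at h2
    simp only [Sum.elim_inl] at h2
    rw [h2, neg_zero]
  · rintro y ⟨hyC, hyx⟩
    refine ⟨hyC, ?_⟩
    have hgy0 : ∀ i ∈ I₀, g i y = 0 := by
      intro i hi
      have hterm : ∀ i' ∈ I₀, 0 ≤ -(g i' y) := by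
        intro i' _
        have h1 : g i' y ≤ 0 := by
          rw [hCrep] at hyC
          exact hyC i'
        linarith
      have hxy0 : ∑ i' ∈ I₀, -(g i' y) = 0 := by
        rw [← hx₀app, hyx]
      have h1 := (Finset.sum_eq_zero_iff_of_nonneg hterm).mp hxy0 i hi
      linarith
    set Bad := Finset.univ.filter (fun i : Fin mσ => g i y < 0 ∧ i ∉ I₀) with hBadDef
    have hgu₀le : ∀ i : Fin mσ, g i u₀ ≤ 0 := by
      intro i
      have := hu₀mem.1
      rw [hCrep] at this
      exact this i
    have hgu₀lt : ∀ i : Fin mσ, i ∉ I₀ → g i u₀ < 0 := by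
      intro i hi
      refine lt_of_le_of_ne (hgu₀le i) fun h0 => ?_
      exact hi (Finset.mem_filter.mpr ⟨Finset.mem_univ i, h0⟩)
    set ε : ℝ := if hB : Bad.Nonempty then
        min 1 (Bad.inf' hB (fun i => g i u₀ / g i y)) else 1 with hεdef
    have hεpos : 0 < ε := by
      rw [hεdef]
      split_ifs with hB
      · refine lt_min one_pos ?_
        rw [Finset.lt_inf'_iff]
        intro i hi
        obtain ⟨h1, h2⟩ := (Finset.mem_filter.mp hi).2
        exact div_pos_of_neg_of_neg (hgu₀lt i h2) h1
      · exact one_pos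
    have hεle : ∀ i ∈ Bad, ε ≤ g i u₀ / g i y := by
      intro i hi
      rw [hεdef, dif_pos ⟨i, hi⟩]
      exact le_trans (min_le_right _ _) (Finset.inf'_le _ hi)
    have hwedgeσ : ∀ β : ℝ, -ε ≤ β → u₀ + β • y ∈ recPoly σ := by
      intro β hβ
      rw [hCrep]
      intro i
      rw [map_add, map_smul, smul_eq_mul]
      by_cases hiI : i ∈ I₀
      · rw [(Finset.mem_filter.mp hiI).2, hgy0 i hiI, mul_zero, add_zero]
      · have hgiu := hgu₀lt i hiI
        have hgiy : g i y ≤ 0 := by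
          rw [hCrep] at hyC
          exact hyC i
        rcases lt_or_eq_of_le hgiy with hlt | heq0
        · have hiBad : i ∈ Bad := Finset.mem_filter.mpr ⟨Finset.mem_univ i, hlt, hiI⟩
          have h5 := mul_le_mul_of_nonpos_right (hεle i hiBad) (le_of_lt hlt)
          rw [div_mul_cancel₀ _ (ne_of_lt hlt)] at h5
          have h6 := mul_le_mul_of_nonpos_right hβ (le_of_lt hlt)
          nlinarith
        · rw [heq0, mul_zero, add_zero]
          exact le_of_lt hgiu
    have hwedgeτ := aux_chain_wedge hQ hcomp hσ hτ hp hq hεpos hu₀mem.2 hwedgeσ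
    rw [hDrep]
    intro j
    refine aux_arch (A := h j u₀) (B := 0) (s₀ := 0) fun s hs => ?_
    have h1 := hwedgeτ s (by linarith)
    rw [hDrep] at h1
    have h2 := h1 j
    rw [map_add, map_smul, smul_eq_mul] at h2
    exact h2
end AuxX

section AuxRecComplex

variable {E : Type*} [NormedAddCommGroup E] [NormedSpace ℝ E]

theorem aux_recComplex [FiniteDimensional ℝ E] {P Q : Set (Set E)}
    (hP : IsPolyComplex P) (hQ : IsPolyComplex Q) (hcomp : polySupport Q = Set.univ)
    (hPQ : P ⊆ Q) : IsConicPolyComplex (recComplex P) := by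
  classical
  have hmem : ∀ Λ ∈ P, IsPolyhedron Λ ∧ Λ.Nonempty := hP.2.2.1
  constructor
  · refine ⟨?_, ?_, ?_, ?_, ?_⟩
    · obtain ⟨Λ, hΛ⟩ := hP.1
      exact ⟨recPoly Λ, Λ, hΛ, rfl⟩
    · have himg : recComplex P = recPoly '' P := by
        ext C
        constructor
        · rintro ⟨Λ, hΛ, rfl⟩
          exact ⟨Λ, hΛ, rfl⟩
        · rintro ⟨Λ, hΛ, rfl⟩
          exact ⟨Λ, hΛ, rfl⟩
      rw [himg]
      exact hP.2.1.image _
    · rintro S ⟨Λ, hΛ, rfl⟩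
      obtain ⟨⟨m, f, b, hrep⟩, hne⟩ := hmem Λ hΛ
      constructor
      · rw [aux_recPoly_rep hrep hne]
        exact aux_isPolyhedron_of_rep f (fun _ => 0)
      · exact ⟨0, aux_recPoly_zero Λ⟩
    · rintro S ⟨Λ, hΛ, rfl⟩ F hF
      obtain ⟨hFne, x, hFx⟩ := hF
      obtain ⟨⟨m, f, b, hrep⟩, hne⟩ := hmem Λ hΛ
      have h1 := aux_rec_face hrep hne (hFx ▸ hFne)
      exact ⟨faceSet Λ x, hP.2.2.2.1 Λ hΛ _ ⟨h1.1, x, rfl⟩, by rw [hFx, h1.2]⟩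
    · rintro S ⟨Λ, hΛ, rfl⟩ T ⟨Λ', hΛ', rfl⟩ _
      constructor
      · obtain ⟨x, hxnn, hxeq⟩ := aux_rec_inter_face hQ hcomp (hPQ hΛ) (hPQ hΛ')
        obtain ⟨⟨m, f, b, hrep⟩, hneΛ⟩ := hmem Λ hΛ
        have hrrep := aux_recPoly_rep hrep hneΛ
        obtain ⟨heq, hface⟩ := aux_cone_face' hrrep hxnn
        rw [hxeq]
        exact hface
      · obtain ⟨x, hxnn, hxeq⟩ := aux_rec_inter_face hQ hcomp (hPQ hΛ') (hPQ hΛ)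
        obtain ⟨⟨m, f, b, hrep⟩, hneΛ'⟩ := hmem Λ' hΛ'
        have hrrep := aux_recPoly_rep hrep hneΛ'
        obtain ⟨heq, hface⟩ := aux_cone_face' hrrep hxnn
        rw [Set.inter_comm, hxeq]
        exact hface
  · rintro S ⟨Λ, hΛ, rfl⟩
    obtain ⟨⟨m, f, b, hrep⟩, hne⟩ := hmem Λ hΛ
    rw [aux_recPoly_rep hrep hne]
    exact aux_minkowski f

end AuxRecComplex

section AuxConeChar

variable {E : Type*} [NormedAddCommGroup E] [NormedSpace ℝ E]

lemma aux_openCone_subset_char {ι : Type*} [Fintype ι] {f : ι → E →ₗ[ℝ] ℝ} {b : ι → ℝ}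
    {Λ : Set E} (hrep : Λ = {x : E | ∀ i, f i x ≤ b i}) :
    openCone Λ ⊆ {z : E × ℝ | 0 ≤ z.2 ∧ ∀ i, f i z.1 ≤ z.2 * b i} := by
  rintro z ⟨u, hu, t, ht, rfl⟩
  constructor
  · simpa using ht.le
  · intro i
    have h1 : f i u ≤ b i := by
      rw [hrep] at hu
      exact hu i
    have h2 : (t • (u, (1:ℝ))).1 = t • u := rfl
    have h3 : (t • (u, (1:ℝ))).2 = t := by simp
    rw [h2, h3, map_smul, smul_eq_mul]
    exact mul_le_mul_of_nonneg_left h1 ht.le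

lemma aux_coneOver_char [FiniteDimensional ℝ E] {ι : Type*} [Fintype ι]
    {f : ι → E →ₗ[ℝ] ℝ} {b : ι → ℝ} {Λ : Set E}
    (hrep : Λ = {x : E | ∀ i, f i x ≤ b i}) (hne : Λ.Nonempty) :
    coneOver Λ = {z : E × ℝ | 0 ≤ z.2 ∧ ∀ i, f i z.1 ≤ z.2 * b i} := by
  obtain ⟨p, hp⟩ := hne
  apply Set.Subset.antisymm
  · refine closure_minimal (aux_openCone_subset_char hrep) ?_
    have h1 : {z : E × ℝ | 0 ≤ z.2 ∧ ∀ i, f i z.1 ≤ z.2 * b i}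
        = {z : E × ℝ | 0 ≤ z.2} ∩ ⋂ i, {z : E × ℝ | f i z.1 ≤ z.2 * b i} := by
      ext z
      simp only [Set.mem_inter_iff, Set.mem_iInter, Set.mem_setOf_eq]
    rw [h1]
    refine IsClosed.inter (isClosed_le continuous_const continuous_snd)
      (isClosed_iInter fun i => ?_)
    refine isClosed_le ?_ (continuous_snd.mul continuous_const)
    exact ((f i).comp (LinearMap.fst ℝ E ℝ)).continuous_of_finiteDimensional
  · rintro ⟨w, t⟩ ⟨ht, hw⟩
    rcases lt_or_eq_of_le ht with htpos | ht0
    · apply subset_closure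
      refine ⟨t⁻¹ • w, ?_, t, htpos, ?_⟩
      · rw [hrep]
        intro i
        rw [map_smul, smul_eq_mul]
        have h1 := mul_le_mul_of_nonneg_left (hw i) (le_of_lt (inv_pos.mpr htpos))
        rw [← mul_assoc, inv_mul_cancel₀ (ne_of_gt htpos), one_mul] at h1
        exact h1
      · have : t • (t⁻¹ • w) = w := by
          rw [smul_smul, mul_inv_cancel₀ (ne_of_gt htpos), one_smul]
        rw [Prod.smul_mk, this, smul_eq_mul, mul_one]
    · -- t = 0 : w is a recession direction
      have hwrec : ∀ i, f i w ≤ 0 := by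
        intro i
        have h1 := hw i
        have h2 : ((w, t) : E × ℝ).2 = 0 := ht0.symm
        rw [h2, zero_mul] at h1
        exact h1
      have hmem : ∀ k : ℕ, (((k:ℝ) + 1)⁻¹ • p + w, ((k:ℝ) + 1)⁻¹) ∈ openCone Λ := by
        intro k
        have hkpos : (0:ℝ) < ((k:ℝ) + 1)⁻¹ := by positivity
        refine ⟨p + ((k:ℝ) + 1) • w, ?_, ((k:ℝ) + 1)⁻¹, hkpos, ?_⟩
        · exact aux_ray_mem hrep hp hwrec (by positivity)
        · rw [Prod.smul_mk, smul_eq_mul, mul_one, smul_add, smul_smul,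
            inv_mul_cancel₀ (by positivity : ((k:ℝ) + 1) ≠ 0), one_smul]
      have htend : Filter.Tendsto (fun k : ℕ => ((((k:ℝ) + 1)⁻¹ • p + w, ((k:ℝ) + 1)⁻¹) : E × ℝ))
          Filter.atTop (nhds (w, 0)) := by
        have hinv : Filter.Tendsto (fun k : ℕ => ((k:ℝ) + 1)⁻¹) Filter.atTop (nhds 0) := by
          have := tendsto_one_div_add_atTop_nhds_zero_nat (𝕜 := ℝ)
          simpa [one_div] using this
        refine Filter.Tendsto.prodMk_nhds ?_ hinv
        have h2 := hinv.smul_const p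
        have h3 := h2.add (tendsto_const_nhds (x := w))
        simpa using h3
      have heq : ((w, t) : E × ℝ) = (w, 0) := by
        rw [Prod.mk.injEq]
        exact ⟨rfl, ht0.symm⟩
      rw [heq]
      exact mem_closure_of_tendsto htend (Filter.Eventually.of_forall hmem)

lemma aux_coneOver_rep [FiniteDimensional ℝ E] {ι : Type*} [Fintype ι]
    {f : ι → E →ₗ[ℝ] ℝ} {b : ι → ℝ} {Λ : Set E}
    (hrep : Λ = {x : E | ∀ i, f i x ≤ b i}) (hne : Λ.Nonempty) :
    coneOver Λ = {z : E × ℝ | ∀ o : Option ι,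
      (Option.elim o (-(LinearMap.snd ℝ E ℝ))
        (fun i => (f i).comp (LinearMap.fst ℝ E ℝ) - (b i) • (LinearMap.snd ℝ E ℝ))) z ≤ 0} := by
  rw [aux_coneOver_char hrep hne]
  ext z
  simp only [Set.mem_setOf_eq]
  constructor
  · rintro ⟨ht, h⟩ o
    rcases o with _ | i
    · simp only [Option.elim, LinearMap.neg_apply, LinearMap.snd_apply]
      linarith
    · have := h i
      simp only [Option.elim, LinearMap.sub_apply, LinearMap.comp_apply, LinearMap.fst_apply,
        LinearMap.smul_apply, LinearMap.snd_apply, smul_eq_mul]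
      linarith
  · intro h
    constructor
    · have := h none
      simp only [Option.elim, LinearMap.neg_apply, LinearMap.snd_apply] at this
      linarith
    · intro i
      have := h (some i)
      simp only [Option.elim, LinearMap.sub_apply, LinearMap.comp_apply, LinearMap.fst_apply,
        LinearMap.smul_apply, LinearMap.snd_apply, smul_eq_mul] at this
      linarith

lemma aux_rec0_rep {ι : Type*} [Fintype ι]
    {f : ι → E →ₗ[ℝ] ℝ} {b : ι → ℝ} {Λ : Set E}
    (hrep : Λ = {x : E | ∀ i, f i x ≤ b i}) (hne : Λ.Nonempty) :
    recPoly Λ ×ˢ ({0} : Set ℝ) = {z : E × ℝ | ∀ l : ι ⊕ Bool,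
      (Sum.elim (fun i => (f i).comp (LinearMap.fst ℝ E ℝ))
        (fun c => if c then LinearMap.snd ℝ E ℝ else -(LinearMap.snd ℝ E ℝ))) l z ≤ 0} := by
  ext z
  rw [Set.mem_prod, Set.mem_singleton_iff, aux_mem_recPoly hrep hne]
  constructor
  · rintro ⟨h1, h2⟩ l
    rcases l with i | c
    · simpa using h1 i
    · rcases c with _ | _ <;> simp [h2]
  · intro h
    constructor
    · intro i
      simpa using h (Sum.inl i)
    · have h1 := h (Sum.inr true)
      have h2 := h (Sum.inr false)
      simp only [Sum.elim_inr, if_pos, if_neg, LinearMap.neg_apply, LinearMap.snd_apply] at h1 h2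
      simp at h1 h2
      linarith

lemma aux_inter_rep {ι ι' : Type*} [Fintype ι] [Fintype ι']
    {f : ι → E →ₗ[ℝ] ℝ} {b : ι → ℝ} {f' : ι' → E →ₗ[ℝ] ℝ} {b' : ι' → ℝ} {Λ Λ' : Set E}
    (hrep : Λ = {x : E | ∀ i, f i x ≤ b i}) (hrep' : Λ' = {x : E | ∀ i, f' i x ≤ b' i}) :
    Λ ∩ Λ' = {x : E | ∀ l : ι ⊕ ι', (Sum.elim f f') l x ≤ (Sum.elim b b') l} := by
  rw [hrep, hrep']
  ext z
  constructor
  · rintro ⟨h1, h2⟩ l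
    rcases l with i | j
    · exact h1 i
    · exact h2 j
  · intro h
    exact ⟨fun i => h (Sum.inl i), fun j => h (Sum.inr j)⟩

end AuxConeChar

section AuxConeFaces

variable {E : Type*} [NormedAddCommGroup E] [NormedSpace ℝ E]

lemma aux_div_mem {ι : Type*} [Fintype ι] {f : ι → E →ₗ[ℝ] ℝ} {b : ι → ℝ} {Λ : Set E}
    (hrep : Λ = {x : E | ∀ i, f i x ≤ b i}) {z : E × ℝ} (hpos : 0 < z.2)
    (hz : ∀ i, f i z.1 ≤ z.2 * b i) : z.2⁻¹ • z.1 ∈ Λ := by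
  rw [hrep]
  intro i
  rw [map_smul, smul_eq_mul]
  have h1 := mul_le_mul_of_nonneg_left (hz i) (le_of_lt (inv_pos.mpr hpos))
  rw [← mul_assoc, inv_mul_cancel₀ (ne_of_gt hpos), one_mul] at h1
  exact h1

lemma aux_cone_lower [FiniteDimensional ℝ E] {ι : Type*} [Fintype ι]
    {f : ι → E →ₗ[ℝ] ℝ} {b : ι → ℝ} {Λ : Set E}
    (hrep : Λ = {x : E | ∀ i, f i x ≤ b i}) (hne : Λ.Nonempty) {x : E →ₗ[ℝ] ℝ} {m₀ : ℝ}
    (hmin : ∀ v ∈ Λ, m₀ ≤ x v) (hrec : ∀ u ∈ recPoly Λ, 0 ≤ x u) :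
    ∀ z ∈ coneOver Λ, z.2 * m₀ ≤ x z.1 := by
  intro z hz
  rw [aux_coneOver_char hrep hne] at hz
  obtain ⟨ht, h1⟩ := hz
  rcases lt_or_eq_of_le ht with hpos | h0
  · have hv : z.2⁻¹ • z.1 ∈ Λ := aux_div_mem hrep hpos h1
    have h2 := hmin _ hv
    have h3 := mul_le_mul_of_nonneg_left h2 (le_of_lt hpos)
    rw [map_smul, smul_eq_mul, ← mul_assoc, mul_inv_cancel₀ (ne_of_gt hpos), one_mul] at h3
    exact h3
  · have hz1 : z.1 ∈ recPoly Λ := by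
      rw [aux_mem_recPoly hrep hne]
      intro i
      have h2 := h1 i
      rw [← h0, zero_mul] at h2
      exact h2
    have h3 := hrec _ hz1
    rw [← h0, zero_mul]
    exact h3

lemma aux_faceSet_rep {ι : Type*} [Fintype ι] {f : ι → E →ₗ[ℝ] ℝ} {b : ι → ℝ} {Λ : Set E}
    (hrep : Λ = {x : E | ∀ i, f i x ≤ b i}) {x : E →ₗ[ℝ] ℝ} {w₀ : E}
    (hw₀ : w₀ ∈ faceSet Λ x) :
    faceSet Λ x = {v : E | ∀ o : Option ι,
      (Option.elim o x f) v ≤ (Option.elim o (x w₀) b)} := by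
  rw [aux_faceSet_char hw₀]
  ext v
  constructor
  · rintro ⟨hv, hval⟩ o
    rcases o with _ | i
    · exact le_of_eq hval
    · have : v ∈ Λ := hv
      rw [hrep] at this
      exact this i
  · intro h
    have hvΛ : v ∈ Λ := by
      rw [hrep]
      exact fun i => h (some i)
    exact ⟨hvΛ, le_antisymm (h none) (hw₀.2 v hvΛ)⟩

lemma aux_cone_keyset [FiniteDimensional ℝ E] {ι : Type*} [Fintype ι]
    {f : ι → E →ₗ[ℝ] ℝ} {b : ι → ℝ} {Λ : Set E}
    (hrep : Λ = {x : E | ∀ i, f i x ≤ b i}) {x : E →ₗ[ℝ] ℝ} {w₀ : E}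
    (hw₀ : w₀ ∈ faceSet Λ x) :
    {z : E × ℝ | z ∈ coneOver Λ ∧ x z.1 = z.2 * x w₀} = coneOver (faceSet Λ x) := by
  have hne : Λ.Nonempty := ⟨w₀, hw₀.1⟩
  have hlower := aux_cone_lower hrep hne (fun v hv => hw₀.2 v hv) (aux_rec_nonneg hw₀)
  have hfchar := aux_coneOver_char (aux_faceSet_rep hrep hw₀) ⟨w₀, hw₀⟩
  rw [hfchar]
  ext z
  simp only [Set.mem_setOf_eq]
  constructor
  · rintro ⟨hz, hval⟩
    have hz' := hz
    rw [aux_coneOver_char hrep hne] at hz'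
    refine ⟨hz'.1, fun o => ?_⟩
    rcases o with _ | i
    · exact le_of_eq hval
    · exact hz'.2 i
  · rintro ⟨ht, h⟩
    have hzc : z ∈ coneOver Λ := by
      rw [aux_coneOver_char hrep hne]
      exact ⟨ht, fun i => h (some i)⟩
    exact ⟨hzc, le_antisymm (h none) (hlower z hzc)⟩

lemma aux_cone_face_of_face [FiniteDimensional ℝ E] {ι : Type*} [Fintype ι]
    {f : ι → E →ₗ[ℝ] ℝ} {b : ι → ℝ} {Λ : Set E}
    (hrep : Λ = {x : E | ∀ i, f i x ≤ b i}) {x : E →ₗ[ℝ] ℝ} {w₀ : E}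
    (hw₀ : w₀ ∈ faceSet Λ x) :
    IsFaceOf (coneOver (faceSet Λ x)) (coneOver Λ) := by
  have hne : Λ.Nonempty := ⟨w₀, hw₀.1⟩
  set X : (E × ℝ) →ₗ[ℝ] ℝ :=
    x.comp (LinearMap.fst ℝ E ℝ) - (x w₀) • (LinearMap.snd ℝ E ℝ) with hX
  have hXapp : ∀ z : E × ℝ, X z = x z.1 - z.2 * (x w₀) := by
    intro z
    rw [hX]
    simp only [LinearMap.sub_apply, LinearMap.comp_apply, LinearMap.fst_apply,
      LinearMap.smul_apply, LinearMap.snd_apply, smul_eq_mul]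
    ring
  have hlower := aux_cone_lower hrep hne (fun v hv => hw₀.2 v hv) (aux_rec_nonneg hw₀)
  have hXnn : ∀ z ∈ coneOver Λ, 0 ≤ X z := by
    intro z hz
    rw [hXapp]
    have := hlower z hz
    linarith
  obtain ⟨heqX, hface⟩ := aux_cone_face' (aux_coneOver_rep hrep hne) hXnn
  have hkey : {z ∈ coneOver Λ | X z = 0} = coneOver (faceSet Λ x) := by
    rw [← aux_cone_keyset hrep hw₀]
    ext z
    simp only [Set.mem_setOf_eq, hXapp]
    constructor
    · rintro ⟨h1, h2⟩
      exact ⟨h1, by linarith⟩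
    · rintro ⟨h1, h2⟩
      exact ⟨h1, by linarith⟩
  rw [← hkey]
  exact hface

lemma aux_cone_face_of_recface [FiniteDimensional ℝ E] {ι : Type*} [Fintype ι]
    {f : ι → E →ₗ[ℝ] ℝ} {b : ι → ℝ} {Λ : Set E}
    (hrep : Λ = {x : E | ∀ i, f i x ≤ b i}) (hne : Λ.Nonempty) {x : E →ₗ[ℝ] ℝ}
    (hx : ∀ u ∈ recPoly Λ, 0 ≤ x u) :
    IsFaceOf (({u ∈ recPoly Λ | x u = 0}) ×ˢ ({0} : Set ℝ)) (coneOver Λ) := by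
  obtain ⟨w₀, hw₀⟩ := aux_exists_min hrep hne hx
  set X : (E × ℝ) →ₗ[ℝ] ℝ :=
    x.comp (LinearMap.fst ℝ E ℝ) + (1 - x w₀) • (LinearMap.snd ℝ E ℝ) with hX
  have hXapp : ∀ z : E × ℝ, X z = x z.1 + z.2 * (1 - x w₀) := by
    intro z
    rw [hX]
    simp only [LinearMap.add_apply, LinearMap.comp_apply, LinearMap.fst_apply,
      LinearMap.smul_apply, LinearMap.snd_apply, smul_eq_mul]
    ring
  have hlower := aux_cone_lower hrep hne (fun v hv => hw₀.2 v hv) hx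
  have hXnn : ∀ z ∈ coneOver Λ, 0 ≤ X z := by
    intro z hz
    have hz' := hz
    rw [aux_coneOver_char hrep hne] at hz'
    have h1 := hlower z hz
    rw [hXapp]
    nlinarith [hz'.1]
  obtain ⟨heqX, hface⟩ := aux_cone_face' (aux_coneOver_rep hrep hne) hXnn
  have hkey : {z ∈ coneOver Λ | X z = 0}
      = ({u ∈ recPoly Λ | x u = 0}) ×ˢ ({0} : Set ℝ) := by
    ext z
    constructor
    · rintro ⟨hz, hX0⟩
      have hz' := hz
      rw [aux_coneOver_char hrep hne] at hz'
      obtain ⟨ht, h1⟩ := hz'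
      have hz2 : z.2 = 0 := by
        rcases lt_or_eq_of_le ht with hpos | h0
        · exfalso
          have h2 := hlower z hz
          rw [hXapp] at hX0
          nlinarith
        · exact h0.symm
      have hz1 : z.1 ∈ recPoly Λ := by
        rw [aux_mem_recPoly hrep hne]
        intro i
        have h2 := h1 i
        rw [hz2, zero_mul] at h2
        exact h2
      have hx0 : x z.1 = 0 := by
        rw [hXapp, hz2, zero_mul, add_zero] at hX0
        exact hX0
      exact Set.mem_prod.mpr ⟨⟨hz1, hx0⟩, hz2⟩
    · rintro ⟨⟨h1, h2⟩, h0⟩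
      have h0' : z.2 = 0 := h0
      constructor
      · rw [aux_coneOver_char hrep hne]
        refine ⟨le_of_eq h0'.symm, fun i => ?_⟩
        rw [h0', zero_mul]
        exact (aux_mem_recPoly hrep hne).mp h1 i
      · rw [hXapp, h0', zero_mul, add_zero]
        exact h2
  rw [← hkey]
  exact hface

lemma aux_rec0_face_of_recface {ι : Type*} [Fintype ι]
    {f : ι → E →ₗ[ℝ] ℝ} {b : ι → ℝ} {Λ : Set E}
    (hrep : Λ = {x : E | ∀ i, f i x ≤ b i}) (hne : Λ.Nonempty) {x : E →ₗ[ℝ] ℝ}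
    (hx : ∀ u ∈ recPoly Λ, 0 ≤ x u) :
    IsFaceOf (({u ∈ recPoly Λ | x u = 0}) ×ˢ ({0} : Set ℝ))
      (recPoly Λ ×ˢ ({0} : Set ℝ)) := by
  set X : (E × ℝ) →ₗ[ℝ] ℝ := x.comp (LinearMap.fst ℝ E ℝ) with hX
  have hXapp : ∀ z : E × ℝ, X z = x z.1 := fun z => rfl
  have hXnn : ∀ z ∈ recPoly Λ ×ˢ ({0} : Set ℝ), 0 ≤ X z := by
    rintro z ⟨h1, _⟩
    exact hx z.1 h1
  obtain ⟨heqX, hface⟩ := aux_cone_face' (aux_rec0_rep hrep hne) hXnn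
  have hkey : {z ∈ recPoly Λ ×ˢ ({0} : Set ℝ) | X z = 0}
      = ({u ∈ recPoly Λ | x u = 0}) ×ˢ ({0} : Set ℝ) := by
    ext z
    constructor
    · rintro ⟨⟨h1, h2⟩, hX0⟩
      exact Set.mem_prod.mpr ⟨⟨h1, hX0⟩, h2⟩
    · rintro ⟨⟨h1, h2⟩, h0⟩
      exact ⟨Set.mem_prod.mpr ⟨h1, h0⟩, h2⟩
  rw [← hkey]
  exact hface

end AuxConeFaces

section AuxConeInter

variable {E : Type*} [NormedAddCommGroup E] [NormedSpace ℝ E]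

lemma aux_coneOver_inter [FiniteDimensional ℝ E] {ι ι' : Type*} [Fintype ι] [Fintype ι']
    {f : ι → E →ₗ[ℝ] ℝ} {b : ι → ℝ} {f' : ι' → E →ₗ[ℝ] ℝ} {b' : ι' → ℝ} {Λ Λ' : Set E}
    (hrep : Λ = {x : E | ∀ i, f i x ≤ b i}) (hrep' : Λ' = {x : E | ∀ i, f' i x ≤ b' i})
    (hne : (Λ ∩ Λ').Nonempty) :
    coneOver Λ ∩ coneOver Λ' = coneOver (Λ ∩ Λ') := by
  have hneΛ : Λ.Nonempty := hne.mono Set.inter_subset_left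
  have hneΛ' : Λ'.Nonempty := hne.mono Set.inter_subset_right
  rw [aux_coneOver_char hrep hneΛ, aux_coneOver_char hrep' hneΛ',
    aux_coneOver_char (aux_inter_rep hrep hrep') hne]
  ext z
  simp only [Set.mem_inter_iff, Set.mem_setOf_eq]
  constructor
  · rintro ⟨⟨ht, h1⟩, ⟨_, h2⟩⟩
    refine ⟨ht, fun l => ?_⟩
    rcases l with i | j
    · exact h1 i
    · exact h2 j
  · rintro ⟨ht, h⟩
    exact ⟨⟨ht, fun i => h (Sum.inl i)⟩, ⟨ht, fun j => h (Sum.inr j)⟩⟩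

lemma aux_coneOver_inter_empty [FiniteDimensional ℝ E] {ι ι' : Type*} [Fintype ι] [Fintype ι']
    {f : ι → E →ₗ[ℝ] ℝ} {b : ι → ℝ} {f' : ι' → E →ₗ[ℝ] ℝ} {b' : ι' → ℝ} {Λ Λ' : Set E}
    (hrep : Λ = {x : E | ∀ i, f i x ≤ b i}) (hne : Λ.Nonempty)
    (hrep' : Λ' = {x : E | ∀ i, f' i x ≤ b' i}) (hne' : Λ'.Nonempty)
    (hempty : Λ ∩ Λ' = ∅) :
    coneOver Λ ∩ coneOver Λ' = (recPoly Λ ∩ recPoly Λ') ×ˢ ({0} : Set ℝ) := by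
  rw [aux_coneOver_char hrep hne, aux_coneOver_char hrep' hne']
  ext z
  simp only [Set.mem_inter_iff, Set.mem_setOf_eq]
  constructor
  · rintro ⟨⟨ht, h1⟩, ⟨_, h2⟩⟩
    have hz2 : z.2 = 0 := by
      by_contra hne0
      have hpos : 0 < z.2 := lt_of_le_of_ne ht (Ne.symm hne0)
      have hm : z.2⁻¹ • z.1 ∈ Λ ∩ Λ' :=
        ⟨aux_div_mem hrep hpos h1, aux_div_mem hrep' hpos h2⟩
      rw [hempty] at hm
      exact hm
    refine Set.mem_prod.mpr ⟨⟨?_, ?_⟩, hz2⟩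
    · rw [aux_mem_recPoly hrep hne]
      intro i
      have h3 := h1 i
      rw [hz2, zero_mul] at h3
      exact h3
    · rw [aux_mem_recPoly hrep' hne']
      intro i
      have h3 := h2 i
      rw [hz2, zero_mul] at h3
      exact h3
  · rintro ⟨⟨hu1, hu2⟩, h0⟩
    have h0' : z.2 = 0 := h0
    refine ⟨⟨le_of_eq h0'.symm, fun i => ?_⟩, ⟨le_of_eq h0'.symm, fun j => ?_⟩⟩
    · rw [h0', zero_mul]
      exact (aux_mem_recPoly hrep hne).mp hu1 i
    · rw [h0', zero_mul]
      exact (aux_mem_recPoly hrep' hne').mp hu2 j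

lemma aux_cone_rec0_inter [FiniteDimensional ℝ E] {ι ι' : Type*} [Fintype ι] [Fintype ι']
    {f : ι → E →ₗ[ℝ] ℝ} {b : ι → ℝ} {f' : ι' → E →ₗ[ℝ] ℝ} {b' : ι' → ℝ} {Λ Λ' : Set E}
    (hrep : Λ = {x : E | ∀ i, f i x ≤ b i}) (hne : Λ.Nonempty)
    (hrep' : Λ' = {x : E | ∀ i, f' i x ≤ b' i}) (hne' : Λ'.Nonempty) :
    coneOver Λ ∩ (recPoly Λ' ×ˢ ({0} : Set ℝ))
      = (recPoly Λ ∩ recPoly Λ') ×ˢ ({0} : Set ℝ) := by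
  rw [aux_coneOver_char hrep hne]
  ext z
  constructor
  · rintro ⟨⟨ht, h1⟩, hz'1, hz'2⟩
    have h0' : z.2 = 0 := hz'2
    refine Set.mem_prod.mpr ⟨⟨?_, hz'1⟩, h0'⟩
    rw [aux_mem_recPoly hrep hne]
    intro i
    have h3 := h1 i
    rw [h0', zero_mul] at h3
    exact h3
  · rintro ⟨⟨hu1, hu2⟩, h0⟩
    have h0' : z.2 = 0 := h0
    refine ⟨⟨le_of_eq h0'.symm, fun i => ?_⟩, Set.mem_prod.mpr ⟨hu2, h0'⟩⟩
    rw [h0', zero_mul]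
    exact (aux_mem_recPoly hrep hne).mp hu1 i

lemma aux_rec0_inter {Λ Λ' : Set E} :
    (recPoly Λ ×ˢ ({0} : Set ℝ)) ∩ (recPoly Λ' ×ˢ ({0} : Set ℝ))
      = (recPoly Λ ∩ recPoly Λ') ×ˢ ({0} : Set ℝ) := by
  rw [Set.prod_inter_prod, Set.inter_self]

lemma aux_coneOver_faces [FiniteDimensional ℝ E] {ι : Type*} [Fintype ι]
    {f : ι → E →ₗ[ℝ] ℝ} {b : ι → ℝ} {Λ : Set E}
    (hrep : Λ = {x : E | ∀ i, f i x ≤ b i}) (hne : Λ.Nonempty)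
    {X : (E × ℝ) →ₗ[ℝ] ℝ} (hFne : (faceSet (coneOver Λ) X).Nonempty) :
    ∃ x : E →ₗ[ℝ] ℝ, (faceSet Λ x).Nonempty ∧
      (faceSet (coneOver Λ) X = coneOver (faceSet Λ x) ∨
        faceSet (coneOver Λ) X = recPoly (faceSet Λ x) ×ˢ ({0} : Set ℝ)) := by
  obtain ⟨hXnn, hXface⟩ := aux_cone_min (aux_coneOver_rep hrep hne) hFne
  set x : E →ₗ[ℝ] ℝ := X.comp (LinearMap.inl ℝ E ℝ) with hx
  set c : ℝ := X (0, 1) with hc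
  have hXdec : ∀ z : E × ℝ, X z = x z.1 + z.2 * c := by
    intro z
    have hzeq : z = ((z.1, 0) : E × ℝ) + z.2 • ((0 : E), (1 : ℝ)) := by
      rw [Prod.smul_mk, Prod.mk_add_mk]
      simp
    conv_lhs => rw [hzeq]
    rw [map_add, map_smul, smul_eq_mul]
    rfl
  have hxrec : ∀ u ∈ recPoly Λ, 0 ≤ x u := by
    intro u hu
    have hmem : ((u, 0) : E × ℝ) ∈ coneOver Λ := by
      rw [aux_coneOver_char hrep hne]
      exact ⟨le_rfl, fun i => by
        rw [zero_mul]
        exact (aux_mem_recPoly hrep hne).mp hu i⟩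
    have h1 := hXnn _ hmem
    rw [hXdec] at h1
    simpa using h1
  obtain ⟨w₀, hw₀⟩ := aux_exists_min hrep hne hxrec
  refine ⟨x, ⟨w₀, hw₀⟩, ?_⟩
  have hlower := aux_cone_lower hrep hne (fun v hv => hw₀.2 v hv) hxrec
  have hw₀c : ((w₀, 1) : E × ℝ) ∈ coneOver Λ := by
    rw [aux_coneOver_char hrep hne]
    refine ⟨by norm_num, fun i => ?_⟩
    have : w₀ ∈ Λ := hw₀.1
    rw [hrep] at this
    simpa using this i
  have hw₀cX : 0 ≤ x w₀ + c := by
    have h1 := hXnn _ hw₀c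
    rw [hXdec] at h1
    simpa using h1
  by_cases hcase : x w₀ + c = 0
  · left
    rw [hXface, ← aux_cone_keyset hrep hw₀]
    ext z
    simp only [Set.mem_setOf_eq, hXdec]
    constructor
    · rintro ⟨h1, h2⟩
      refine ⟨h1, ?_⟩
      have : c = -(x w₀) := by linarith
      rw [this] at h2
      linarith
    · rintro ⟨h1, h2⟩
      refine ⟨h1, ?_⟩
      have : c = -(x w₀) := by linarith
      rw [this]
      linarith
  · right
    have hgt : 0 < x w₀ + c := lt_of_le_of_ne hw₀cX (Ne.symm hcase)
    rw [hXface, aux_rec_faceSet hrep ⟨w₀, hw₀⟩]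
    ext z
    constructor
    · rintro ⟨hz, hX0⟩
      have hz' := hz
      rw [aux_coneOver_char hrep hne] at hz'
      obtain ⟨ht, h1⟩ := hz'
      have hz2 : z.2 = 0 := by
        rcases lt_or_eq_of_le ht with hpos | h0
        · exfalso
          have h2 := hlower z hz
          rw [hXdec] at hX0
          nlinarith
        · exact h0.symm
      have hz1 : z.1 ∈ recPoly Λ := by
        rw [aux_mem_recPoly hrep hne]
        intro i
        have h2 := h1 i
        rw [hz2, zero_mul] at h2
        exact h2
      have hx0 : x z.1 = 0 := by
        rw [hXdec, hz2, zero_mul, add_zero] at hX0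
        exact hX0
      exact Set.mem_prod.mpr ⟨⟨hz1, hx0⟩, hz2⟩
    · rintro ⟨⟨h1, h2⟩, h0⟩
      have h0' : z.2 = 0 := h0
      constructor
      · rw [aux_coneOver_char hrep hne]
        refine ⟨le_of_eq h0'.symm, fun i => ?_⟩
        rw [h0', zero_mul]
        exact (aux_mem_recPoly hrep hne).mp h1 i
      · rw [hXdec, h0', zero_mul, add_zero]
        exact h2

lemma aux_rec0_faces [FiniteDimensional ℝ E] {ι : Type*} [Fintype ι]
    {f : ι → E →ₗ[ℝ] ℝ} {b : ι → ℝ} {Λ : Set E}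
    (hrep : Λ = {x : E | ∀ i, f i x ≤ b i}) (hne : Λ.Nonempty)
    {X : (E × ℝ) →ₗ[ℝ] ℝ}
    (hFne : (faceSet (recPoly Λ ×ˢ ({0} : Set ℝ)) X).Nonempty) :
    ∃ x : E →ₗ[ℝ] ℝ, (faceSet Λ x).Nonempty ∧
      faceSet (recPoly Λ ×ˢ ({0} : Set ℝ)) X = recPoly (faceSet Λ x) ×ˢ ({0} : Set ℝ) := by
  set x : E →ₗ[ℝ] ℝ := X.comp (LinearMap.inl ℝ E ℝ) with hx
  have hXz : ∀ z : E × ℝ, z.2 = 0 → X z = x z.1 := by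
    intro z hz2
    have hzeq : z = ((z.1, 0) : E × ℝ) := by
      rw [Prod.mk.injEq]
      exact ⟨rfl, hz2⟩
    conv_lhs => rw [hzeq]
    rfl
  have hkey : faceSet (recPoly Λ ×ˢ ({0} : Set ℝ)) X
      = (faceSet (recPoly Λ) x) ×ˢ ({0} : Set ℝ) := by
    ext z
    constructor
    · rintro ⟨⟨hz1, hz2⟩, hmin⟩
      have hz2' : z.2 = 0 := hz2
      refine Set.mem_prod.mpr ⟨⟨hz1, fun v hv => ?_⟩, hz2'⟩
      have h1 := hmin (v, 0) (Set.mem_prod.mpr ⟨hv, rfl⟩)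
      rw [hXz z hz2', hXz (v, 0) rfl] at h1
      exact h1
    · rintro ⟨⟨hz1, hmin⟩, h0⟩
      have h0' : z.2 = 0 := h0
      refine ⟨Set.mem_prod.mpr ⟨hz1, h0'⟩, fun v hv => ?_⟩
      obtain ⟨hv1, hv2⟩ := hv
      have hv2' : v.2 = 0 := hv2
      rw [hXz z h0', hXz v hv2']
      exact hmin v.1 hv1
  have hfne2 : (faceSet (recPoly Λ) x).Nonempty := by
    obtain ⟨z, hz⟩ := hFne
    rw [hkey] at hz
    exact ⟨z.1, hz.1⟩
  obtain ⟨hne3, heq3⟩ := aux_rec_face hrep hne hfne2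
  exact ⟨x, hne3, by rw [hkey, heq3]⟩

end AuxConeInter

section AuxConeComplex

variable {E : Type*} [NormedAddCommGroup E] [NormedSpace ℝ E]

theorem aux_coneComplex [FiniteDimensional ℝ E] {P Q : Set (Set E)}
    (hP : IsPolyComplex P) (hQ : IsPolyComplex Q) (hcomp : polySupport Q = Set.univ)
    (hPQ : P ⊆ Q) : IsConicPolyComplex (coneComplex P) := by
  classical
  have hmem : ∀ Λ ∈ P, IsPolyhedron Λ ∧ Λ.Nonempty := hP.2.2.1
  have hXpair : ∀ Λ ∈ P, ∀ Λ' ∈ P, ∃ x : E →ₗ[ℝ] ℝ, (∀ u ∈ recPoly Λ, 0 ≤ x u) ∧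
      recPoly Λ ∩ recPoly Λ' = {u ∈ recPoly Λ | x u = 0} :=
    fun Λ hΛ Λ' hΛ' => aux_rec_inter_face hQ hcomp (hPQ hΛ) (hPQ hΛ')
  constructor
  · refine ⟨?_, ?_, ?_, ?_, ?_⟩
    · obtain ⟨Λ, hΛ⟩ := hP.1
      exact ⟨coneOver Λ, Or.inl ⟨Λ, hΛ, rfl⟩⟩
    · have himg : coneComplex P
          = (coneOver '' P) ∪ ((fun Λ => recPoly Λ ×ˢ ({0} : Set ℝ)) '' P) := by
        ext C
        constructor
        · rintro (⟨Λ, hΛ, rfl⟩ | ⟨Λ, hΛ, rfl⟩)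
          · exact Or.inl ⟨Λ, hΛ, rfl⟩
          · exact Or.inr ⟨Λ, hΛ, rfl⟩
        · rintro (⟨Λ, hΛ, rfl⟩ | ⟨Λ, hΛ, rfl⟩)
          · exact Or.inl ⟨Λ, hΛ, rfl⟩
          · exact Or.inr ⟨Λ, hΛ, rfl⟩
      rw [himg]
      exact (hP.2.1.image _).union (hP.2.1.image _)
    · rintro S (⟨Λ, hΛ, rfl⟩ | ⟨Λ, hΛ, rfl⟩)
      · obtain ⟨⟨m, f, b, hrep⟩, hne⟩ := hmem Λ hΛ
        constructor
        · rw [aux_coneOver_rep hrep hne]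
          exact aux_isPolyhedron_of_rep _ (fun _ => 0)
        · obtain ⟨p, hp⟩ := hne
          refine ⟨(p, 1), ?_⟩
          rw [aux_coneOver_char hrep ⟨p, hp⟩]
          refine ⟨by norm_num, fun i => ?_⟩
          have h1 : p ∈ Λ := hp
          rw [hrep] at h1
          simpa using h1 i
      · obtain ⟨⟨m, f, b, hrep⟩, hne⟩ := hmem Λ hΛ
        constructor
        · rw [aux_rec0_rep hrep hne]
          exact aux_isPolyhedron_of_rep _ (fun _ => 0)
        · exact ⟨(0, 0), Set.mem_prod.mpr ⟨aux_recPoly_zero Λ, rfl⟩⟩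
    · rintro S (⟨Λ, hΛ, rfl⟩ | ⟨Λ, hΛ, rfl⟩) F hF
      · obtain ⟨hFne, X, hFX⟩ := hF
        obtain ⟨⟨m, f, b, hrep⟩, hne⟩ := hmem Λ hΛ
        obtain ⟨x, hxne, hcases⟩ := aux_coneOver_faces hrep hne (hFX ▸ hFne)
        have hΛx : faceSet Λ x ∈ P := hP.2.2.2.1 Λ hΛ _ ⟨hxne, x, rfl⟩
        rcases hcases with h | h
        · exact Or.inl ⟨faceSet Λ x, hΛx, by rw [hFX, h]⟩
        · exact Or.inr ⟨faceSet Λ x, hΛx, by rw [hFX, h]⟩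
      · obtain ⟨hFne, X, hFX⟩ := hF
        obtain ⟨⟨m, f, b, hrep⟩, hne⟩ := hmem Λ hΛ
        obtain ⟨x, hxne, heq⟩ := aux_rec0_faces hrep hne (hFX ▸ hFne)
        exact Or.inr ⟨faceSet Λ x, hP.2.2.2.1 Λ hΛ _ ⟨hxne, x, rfl⟩, by rw [hFX, heq]⟩
    · rintro S hS T hT _
      rcases hS with ⟨Λ, hΛ, rfl⟩ | ⟨Λ, hΛ, rfl⟩ <;>
        rcases hT with ⟨Λ', hΛ', rfl⟩ | ⟨Λ', hΛ', rfl⟩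
      · -- cone / cone
        obtain ⟨⟨m, f, b, hrep⟩, hne⟩ := hmem Λ hΛ
        obtain ⟨⟨m', f', b', hrep'⟩, hne'⟩ := hmem Λ' hΛ'
        by_cases hΛΛ' : (Λ ∩ Λ').Nonempty
        · have hint := aux_coneOver_inter hrep hrep' hΛΛ'
          obtain ⟨hfΛ, hfΛ'⟩ := hP.2.2.2.2 Λ hΛ Λ' hΛ' hΛΛ'
          constructor
          · obtain ⟨hne1, x, hx⟩ := hfΛ
            obtain ⟨w₀, hw₀⟩ := hne1
            rw [hint, hx]
            exact aux_cone_face_of_face hrep (hx ▸ hw₀)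
          · obtain ⟨hne1, x, hx⟩ := hfΛ'
            obtain ⟨w₀, hw₀⟩ := hne1
            rw [hint, hx]
            exact aux_cone_face_of_face hrep' (hx ▸ hw₀)
        · have hempty : Λ ∩ Λ' = ∅ := Set.not_nonempty_iff_eq_empty.mp hΛΛ'
          have hint := aux_coneOver_inter_empty hrep hne hrep' hne' hempty
          constructor
          · obtain ⟨x, hxnn, hxeq⟩ := hXpair Λ hΛ Λ' hΛ'
            rw [hint, hxeq]
            exact aux_cone_face_of_recface hrep hne hxnn
          · obtain ⟨x, hxnn, hxeq⟩ := hXpair Λ' hΛ' Λ hΛ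
            rw [hint, Set.inter_comm (recPoly Λ), hxeq]
            exact aux_cone_face_of_recface hrep' hne' hxnn
      · -- cone / rec
        obtain ⟨⟨m, f, b, hrep⟩, hne⟩ := hmem Λ hΛ
        obtain ⟨⟨m', f', b', hrep'⟩, hne'⟩ := hmem Λ' hΛ'
        have hint := aux_cone_rec0_inter hrep hne hrep' hne'
        constructor
        · obtain ⟨x, hxnn, hxeq⟩ := hXpair Λ hΛ Λ' hΛ'
          rw [hint, hxeq]
          exact aux_cone_face_of_recface hrep hne hxnn
        · obtain ⟨x, hxnn, hxeq⟩ := hXpair Λ' hΛ' Λ hΛ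
          rw [hint, Set.inter_comm (recPoly Λ), hxeq]
          exact aux_rec0_face_of_recface hrep' hne' hxnn
      · -- rec / cone
        obtain ⟨⟨m, f, b, hrep⟩, hne⟩ := hmem Λ hΛ
        obtain ⟨⟨m', f', b', hrep'⟩, hne'⟩ := hmem Λ' hΛ'
        have hint : (recPoly Λ ×ˢ ({0} : Set ℝ)) ∩ coneOver Λ'
            = (recPoly Λ ∩ recPoly Λ') ×ˢ ({0} : Set ℝ) := by
          rw [Set.inter_comm, aux_cone_rec0_inter hrep' hne' hrep hne,
            Set.inter_comm (recPoly Λ')]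
        constructor
        · obtain ⟨x, hxnn, hxeq⟩ := hXpair Λ hΛ Λ' hΛ'
          rw [hint, hxeq]
          exact aux_rec0_face_of_recface hrep hne hxnn
        · obtain ⟨x, hxnn, hxeq⟩ := hXpair Λ' hΛ' Λ hΛ
          rw [hint, Set.inter_comm (recPoly Λ), hxeq]
          exact aux_cone_face_of_recface hrep' hne' hxnn
      · -- rec / rec
        obtain ⟨⟨m, f, b, hrep⟩, hne⟩ := hmem Λ hΛ
        obtain ⟨⟨m', f', b', hrep'⟩, hne'⟩ := hmem Λ' hΛ'
        have hint := aux_rec0_inter (Λ := Λ) (Λ' := Λ')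
        constructor
        · obtain ⟨x, hxnn, hxeq⟩ := hXpair Λ hΛ Λ' hΛ'
          rw [hint, hxeq]
          exact aux_rec0_face_of_recface hrep hne hxnn
        · obtain ⟨x, hxnn, hxeq⟩ := hXpair Λ' hΛ' Λ hΛ
          rw [hint, Set.inter_comm (recPoly Λ), hxeq]
          exact aux_rec0_face_of_recface hrep' hne' hxnn
  · rintro S (⟨Λ, hΛ, rfl⟩ | ⟨Λ, hΛ, rfl⟩)
    · obtain ⟨⟨m, f, b, hrep⟩, hne⟩ := hmem Λ hΛ
      rw [aux_coneOver_rep hrep hne]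
      exact aux_minkowski _
    · obtain ⟨⟨m, f, b, hrep⟩, hne⟩ := hmem Λ hΛ
      rw [aux_rec0_rep hrep hne]
      exact aux_minkowski _

end AuxConeComplex
/-- Corollary 1: if a polyhedral complex `Π` is extendable
(a subcomplex of a complete polyhedral complex), then `rec(Π)` and `c(Π)` are
conic polyhedral complexes. -/
theorem statement10 {n : ℕ} (P : Set (Set (Fin n → ℝ))) (hP : IsPolyComplex P)
    (hext : ∃ Q : Set (Set (Fin n → ℝ)), IsPolyComplex Q ∧
      polySupport Q = univ ∧ P ⊆ Q) :
    IsConicPolyComplex (recComplex P) ∧ IsConicPolyComplex (coneComplex P) := by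
  obtain ⟨Q, hQ, hcomp, hPQ⟩ := hext
  exact ⟨aux_recComplex hP hQ hcomp hPQ, aux_coneComplex hP hQ hcomp hPQ⟩
end

section
/- Let Π be a polyhedral complex in ℝⁿ. Then there exists a subdivision Π' of Π (a polyhedral complex with |Π'| = |Π| such that every polyhedron of Π' is contained in some polyhedron of Π) that is extendable, i.e., is a subcomplex of a complete polyhedral complex in ℝⁿ. -/
open Set Pointwise

set_option linter.unreachableTactic false
set_option linter.unusedTactic false
set_option linter.unusedSectionVars false
set_option maxHeartbeats 1000000

variable {E : Type*} [NormedAddCommGroup E] [NormedSpace ℝ E]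

section Arrangement

variable {H : Type*} [Fintype H]

def signCond (s : SignType) (a b : ℝ) : Prop :=
  match s with
  | .neg => a ≤ b
  | .zero => a = b
  | .pos => b ≤ a

lemma signCond_of_eq (s : SignType) {a b : ℝ} (h : a = b) : signCond s a b := by
  cases s <;> simp [signCond, h, le_refl]

variable (F : H → (E →ₗ[ℝ] ℝ)) (B : H → ℝ)

def scell (s : H → SignType) : Set E := {x | ∀ h, signCond (s h) (F h x) (B h)}

noncomputable def sgnAt (p : E) : H → SignType := fun h => SignType.sign (F h p - B h)

lemma mem_scell_sgnAt (p : E) : p ∈ scell F B (sgnAt F B p) := by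
  intro h
  rcases lt_trichotomy (F h p) (B h) with hlt | heq | hgt
  · have h1 : F h p - B h < 0 := by linarith
    have : sgnAt F B p h = .neg := by simp [sgnAt, sign_eq_neg_one_iff.mpr h1]
    rw [this]; exact le_of_lt hlt
  · have h1 : F h p - B h = 0 := by linarith
    have : sgnAt F B p h = .zero := by simp [sgnAt, h1]
    rw [this]; exact heq
  · have h1 : 0 < F h p - B h := by linarith
    have : sgnAt F B p h = .pos := by simp [sgnAt, sign_eq_one_iff.mpr h1]
    rw [this]; exact le_of_lt hgt

lemma isPolyhedron_of_fintype {ι : Type*} [Fintype ι] (f : ι → (E →ₗ[ℝ] ℝ)) (b : ι → ℝ) :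
    IsPolyhedron {x : E | ∀ i, f i x ≤ b i} := by
  refine ⟨Fintype.card ι, f ∘ (Fintype.equivFin ι).symm, b ∘ (Fintype.equivFin ι).symm, ?_⟩
  ext x
  constructor
  · intro hx i; exact hx _
  · intro hx i
    simpa using hx (Fintype.equivFin ι i)

def cellMapF (s : H → SignType) : H × Bool → (E →ₗ[ℝ] ℝ) := fun i =>
  match i.2, s i.1 with
  | true, .zero => -F i.1
  | true, .neg => 0
  | true, .pos => 0
  | false, .pos => -F i.1
  | false, .neg => F i.1
  | false, .zero => F i.1

def cellMapB (s : H → SignType) : H × Bool → ℝ := fun i =>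
  match i.2, s i.1 with
  | true, .zero => -B i.1
  | true, .neg => 0
  | true, .pos => 0
  | false, .pos => -B i.1
  | false, .neg => B i.1
  | false, .zero => B i.1

lemma isPolyhedron_scell (s : H → SignType) : IsPolyhedron (scell F B s) := by
  classical
  have hset : scell F B s =
      {x : E | ∀ i : H × Bool, cellMapF F s i x ≤ cellMapB B s i} := by
    ext q
    constructor
    · intro hq i
      obtain ⟨h, bl⟩ := i
      have h1 := hq h
      cases bl <;> cases hsh : s h <;> rw [hsh] at h1 <;>
        simp only [signCond] at h1 <;>
        simp only [cellMapF, cellMapB, hsh, LinearMap.neg_apply, LinearMap.zero_apply] <;>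
        linarith
    · intro hq h
      have h1 := hq (h, false)
      have h2 := hq (h, true)
      cases hsh : s h <;>
        simp only [cellMapF, cellMapB, hsh, LinearMap.neg_apply, LinearMap.zero_apply]
          at h1 h2 <;>
        simp only [signCond]
      · exact le_antisymm h1 (by linarith)
      · exact h1
      · linarith
  rw [hset]
  exact isPolyhedron_of_fintype _ _

lemma convex_scell (s : H → SignType) : Convex ℝ (scell F B s) := by
  intro p hp q hq a b ha hb hab
  intro h
  have hp' := hp h
  have hq' := hq h
  have hmap : F h (a • p + b • q) = a * F h p + b * F h q := by
    simp [map_add, map_smul, smul_eq_mul]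
  have hsum : a * B h + b * B h = B h := by rw [← add_mul, hab, one_mul]
  cases hsh : s h <;> rw [hsh] at hp' hq' <;> simp only [signCond] at *
  · rw [hmap, hp', hq']; exact hsum
  · rw [hmap]
    have := mul_le_mul_of_nonneg_left hp' ha
    have := mul_le_mul_of_nonneg_left hq' hb
    linarith
  · rw [hmap]
    have := mul_le_mul_of_nonneg_left hp' ha
    have := mul_le_mul_of_nonneg_left hq' hb
    linarith

lemma convex_faceSet {S : Set E} (hS : Convex ℝ S) (x : E →ₗ[ℝ] ℝ) :
    Convex ℝ (faceSet S x) := by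
  intro p hp q hq a b ha hb hab
  refine ⟨hS hp.1 hq.1 ha hb hab, fun v hv => ?_⟩
  have h1 := hp.2 v hv
  have h2 := hq.2 v hv
  have hmap : x (a • p + b • q) = a * x p + b * x q := by
    simp [map_add, map_smul, smul_eq_mul]
  have hsum : a * x v + b * x v = x v := by rw [← add_mul, hab, one_mul]
  rw [hmap]
  have := mul_le_mul_of_nonneg_left h1 ha
  have := mul_le_mul_of_nonneg_left h2 hb
  linarith

lemma faceSet_scell_eq (s : H → SignType) (x : E →ₗ[ℝ] ℝ)
    (hne : (faceSet (scell F B s) x).Nonempty) :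
    ∃ u : H → SignType, faceSet (scell F B s) x = scell F B u := by
  classical
  obtain ⟨p₀, hp₀⟩ := hne
  set C := scell F B s with hC
  set Fc := faceSet C x with hFc
  have hFcC : Fc ⊆ C := fun q hq => hq.1
  have hconv : Convex ℝ Fc := convex_faceSet (convex_scell F B s) x
  set D : Set H := {h | ∀ q ∈ Fc, F h q = B h} with hD
  have hwit : ∀ h : {h : H // h ∉ D}, ∃ q, q ∈ Fc ∧ F h.1 q ≠ B h.1 := by
    rintro ⟨h, hh⟩
    by_contra hcon
    push_neg at hcon
    exact hh fun q hq => hcon q hq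
  choose w hwFc hwne using hwit
  haveI : Fintype {h : H // h ∉ D} := Fintype.ofFinite _
  haveI : Fintype (Option {h : H // h ∉ D}) := Fintype.ofFinite _
  set J := Option {h : H // h ∉ D} with hJ
  set z : J → E := fun j => j.elim p₀ w with hz
  set N : ℝ := (Fintype.card J : ℝ) with hN
  have hNpos : 0 < N := by
    rw [hN]
    exact_mod_cast Fintype.card_pos_iff.mpr ⟨none⟩
  set qs : E := ∑ j : J, (1 / N) • z j with hqs
  have hzFc : ∀ j, z j ∈ Fc := by
    rintro (_ | h)
    · exact hp₀
    · exact hwFc h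
  have hqsFc : qs ∈ Fc := by
    refine hconv.sum_mem (fun j _ => by positivity) ?_ (fun j _ => hzFc j)
    rw [Finset.sum_const, nsmul_eq_mul]
    field_simp
    rfl
  have hFqs : ∀ h : H, F h qs = ∑ j : J, (1 / N) * F h (z j) := by
    intro h
    simp [hqs, map_sum, map_smul, smul_eq_mul]
  have hBsum : ∀ h : H, ∑ _j : J, (1 / N) * B h = B h := by
    intro h
    rw [Finset.sum_const, nsmul_eq_mul]
    field_simp
    rfl
  have hstrict : ∀ h, h ∉ D → F h qs ≠ B h := by
    intro h hh
    have hzs : ∀ j, signCond (s h) (F h (z j)) (B h) := fun j => (hFcC (hzFc j)) h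
    cases hsh : s h
    · exact absurd (fun q hq => by have := (hFcC hq) h; rw [hsh] at this; exact this) hh
    · have hle : ∀ j, F h (z j) ≤ B h := fun j => by have := hzs j; rw [hsh] at this; exact this
      have hstr : F h (z (some ⟨h, hh⟩)) < B h := lt_of_le_of_ne (hle _) (hwne ⟨h, hh⟩)
      have hlt : ∑ j : J, (1 / N) * F h (z j) < ∑ _j : J, (1 / N) * B h := by
        refine Finset.sum_lt_sum (fun j _ => mul_le_mul_of_nonneg_left (hle j) (by positivity))
          ⟨some ⟨h, hh⟩, Finset.mem_univ _, mul_lt_mul_of_pos_left hstr (by positivity)⟩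
      rw [hBsum h] at hlt
      rw [hFqs h]
      exact ne_of_lt hlt
    · have hle : ∀ j, B h ≤ F h (z j) := fun j => by have := hzs j; rw [hsh] at this; exact this
      have hstr : B h < F h (z (some ⟨h, hh⟩)) := lt_of_le_of_ne (hle _) (Ne.symm (hwne ⟨h, hh⟩))
      have hlt : ∑ _j : J, (1 / N) * B h < ∑ j : J, (1 / N) * F h (z j) := by
        refine Finset.sum_lt_sum (fun j _ => mul_le_mul_of_nonneg_left (hle j) (by positivity))
          ⟨some ⟨h, hh⟩, Finset.mem_univ _, mul_lt_mul_of_pos_left hstr (by positivity)⟩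
      rw [hBsum h] at hlt
      rw [hFqs h]
      exact (ne_of_lt hlt).symm
  set u : H → SignType := fun h => if h ∈ D then .zero else s h with hu
  refine ⟨u, Set.Subset.antisymm ?_ ?_⟩
  · intro q hq h
    by_cases hh : h ∈ D
    · simp only [hu, if_pos hh]
      exact hh q hq
    · simp only [hu, if_neg hh]
      exact hq.1 h
  · intro y hy
    have hyC : y ∈ C := by
      intro h
      by_cases hh : h ∈ D
      · have := hy h
        simp only [hu, if_pos hh] at this
        exact signCond_of_eq _ this
      · have := hy h
        simp only [hu, if_neg hh] at this
        exact this
    have hyD : ∀ h ∈ D, F h y = B h := by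
      intro h hh
      have := hy h
      simp only [hu, if_pos hh] at this
      exact this
    set e : H → ℝ := fun h => |F h qs - B h| / (|F h qs - F h y| + 1) with he
    set T : Finset H := Finset.univ.filter (fun h => h ∉ D) with hT
    set A : Finset ℝ := insert 1 (T.image e) with hA
    have hAne : A.Nonempty := ⟨1, Finset.mem_insert_self _ _⟩
    set ε : ℝ := A.min' hAne with hε
    have hεpos : 0 < ε := by
      rw [hε, Finset.lt_min'_iff]
      intro b hb
      rw [hA] at hb
      rcases Finset.mem_insert.mp hb with rfl | hb
      · norm_num
      · obtain ⟨h, hhT, rfl⟩ := Finset.mem_image.mp hb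
        have hh : h ∉ D := by
          have := Finset.mem_filter.mp hhT
          exact this.2
        have h1 : 0 < |F h qs - B h| := abs_pos.mpr (sub_ne_zero.mpr (hstrict h hh))
        have h2 : 0 < |F h qs - F h y| + 1 := by positivity
        exact div_pos h1 h2
    have hεle : ∀ h, h ∉ D → ε ≤ e h := fun h hh =>
      Finset.min'_le _ _ (Finset.mem_insert_of_mem
        (Finset.mem_image_of_mem e (Finset.mem_filter.mpr ⟨Finset.mem_univ _, hh⟩)))
    have hkey : ∀ h, h ∉ D → |ε * (F h qs - F h y)| < |F h qs - B h| := by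
      intro h hh
      have ha : 0 < |F h qs - B h| := abs_pos.mpr (sub_ne_zero.mpr (hstrict h hh))
      have hm : 0 ≤ |F h qs - F h y| := abs_nonneg _
      rw [abs_mul, abs_of_pos hεpos]
      calc ε * |F h qs - F h y| ≤ e h * |F h qs - F h y| :=
            mul_le_mul_of_nonneg_right (hεle h hh) hm
        _ < |F h qs - B h| := by
            rw [he]
            simp only
            rw [div_mul_eq_mul_div, div_lt_iff₀ (by positivity)]
            nlinarith [ha, hm]
    set zpt : E := qs + ε • (qs - y) with hzpt
    have hmapz : ∀ h : H, F h zpt = F h qs + ε * (F h qs - F h y) := by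
      intro h
      simp only [hzpt, map_add, map_smul, map_sub, smul_eq_mul]
    have hzC : zpt ∈ C := by
      intro h
      by_cases hh : h ∈ D
      · have h1 : F h qs = B h := hh qs hqsFc
        have h2 : F h y = B h := hyD h hh
        apply signCond_of_eq
        rw [hmapz h, h1, h2]
        ring
      · have hq1 := hqsFc.1 h
        have hy1 := hyC h
        have hk := hkey h hh
        cases hsh : s h
        · exact absurd (fun q hq => by have := (hFcC hq) h; rw [hsh] at this; exact this) hh
        · rw [hsh] at hq1 hy1
          simp only [signCond] at hq1 hy1 ⊢
          have hlt : F h qs < B h := lt_of_le_of_ne hq1 (hstrict h hh)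
          have habs : |F h qs - B h| = B h - F h qs := by
            rw [abs_of_neg (by linarith)]; ring
          rw [habs] at hk
          have h2 := (abs_lt.mp hk).2
          rw [hmapz h]
          linarith
        · rw [hsh] at hq1 hy1
          simp only [signCond] at hq1 hy1 ⊢
          have hlt : B h < F h qs := lt_of_le_of_ne hq1 (Ne.symm (hstrict h hh))
          have habs : |F h qs - B h| = F h qs - B h := abs_of_pos (by linarith)
          rw [habs] at hk
          have h2 := (abs_lt.mp hk).1
          rw [hmapz h]
          linarith
    have hxz : x zpt = x qs + ε * (x qs - x y) := by
      simp only [hzpt, map_add, map_smul, map_sub, smul_eq_mul]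
    have hmin := hqsFc.2 zpt hzC
    rw [hxz] at hmin
    have h0 : ε * 0 ≤ ε * (x qs - x y) := by linarith
    have hxy : x y ≤ x qs := by
      have := le_of_mul_le_mul_left h0 hεpos
      linarith
    exact ⟨hyC, fun v hv => le_trans hxy (hqsFc.2 v hv)⟩

lemma scell_inter (s t : H → SignType) [DecidableEq SignType] :
    scell F B s ∩ scell F B t =
      scell F B (fun h => if s h = t h then s h else .zero) := by
  ext q
  constructor
  · rintro ⟨hs, ht⟩ h
    by_cases hst : s h = t h
    · simp only [if_pos hst]
      exact hs h
    · simp only [if_neg hst]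
      have h1 := hs h
      have h2 := ht h
      apply (show ∀ a b : ℝ, a = b → signCond .zero a b from fun a b hab => hab)
      cases hsh : s h <;> cases hth : t h <;> rw [hsh] at h1 hst <;> rw [hth] at h2 hst <;>
        simp only [signCond] at h1 h2 <;> first
          | exact absurd rfl hst
          | linarith
  · intro hq
    have h1 : ∀ h : H, signCond (if s h = t h then s h else SignType.zero) (F h q) (B h) :=
      fun h => hq h
    constructor <;> intro h
    · by_cases hst : s h = t h
      · have := h1 h
        rw [if_pos hst] at this
        exact this
      · have := h1 h
        rw [if_neg hst] at this
        exact signCond_of_eq _ this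
    · by_cases hst : s h = t h
      · have := h1 h
        rw [if_pos hst, hst] at this
        exact this
      · have := h1 h
        rw [if_neg hst] at this
        exact signCond_of_eq _ this

lemma isFaceOf_inter_scell (s t : H → SignType)
    (hne : (scell F B s ∩ scell F B t).Nonempty) :
    IsFaceOf (scell F B s ∩ scell F B t) (scell F B s) := by
  classical
  obtain ⟨w, hw⟩ := hne
  set T : Finset H := Finset.univ.filter (fun h => s h ≠ t h) with hT
  set g : H → (E →ₗ[ℝ] ℝ) := fun h => if s h = .pos then F h else -F h with hg
  set c : H → ℝ := fun h => if s h = .pos then B h else -B h with hc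
  set x : E →ₗ[ℝ] ℝ := ∑ h ∈ T, g h with hx
  have hxapp : ∀ v : E, x v = ∑ h ∈ T, g h v := by
    intro v
    rw [hx]
    exact LinearMap.sum_apply _ _ _
  -- on scell s, each term is ≥ c h
  have hterm : ∀ v ∈ scell F B s, ∀ h : H, c h ≤ g h v := by
    intro v hv h
    have h1 := hv h
    cases hsh : s h <;> rw [hsh] at h1 <;> simp only [signCond] at h1 <;>
      simp [hg, hc, hsh] <;> linarith
  -- on the intersection, equality holds on T
  have heqT : ∀ v ∈ scell F B s ∩ scell F B t, ∀ h ∈ T, F h v = B h := by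
    intro v hv h hhT
    have hst : s h ≠ t h := (Finset.mem_filter.mp hhT).2
    have h1 := hv.1 h
    have h2 := hv.2 h
    cases hsh : s h <;> cases hth : t h <;> rw [hsh] at h1 hst <;> rw [hth] at h2 hst <;>
      simp only [signCond] at h1 h2 <;> first
        | exact absurd rfl hst
        | linarith
  have hgeq : ∀ v : E, (∀ h ∈ T, F h v = B h) → ∀ h ∈ T, g h v = c h := by
    intro v hv h hhT
    rw [hg, hc]
    by_cases hsp : s h = .pos <;> simp only [hsp, if_pos, if_neg, LinearMap.neg_apply] <;>
      simp_all
  have hxw : x w = ∑ h ∈ T, c h := by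
    rw [hxapp]
    exact Finset.sum_congr rfl (hgeq w (heqT w hw))
  have hlb : ∀ v ∈ scell F B s, ∑ h ∈ T, c h ≤ x v := by
    intro v hv
    rw [hxapp]
    exact Finset.sum_le_sum fun h _ => hterm v hv h
  refine ⟨⟨w, hw⟩, x, Set.Subset.antisymm ?_ ?_⟩
  · rintro v ⟨hvs, hvt⟩
    refine ⟨hvs, fun v' hv' => ?_⟩
    have : x v = ∑ h ∈ T, c h := by
      rw [hxapp]
      exact Finset.sum_congr rfl (hgeq v (heqT v ⟨hvs, hvt⟩))
    rw [this]
    exact hlb v' hv'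
  · rintro q ⟨hqs, hqmin⟩
    have hxq : x q = ∑ h ∈ T, c h := by
      refine le_antisymm ?_ (hlb q hqs)
      rw [← hxw]
      exact hqmin w hw.1
    have hzero : ∑ h ∈ T, (g h q - c h) = 0 := by
      rw [Finset.sum_sub_distrib, ← hxapp, hxq, sub_self]
    have hall : ∀ h ∈ T, g h q - c h = 0 := by
      have := (Finset.sum_eq_zero_iff_of_nonneg
        (fun h hh => sub_nonneg.mpr (hterm q hqs h))).mp hzero
      intro h hh
      exact this h hh
    have hFq : ∀ h ∈ T, F h q = B h := by
      intro h hh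
      have h1 := sub_eq_zero.mp (hall h hh)
      rw [hg, hc] at h1
      by_cases hsp : s h = .pos <;> simp only [hsp, if_pos, if_neg, LinearMap.neg_apply] at h1 <;>
        simp_all <;> linarith
    refine ⟨hqs, fun h => ?_⟩
    by_cases hst : s h = t h
    · rw [← hst]
      exact hqs h
    · have hhT : h ∈ T := Finset.mem_filter.mpr ⟨Finset.mem_univ _, hst⟩
      exact signCond_of_eq _ (hFq h hhT)

lemma arrangement_complex {H : Type*} [Fintype H] (F : H → E →ₗ[ℝ] ℝ) (B : H → ℝ) :
    IsPolyComplex {C : Set E | (∃ s, C = scell F B s) ∧ C.Nonempty} ∧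
      polySupport {C : Set E | (∃ s, C = scell F B s) ∧ C.Nonempty} = univ := by
  classical
  set Q : Set (Set E) := {C | (∃ s, C = scell F B s) ∧ C.Nonempty} with hQdef
  have hmemQ : ∀ p : E, scell F B (sgnAt F B p) ∈ Q :=
    fun p => ⟨⟨_, rfl⟩, ⟨p, mem_scell_sgnAt F B p⟩⟩
  have hsupp : polySupport Q = univ := by
    refine eq_univ_of_forall fun p => ?_
    exact Set.mem_biUnion (hmemQ p) (mem_scell_sgnAt F B p)
  refine ⟨⟨⟨_, hmemQ 0⟩, ?_, ?_, ?_, ?_⟩, hsupp⟩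
  · refine (Set.finite_range (scell F B)).subset fun C hC => ?_
    obtain ⟨⟨s, hs⟩, -⟩ := hC
    exact ⟨s, hs.symm⟩
  · rintro S ⟨⟨s, rfl⟩, hne⟩
    exact ⟨isPolyhedron_scell F B s, hne⟩
  · rintro S ⟨⟨s, rfl⟩, hne⟩ Fa ⟨hFne, x, rfl⟩
    obtain ⟨u, hu⟩ := faceSet_scell_eq F B s x hFne
    exact ⟨⟨u, hu⟩, hFne⟩
  · rintro S ⟨⟨s, rfl⟩, -⟩ T ⟨⟨t, rfl⟩, -⟩ hne
    refine ⟨isFaceOf_inter_scell F B s t hne, ?_⟩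
    rw [Set.inter_comm]
    exact isFaceOf_inter_scell F B t s (by rwa [Set.inter_comm])

end Arrangement

/-- Proposition 2: every polyhedral complex `Π` admits a
subdivision `Π'` which is extendable, i.e. is a subcomplex of a complete
polyhedral complex. -/
theorem statement11 {n : ℕ} (P : Set (Set (Fin n → ℝ))) (hP : IsPolyComplex P) :
    ∃ P' : Set (Set (Fin n → ℝ)), IsPolyComplex P' ∧
      polySupport P' = polySupport P ∧
      (∀ S ∈ P', ∃ Λ ∈ P, S ⊆ Λ) ∧
      ∃ Q : Set (Set (Fin n → ℝ)), IsPolyComplex Q ∧ polySupport Q = univ ∧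
        P' ⊆ Q := by
  classical
  obtain ⟨hPne, hPfin, hpoly, hfaces, hinter⟩ := hP
  haveI : Fintype ↥P := hPfin.fintype
  choose m f b hfb using fun S : ↥P => (hpoly S S.2).1
  set F : (Σ S : ↥P, Fin (m S)) → ((Fin n → ℝ) →ₗ[ℝ] ℝ) := fun h => f h.1 h.2 with hF
  set B : (Σ S : ↥P, Fin (m S)) → ℝ := fun h => b h.1 h.2 with hB
  obtain ⟨hQc, hQsupp⟩ := arrangement_complex F B
  set Q : Set (Set (Fin n → ℝ)) := {C | (∃ s, C = scell F B s) ∧ C.Nonempty} with hQ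
  have hsub : ∀ Λ, Λ ∈ P → ∀ p ∈ Λ, scell F B (sgnAt F B p) ⊆ Λ := by
    intro Λ hΛ p hp q hq
    have hrep : Λ = {x | ∀ i, f ⟨Λ, hΛ⟩ i x ≤ b ⟨Λ, hΛ⟩ i} := hfb ⟨Λ, hΛ⟩
    rw [hrep]
    simp only [Set.mem_setOf_eq]
    intro i
    have hpi : f ⟨Λ, hΛ⟩ i p ≤ b ⟨Λ, hΛ⟩ i := by
      rw [hrep] at hp
      exact hp i
    have hcond := hq ⟨⟨Λ, hΛ⟩, i⟩
    rcases lt_or_eq_of_le hpi with hlt | heq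
    · have hs : sgnAt F B p ⟨⟨Λ, hΛ⟩, i⟩ = .neg := by
        have hlt' : F ⟨⟨Λ, hΛ⟩, i⟩ p - B ⟨⟨Λ, hΛ⟩, i⟩ < 0 := by
          simp only [hF, hB]
          linarith
        simp [sgnAt, sign_eq_neg_one_iff.mpr hlt']
      rw [hs] at hcond
      simp only [signCond] at hcond
      simpa [hF, hB] using hcond
    · have hs : sgnAt F B p ⟨⟨Λ, hΛ⟩, i⟩ = .zero := by
        have h0 : F ⟨⟨Λ, hΛ⟩, i⟩ p - B ⟨⟨Λ, hΛ⟩, i⟩ = 0 := by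
          simp only [hF, hB]
          linarith
        simp [sgnAt, h0]
      rw [hs] at hcond
      simp only [signCond] at hcond
      have heq2 : F ⟨⟨Λ, hΛ⟩, i⟩ q = B ⟨⟨Λ, hΛ⟩, i⟩ := hcond
      simp only [hF, hB] at heq2
      linarith [heq2.le]
  set P' : Set (Set (Fin n → ℝ)) := {C | C ∈ Q ∧ ∃ Λ ∈ P, C ⊆ Λ} with hP'
  have hP'Q : P' ⊆ Q := fun C hC => hC.1
  have hcellP' : ∀ Λ, Λ ∈ P → ∀ p ∈ Λ, scell F B (sgnAt F B p) ∈ P' := by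
    intro Λ hΛ p hp
    exact ⟨⟨⟨_, rfl⟩, ⟨p, mem_scell_sgnAt F B p⟩⟩, Λ, hΛ, hsub Λ hΛ p hp⟩
  obtain ⟨hQne, hQfin, hQpoly, hQfaces, hQinter⟩ := hQc
  refine ⟨P', ⟨?_, hQfin.subset hP'Q, fun S hS => hQpoly S (hP'Q hS), ?_, ?_⟩, ?_, ?_,
    Q, ⟨hQne, hQfin, hQpoly, hQfaces, hQinter⟩, hQsupp, hP'Q⟩
  · obtain ⟨S₀, hS₀⟩ := hPne
    obtain ⟨p, hp⟩ := (hpoly S₀ hS₀).2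
    exact ⟨_, hcellP' S₀ hS₀ p hp⟩
  · intro S hS Fa hFa
    have hFaQ := hQfaces S (hP'Q hS) Fa hFa
    obtain ⟨Λ, hΛ, hSΛ⟩ := hS.2
    obtain ⟨hFne, x, hFx⟩ := hFa
    have hFaS : Fa ⊆ S := by
      rw [hFx]
      exact fun q hq => hq.1
    exact ⟨hFaQ, Λ, hΛ, hFaS.trans hSΛ⟩
  · intro S hS T hT hne
    exact hQinter S (hP'Q hS) T (hP'Q hT) hne
  · apply Set.Subset.antisymm
    · intro q hq
      obtain ⟨S, hS, hqS⟩ := Set.mem_iUnion₂.mp hq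
      obtain ⟨Λ, hΛ, hSΛ⟩ := hS.2
      exact Set.mem_biUnion hΛ (hSΛ hqS)
    · intro q hq
      obtain ⟨Λ, hΛ, hqΛ⟩ := Set.mem_iUnion₂.mp hq
      exact Set.mem_biUnion (hcellP' Λ hΛ q hqΛ) (mem_scell_sgnAt F B q)
  · intro S hS
    exact hS.2
end

section
/- There exists a strongly convex rational polyhedral complex Π in ℝ³ such that the collection rec(Π) = {rec(Λ) | Λ ∈ Π} is not a polyhedral complex. Concretely, for the complex Π consisting of all faces of Λ₁ = {(x₁,x₂,0) | x₁ ≥ 0, x₂ ≥ 0} and Λ₂ = {(x₁,x₂,1) | x₁ + x₂ ≥ 0, x₁ − x₂ ≥ 0}, the intersection rec(Λ₁) ∩ rec(Λ₂) = {(x₁,x₂,0) | x₂ ≥ 0, x₁ − x₂ ≥ 0} is neither a face of rec(Λ₁) nor of rec(Λ₂). -/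
open Set Pointwise

variable {E : Type*} [NormedAddCommGroup E] [NormedSpace ℝ E]

/-- A rational polyhedron in `ℝⁿ`: cut out by finitely many halfspaces with
rational coefficients. -/
def IsRatPolyhedron {n : ℕ} (S : Set (Fin n → ℝ)) : Prop :=
  ∃ (m : ℕ) (a : Fin m → Fin n → ℚ) (b : Fin m → ℚ),
    S = {x | ∀ i, ∑ j, (a i j : ℝ) * x j ≤ (b i : ℝ)}

/-- A rational polyhedral cone in `ℝⁿ`: nonnegative combinations of finitely
many rational vectors. -/
def IsRatPolyCone {n : ℕ} (S : Set (Fin n → ℝ)) : Prop :=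
  ∃ F : Finset (Fin n → ℚ),
    S = {x | ∃ c : (Fin n → ℚ) → ℝ, (∀ v, 0 ≤ c v) ∧
          x = ∑ v ∈ F, c v • (fun j => (v j : ℝ))}

/-- A rational polyhedral cone in `ℝⁿ × ℝ`: nonnegative combinations of finitely
many rational vectors. -/
def IsRatPolyConeProd {n : ℕ} (S : Set ((Fin n → ℝ) × ℝ)) : Prop :=
  ∃ F : Finset ((Fin n → ℚ) × ℚ),
    S = {x | ∃ c : ((Fin n → ℚ) × ℚ) → ℝ, (∀ v, 0 ≤ c v) ∧
          x = ∑ v ∈ F, c v • (((fun j => (v.1 j : ℝ)) : Fin n → ℝ), (v.2 : ℝ))}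

section Aux

variable {E : Type*} [NormedAddCommGroup E] [NormedSpace ℝ E]

def myWedge (p v w : E) : Set E := {x | ∃ s t : ℝ, 0 ≤ s ∧ 0 ≤ t ∧ x = p + s • v + t • w}

def myRay (p d : E) : Set E := {x | ∃ s : ℝ, 0 ≤ s ∧ x = p + s • d}

lemma myFace_subset {F S : Set E} (h : IsFaceOf F S) : F ⊆ S := by
  obtain ⟨-, x, rfl⟩ := h; exact fun u hu => hu.1

lemma mySelf_face {S : Set E} (h : S.Nonempty) : IsFaceOf S S := by
  refine ⟨h, 0, ?_⟩
  ext u; simp [faceSet]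

lemma myPoint_faces (p : E) (F : Set E) : IsFaceOf F ({p} : Set E) ↔ F = {p} := by
  constructor
  · intro h
    rcases (Set.subset_singleton_iff_eq.mp (myFace_subset h)) with h' | h'
    · exact absurd h' h.1.ne_empty
    · exact h'
  · rintro rfl
    exact mySelf_face ⟨p, rfl⟩

lemma mem_myRay_self (p d : E) : p ∈ myRay p d := ⟨0, le_refl 0, by simp⟩

lemma myRay_faces (p d : E) (σ : E →ₗ[ℝ] ℝ) (hσ : σ d = 1) (F : Set E) :
    IsFaceOf F (myRay p d) ↔ F = myRay p d ∨ F = {p} := by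
  have hval : ∀ (ℓ : E →ₗ[ℝ] ℝ) (s : ℝ), ℓ (p + s • d) = ℓ p + s * ℓ d := by
    intro ℓ s; simp
  constructor
  · rintro ⟨hne, ℓ, rfl⟩
    have hd : 0 ≤ ℓ d := by
      by_contra hd
      push_neg at hd
      obtain ⟨u, ⟨s, hs, rfl⟩, humin⟩ := hne
      have h1 : p + (s + 1) • d ∈ myRay p d := ⟨s + 1, by linarith, rfl⟩
      have h2 := humin _ h1
      rw [hval, hval] at h2
      nlinarith
    rcases hd.eq_or_lt with hd | hd
    · left
      ext u
      simp only [faceSet, Set.mem_setOf_eq]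
      constructor
      · exact fun h => h.1
      · intro hu
        refine ⟨hu, ?_⟩
        obtain ⟨s, hs, rfl⟩ := hu
        rintro v ⟨s', hs', rfl⟩
        rw [hval, hval, ← hd]
        ring_nf
        exact le_refl _
    · right
      ext u
      simp only [faceSet, Set.mem_setOf_eq, Set.mem_singleton_iff]
      constructor
      · rintro ⟨⟨s, hs, rfl⟩, hmin⟩
        have h2 := hmin p (mem_myRay_self p d)
        rw [hval] at h2
        have hs0 : s = 0 := by nlinarith
        simp [hs0]
      · rintro rfl
        refine ⟨mem_myRay_self u d, ?_⟩
        rintro v ⟨s, hs, rfl⟩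
        rw [hval]
        nlinarith
  · rintro (rfl | rfl)
    · exact mySelf_face ⟨p, mem_myRay_self p d⟩
    · refine ⟨⟨p, rfl⟩, σ, ?_⟩
      ext u
      simp only [faceSet, Set.mem_setOf_eq, Set.mem_singleton_iff]
      constructor
      · rintro rfl
        refine ⟨mem_myRay_self u d, ?_⟩
        rintro v ⟨s, hs, rfl⟩
        rw [hval, hσ]
        linarith
      · rintro ⟨⟨s, hs, rfl⟩, hmin⟩
        have h2 := hmin p (mem_myRay_self p d)
        rw [hval, hσ] at h2
        have hs0 : s = 0 := by linarith
        simp [hs0]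

lemma mem_myWedge_self (p v w : E) : p ∈ myWedge p v w := ⟨0, 0, le_refl 0, le_refl 0, by simp⟩

lemma myRay_subset_myWedge_left (p v w : E) : myRay p v ⊆ myWedge p v w := by
  rintro x ⟨s, hs, rfl⟩; exact ⟨s, 0, hs, le_refl 0, by simp⟩

lemma myRay_subset_myWedge_right (p v w : E) : myRay p w ⊆ myWedge p v w := by
  rintro x ⟨t, ht, rfl⟩; exact ⟨0, t, le_refl 0, ht, by simp [add_assoc]⟩

lemma myWedge_faces (p v w : E) (σ τ : E →ₗ[ℝ] ℝ) (hσv : σ v = 1) (hσw : σ w = 0)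
    (hτv : τ v = 0) (hτw : τ w = 1) (F : Set E) :
    IsFaceOf F (myWedge p v w) ↔
      F = myWedge p v w ∨ F = myRay p v ∨ F = myRay p w ∨ F = {p} := by
  have hval : ∀ (ℓ : E →ₗ[ℝ] ℝ) (s t : ℝ),
      ℓ (p + s • v + t • w) = ℓ p + s * ℓ v + t * ℓ w := by
    intro ℓ s t; simp
  constructor
  · rintro ⟨hne, ℓ, rfl⟩
    have hv : 0 ≤ ℓ v := by
      by_contra h
      push_neg at h
      obtain ⟨u, ⟨s, t, hs, ht, rfl⟩, humin⟩ := hne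
      have h1 : p + (s + 1) • v + t • w ∈ myWedge p v w := ⟨s + 1, t, by linarith, ht, rfl⟩
      have h2 := humin _ h1
      rw [hval, hval] at h2
      nlinarith
    have hw : 0 ≤ ℓ w := by
      by_contra h
      push_neg at h
      obtain ⟨u, ⟨s, t, hs, ht, rfl⟩, humin⟩ := hne
      have h1 : p + s • v + (t + 1) • w ∈ myWedge p v w := ⟨s, t + 1, hs, by linarith, rfl⟩
      have h2 := humin _ h1
      rw [hval, hval] at h2
      nlinarith
    rcases hv.eq_or_lt with hv | hv <;> rcases hw.eq_or_lt with hw | hw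
    · -- ℓ v = 0, ℓ w = 0 : F = W
      left
      ext u
      simp only [faceSet, Set.mem_setOf_eq]
      constructor
      · exact fun h => h.1
      · intro hu
        refine ⟨hu, ?_⟩
        obtain ⟨s, t, hs, ht, rfl⟩ := hu
        rintro y ⟨s', t', hs', ht', rfl⟩
        rw [hval, hval, ← hv, ← hw]
        ring_nf
        exact le_refl _
    · -- ℓ v = 0, ℓ w > 0 : F = ray p v
      right; left
      ext u
      simp only [faceSet, Set.mem_setOf_eq, myRay]
      constructor
      · rintro ⟨⟨s, t, hs, ht, rfl⟩, hmin⟩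
        have h2 := hmin p (mem_myWedge_self p v w)
        rw [hval] at h2
        have ht0 : t = 0 := by nlinarith
        exact ⟨s, hs, by simp [ht0]⟩
      · rintro ⟨s, hs, rfl⟩
        refine ⟨⟨s, 0, hs, le_refl 0, by simp⟩, ?_⟩
        rintro y ⟨s', t', hs', ht', rfl⟩
        have e1 : (p + s • v : E) = p + s • v + (0:ℝ) • w := by simp
        rw [e1, hval, hval, ← hv]
        nlinarith
    · -- ℓ v > 0, ℓ w = 0 : F = ray p w
      right; right; left
      ext u
      simp only [faceSet, Set.mem_setOf_eq, myRay]
      constructor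
      · rintro ⟨⟨s, t, hs, ht, rfl⟩, hmin⟩
        have h2 := hmin p (mem_myWedge_self p v w)
        rw [hval] at h2
        have hs0 : s = 0 := by nlinarith
        exact ⟨t, ht, by simp [hs0, add_assoc]⟩
      · rintro ⟨t, ht, rfl⟩
        refine ⟨⟨0, t, le_refl 0, ht, by simp [add_assoc]⟩, ?_⟩
        rintro y ⟨s', t', hs', ht', rfl⟩
        have e1 : (p + t • w : E) = p + (0:ℝ) • v + t • w := by simp
        rw [e1, hval, hval, ← hw]
        nlinarith
    · -- ℓ v > 0, ℓ w > 0 : F = {p}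
      right; right; right
      ext u
      simp only [faceSet, Set.mem_setOf_eq, Set.mem_singleton_iff]
      constructor
      · rintro ⟨⟨s, t, hs, ht, rfl⟩, hmin⟩
        have h2 := hmin p (mem_myWedge_self p v w)
        rw [hval] at h2
        have hs0 : s = 0 := by nlinarith
        have ht0 : t = 0 := by nlinarith
        simp [hs0, ht0]
      · rintro rfl
        refine ⟨mem_myWedge_self u v w, ?_⟩
        rintro y ⟨s', t', hs', ht', rfl⟩
        rw [hval]
        nlinarith
  · rintro (rfl | rfl | rfl | rfl)
    · exact mySelf_face ⟨p, mem_myWedge_self p v w⟩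
    · refine ⟨⟨p, mem_myRay_self p v⟩, τ, ?_⟩
      ext u
      simp only [faceSet, Set.mem_setOf_eq, myRay]
      constructor
      · rintro ⟨s, hs, rfl⟩
        refine ⟨⟨s, 0, hs, le_refl 0, by simp⟩, ?_⟩
        rintro y ⟨s', t', hs', ht', rfl⟩
        have e1 : (p + s • v : E) = p + s • v + (0:ℝ) • w := by simp
        rw [e1, hval, hval, hτv, hτw]
        linarith
      · rintro ⟨⟨s, t, hs, ht, rfl⟩, hmin⟩
        have h2 := hmin p (mem_myWedge_self p v w)
        rw [hval, hτv, hτw] at h2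
        have ht0 : t = 0 := by linarith
        exact ⟨s, hs, by simp [ht0]⟩
    · refine ⟨⟨p, mem_myRay_self p w⟩, σ, ?_⟩
      ext u
      simp only [faceSet, Set.mem_setOf_eq, myRay]
      constructor
      · rintro ⟨t, ht, rfl⟩
        refine ⟨⟨0, t, le_refl 0, ht, by simp [add_assoc]⟩, ?_⟩
        rintro y ⟨s', t', hs', ht', rfl⟩
        have e1 : (p + t • w : E) = p + (0:ℝ) • v + t • w := by simp
        rw [e1, hval, hval, hσv, hσw]
        linarith
      · rintro ⟨⟨s, t, hs, ht, rfl⟩, hmin⟩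
        have h2 := hmin p (mem_myWedge_self p v w)
        rw [hval, hσv, hσw] at h2
        have hs0 : s = 0 := by linarith
        exact ⟨t, ht, by simp [hs0, add_assoc]⟩
    · refine ⟨⟨p, rfl⟩, σ + τ, ?_⟩
      ext u
      simp only [faceSet, Set.mem_setOf_eq, Set.mem_singleton_iff]
      constructor
      · rintro rfl
        refine ⟨mem_myWedge_self u v w, ?_⟩
        rintro y ⟨s', t', hs', ht', rfl⟩
        rw [hval]
        simp only [LinearMap.add_apply, hσv, hσw, hτv, hτw]
        linarith
      · rintro ⟨⟨s, t, hs, ht, rfl⟩, hmin⟩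
        have h2 := hmin p (mem_myWedge_self p v w)
        rw [hval] at h2
        simp only [LinearMap.add_apply, hσv, hσw, hτv, hτw] at h2
        have hs0 : s = 0 := by linarith
        have ht0 : t = 0 := by linarith
        simp [hs0, ht0]

end Aux

section Concrete

/-- Linear functional `(a,b,c)·x` on `ℝ³`. -/
def L3 (a b c : ℝ) : (Fin 3 → ℝ) →ₗ[ℝ] ℝ where
  toFun x := a * x 0 + b * x 1 + c * x 2
  map_add' x y := by simp [Pi.add_apply]; ring
  map_smul' m x := by simp [Pi.smul_apply, smul_eq_mul]; ring

@[simp] lemma L3_apply (a b c : ℝ) (x : Fin 3 → ℝ) :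
    L3 a b c x = a * x 0 + b * x 1 + c * x 2 := rfl

lemma eq3 {x y : Fin 3 → ℝ} (h0 : x 0 = y 0) (h1 : x 1 = y 1) (h2 : x 2 = y 2) : x = y := by
  funext i; fin_cases i <;> assumption

lemma eqL1 : {x : Fin 3 → ℝ | 0 ≤ x 0 ∧ 0 ≤ x 1 ∧ x 2 = 0} =
    myWedge (0 : Fin 3 → ℝ) ![1,0,0] ![0,1,0] := by
  ext x
  constructor
  · rintro ⟨h0, h1, h2⟩
    exact ⟨x 0, x 1, h0, h1, by apply eq3 <;> simp [h2]⟩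
  · rintro ⟨s, t, hs, ht, rfl⟩
    refine ⟨by simpa using hs, by simpa using ht, by simp⟩

lemma eqR1 : {x : Fin 3 → ℝ | 0 ≤ x 0 ∧ x 1 = 0 ∧ x 2 = 0} =
    myRay (0 : Fin 3 → ℝ) ![1,0,0] := by
  ext x
  constructor
  · rintro ⟨h0, h1, h2⟩
    exact ⟨x 0, h0, by apply eq3 <;> simp [h1, h2]⟩
  · rintro ⟨s, hs, rfl⟩
    refine ⟨by simpa using hs, by simp, by simp⟩

lemma eqR2 : {x : Fin 3 → ℝ | 0 ≤ x 1 ∧ x 0 = 0 ∧ x 2 = 0} =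
    myRay (0 : Fin 3 → ℝ) ![0,1,0] := by
  ext x
  constructor
  · rintro ⟨h1, h0, h2⟩
    exact ⟨x 1, h1, by apply eq3 <;> simp [h0, h2]⟩
  · rintro ⟨s, hs, rfl⟩
    refine ⟨by simpa using hs, by simp, by simp⟩

lemma eqL2 : {x : Fin 3 → ℝ | 0 ≤ x 0 + x 1 ∧ 0 ≤ x 0 - x 1 ∧ x 2 = 1} =
    myWedge ![0,0,1] ![1,1,0] ![1,-1,0] := by
  ext x
  constructor
  · rintro ⟨h0, h1, h2⟩
    refine ⟨(x 0 + x 1) / 2, (x 0 - x 1) / 2, by linarith, by linarith, ?_⟩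
    apply eq3 <;> simp [h2] <;> ring
  · rintro ⟨s, t, hs, ht, rfl⟩
    refine ⟨by simp; linarith, by simp; linarith, by simp⟩

lemma eqL2' : {x : Fin 3 → ℝ | 0 ≤ x 0 + x 1 ∧ 0 ≤ x 0 - x 1 ∧ x 2 = 0} =
    myWedge (0 : Fin 3 → ℝ) ![1,1,0] ![1,-1,0] := by
  ext x
  constructor
  · rintro ⟨h0, h1, h2⟩
    refine ⟨(x 0 + x 1) / 2, (x 0 - x 1) / 2, by linarith, by linarith, ?_⟩
    apply eq3 <;> simp [h2] <;> ring
  · rintro ⟨s, t, hs, ht, rfl⟩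
    refine ⟨by simp; linarith, by simp; linarith, by simp⟩

lemma eqS1 : {x : Fin 3 → ℝ | 0 ≤ x 0 ∧ x 1 = x 0 ∧ x 2 = 1} =
    myRay ![0,0,1] ![1,1,0] := by
  ext x
  constructor
  · rintro ⟨h0, h1, h2⟩
    exact ⟨x 0, h0, by apply eq3 <;> simp [h1, h2]⟩
  · rintro ⟨s, hs, rfl⟩
    refine ⟨by simpa using hs, by simp, by simp⟩

lemma eqS2 : {x : Fin 3 → ℝ | 0 ≤ x 0 ∧ x 1 = -x 0 ∧ x 2 = 1} =
    myRay ![0,0,1] ![1,-1,0] := by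
  ext x
  constructor
  · rintro ⟨h0, h1, h2⟩
    exact ⟨x 0, h0, by apply eq3 <;> simp [h1, h2]⟩
  · rintro ⟨s, hs, rfl⟩
    refine ⟨by simpa using hs, by simp, by simp⟩

lemma eqT1 : {x : Fin 3 → ℝ | 0 ≤ x 0 ∧ x 1 = x 0 ∧ x 2 = 0} =
    myRay (0 : Fin 3 → ℝ) ![1,1,0] := by
  ext x
  constructor
  · rintro ⟨h0, h1, h2⟩
    exact ⟨x 0, h0, by apply eq3 <;> simp [h1, h2]⟩
  · rintro ⟨s, hs, rfl⟩
    refine ⟨by simpa using hs, by simp, by simp⟩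

lemma eqT2 : {x : Fin 3 → ℝ | 0 ≤ x 0 ∧ x 1 = -x 0 ∧ x 2 = 0} =
    myRay (0 : Fin 3 → ℝ) ![1,-1,0] := by
  ext x
  constructor
  · rintro ⟨h0, h1, h2⟩
    exact ⟨x 0, h0, by apply eq3 <;> simp [h1, h2]⟩
  · rintro ⟨s, hs, rfl⟩
    refine ⟨by simpa using hs, by simp, by simp⟩

end Concrete

section Char

lemma faceL1 (F : Set (Fin 3 → ℝ)) :
    IsFaceOf F {x : Fin 3 → ℝ | 0 ≤ x 0 ∧ 0 ≤ x 1 ∧ x 2 = 0} ↔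
      F = {x : Fin 3 → ℝ | 0 ≤ x 0 ∧ 0 ≤ x 1 ∧ x 2 = 0} ∨
      F = {x : Fin 3 → ℝ | 0 ≤ x 0 ∧ x 1 = 0 ∧ x 2 = 0} ∨
      F = {x : Fin 3 → ℝ | 0 ≤ x 1 ∧ x 0 = 0 ∧ x 2 = 0} ∨
      F = ({0} : Set (Fin 3 → ℝ)) := by
  rw [eqL1, eqR1, eqR2]
  exact myWedge_faces _ _ _ (L3 1 0 0) (L3 0 1 0) (by simp) (by simp) (by simp) (by simp) F

lemma faceL2 (F : Set (Fin 3 → ℝ)) :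
    IsFaceOf F {x : Fin 3 → ℝ | 0 ≤ x 0 + x 1 ∧ 0 ≤ x 0 - x 1 ∧ x 2 = 1} ↔
      F = {x : Fin 3 → ℝ | 0 ≤ x 0 + x 1 ∧ 0 ≤ x 0 - x 1 ∧ x 2 = 1} ∨
      F = {x : Fin 3 → ℝ | 0 ≤ x 0 ∧ x 1 = x 0 ∧ x 2 = 1} ∨
      F = {x : Fin 3 → ℝ | 0 ≤ x 0 ∧ x 1 = -x 0 ∧ x 2 = 1} ∨
      F = ({![0,0,1]} : Set (Fin 3 → ℝ)) := by
  rw [eqL2, eqS1, eqS2]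
  exact myWedge_faces _ _ _ (L3 (1/2) (1/2) 0) (L3 (1/2) (-(1/2)) 0)
    (by norm_num) (by norm_num) (by norm_num) (by norm_num) F

lemma faceL2' (F : Set (Fin 3 → ℝ)) :
    IsFaceOf F {x : Fin 3 → ℝ | 0 ≤ x 0 + x 1 ∧ 0 ≤ x 0 - x 1 ∧ x 2 = 0} ↔
      F = {x : Fin 3 → ℝ | 0 ≤ x 0 + x 1 ∧ 0 ≤ x 0 - x 1 ∧ x 2 = 0} ∨
      F = {x : Fin 3 → ℝ | 0 ≤ x 0 ∧ x 1 = x 0 ∧ x 2 = 0} ∨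
      F = {x : Fin 3 → ℝ | 0 ≤ x 0 ∧ x 1 = -x 0 ∧ x 2 = 0} ∨
      F = ({0} : Set (Fin 3 → ℝ)) := by
  rw [eqL2', eqT1, eqT2]
  exact myWedge_faces _ _ _ (L3 (1/2) (1/2) 0) (L3 (1/2) (-(1/2)) 0)
    (by norm_num) (by norm_num) (by norm_num) (by norm_num) F

lemma faceR1 (F : Set (Fin 3 → ℝ)) :
    IsFaceOf F {x : Fin 3 → ℝ | 0 ≤ x 0 ∧ x 1 = 0 ∧ x 2 = 0} ↔
      F = {x : Fin 3 → ℝ | 0 ≤ x 0 ∧ x 1 = 0 ∧ x 2 = 0} ∨ F = ({0} : Set (Fin 3 → ℝ)) := by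
  rw [eqR1]
  exact myRay_faces _ _ (L3 1 0 0) (by simp) F

lemma faceR2 (F : Set (Fin 3 → ℝ)) :
    IsFaceOf F {x : Fin 3 → ℝ | 0 ≤ x 1 ∧ x 0 = 0 ∧ x 2 = 0} ↔
      F = {x : Fin 3 → ℝ | 0 ≤ x 1 ∧ x 0 = 0 ∧ x 2 = 0} ∨ F = ({0} : Set (Fin 3 → ℝ)) := by
  rw [eqR2]
  exact myRay_faces _ _ (L3 0 1 0) (by simp) F

lemma faceS1 (F : Set (Fin 3 → ℝ)) :
    IsFaceOf F {x : Fin 3 → ℝ | 0 ≤ x 0 ∧ x 1 = x 0 ∧ x 2 = 1} ↔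
      F = {x : Fin 3 → ℝ | 0 ≤ x 0 ∧ x 1 = x 0 ∧ x 2 = 1} ∨
      F = ({![0,0,1]} : Set (Fin 3 → ℝ)) := by
  rw [eqS1]
  exact myRay_faces _ _ (L3 (1/2) (1/2) 0) (by norm_num) F

lemma faceS2 (F : Set (Fin 3 → ℝ)) :
    IsFaceOf F {x : Fin 3 → ℝ | 0 ≤ x 0 ∧ x 1 = -x 0 ∧ x 2 = 1} ↔
      F = {x : Fin 3 → ℝ | 0 ≤ x 0 ∧ x 1 = -x 0 ∧ x 2 = 1} ∨
      F = ({![0,0,1]} : Set (Fin 3 → ℝ)) := by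
  rw [eqS2]
  exact myRay_faces _ _ (L3 (1/2) (-(1/2)) 0) (by norm_num) F

end Char

section Rat

lemma isPolyhedron_of_rat {n : ℕ} {S : Set (Fin n → ℝ)} (h : IsRatPolyhedron S) :
    IsPolyhedron S := by
  obtain ⟨m, a, b, rfl⟩ := h
  refine ⟨m, fun i => ∑ j, (a i j : ℝ) • LinearMap.proj j, fun i => (b i : ℝ), ?_⟩
  ext x
  simp [LinearMap.sum_apply, LinearMap.smul_apply, LinearMap.proj_apply, smul_eq_mul]

lemma ratL1 : IsRatPolyhedron {x : Fin 3 → ℝ | 0 ≤ x 0 ∧ 0 ≤ x 1 ∧ x 2 = 0} := by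
  refine ⟨4, ![![-1,0,0],![0,-1,0],![0,0,1],![0,0,-1]], ![0,0,0,0], ?_⟩
  ext x
  constructor
  · rintro ⟨h0, h1, h2⟩ i
    fin_cases i <;> simp [Fin.sum_univ_three] <;> linarith
  · intro h
    have h0 := h 0; have h1 := h 1; have h2 := h 2; have h3 := h 3
    simp [Fin.sum_univ_three] at h0 h1 h2 h3
    exact ⟨by linarith, by linarith, by linarith⟩

lemma ratS1 : IsRatPolyhedron {x : Fin 3 → ℝ | 0 ≤ x 0 ∧ x 1 = x 0 ∧ x 2 = 1} := by
  refine ⟨5, ![![-1,0,0],![1,-1,0],![-1,1,0],![0,0,1],![0,0,-1]], ![0,0,0,1,-1], ?_⟩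
  ext x
  constructor
  · rintro ⟨h0, h1, h2⟩ i
    fin_cases i <;> simp [Fin.sum_univ_three] <;> linarith
  · intro h
    have h0 := h 0; have h1 := h 1; have h2 := h 2; have h3 := h 3; have h4 := h 4
    simp [Fin.sum_univ_three] at h0 h1 h2 h3 h4
    exact ⟨by linarith, by linarith, by linarith⟩

lemma ratL2 : IsRatPolyhedron {x : Fin 3 → ℝ | 0 ≤ x 0 + x 1 ∧ 0 ≤ x 0 - x 1 ∧ x 2 = 1} := by
  refine ⟨4, ![![-1,-1,0],![-1,1,0],![0,0,1],![0,0,-1]], ![0,0,1,-1], ?_⟩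
  ext x
  constructor
  · rintro ⟨h0, h1, h2⟩ i
    fin_cases i <;> simp [Fin.sum_univ_three] <;> linarith
  · intro h
    have h0 := h 0; have h1 := h 1; have h2 := h 2; have h3 := h 3
    simp [Fin.sum_univ_three] at h0 h1 h2 h3
    exact ⟨by linarith, by linarith, by linarith⟩

lemma ratR1 : IsRatPolyhedron {x : Fin 3 → ℝ | 0 ≤ x 0 ∧ x 1 = 0 ∧ x 2 = 0} := by
  refine ⟨5, ![![-1,0,0],![0,1,0],![0,-1,0],![0,0,1],![0,0,-1]], ![0,0,0,0,0], ?_⟩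
  ext x
  constructor
  · rintro ⟨h0, h1, h2⟩ i
    fin_cases i <;> simp [Fin.sum_univ_three] <;> linarith
  · intro h
    have h0 := h 0; have h1 := h 1; have h2 := h 2; have h3 := h 3; have h4 := h 4
    simp [Fin.sum_univ_three] at h0 h1 h2 h3 h4
    exact ⟨by linarith, by linarith, by linarith⟩

lemma ratR2 : IsRatPolyhedron {x : Fin 3 → ℝ | 0 ≤ x 1 ∧ x 0 = 0 ∧ x 2 = 0} := by
  refine ⟨5, ![![0,-1,0],![1,0,0],![-1,0,0],![0,0,1],![0,0,-1]], ![0,0,0,0,0], ?_⟩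
  ext x
  constructor
  · rintro ⟨h0, h1, h2⟩ i
    fin_cases i <;> simp [Fin.sum_univ_three] <;> linarith
  · intro h
    have h0 := h 0; have h1 := h 1; have h2 := h 2; have h3 := h 3; have h4 := h 4
    simp [Fin.sum_univ_three] at h0 h1 h2 h3 h4
    exact ⟨by linarith, by linarith, by linarith⟩

lemma ratS2 : IsRatPolyhedron {x : Fin 3 → ℝ | 0 ≤ x 0 ∧ x 1 = -x 0 ∧ x 2 = 1} := by
  refine ⟨5, ![![-1,0,0],![1,1,0],![-1,-1,0],![0,0,1],![0,0,-1]], ![0,0,0,1,-1], ?_⟩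
  ext x
  constructor
  · rintro ⟨h0, h1, h2⟩ i
    fin_cases i <;> simp [Fin.sum_univ_three] <;> linarith
  · intro h
    have h0 := h 0; have h1 := h 1; have h2 := h 2; have h3 := h 3; have h4 := h 4
    simp [Fin.sum_univ_three] at h0 h1 h2 h3 h4
    exact ⟨by linarith, by linarith, by linarith⟩

lemma eqO1 : ({0} : Set (Fin 3 → ℝ)) = {x : Fin 3 → ℝ | x 0 = 0 ∧ x 1 = 0 ∧ x 2 = 0} := by
  ext x
  simp only [Set.mem_singleton_iff, Set.mem_setOf_eq]
  constructor
  · rintro rfl; simp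
  · rintro ⟨h0, h1, h2⟩; apply eq3 <;> simp [h0, h1, h2]

lemma eqO2 : ({![0,0,1]} : Set (Fin 3 → ℝ)) = {x : Fin 3 → ℝ | x 0 = 0 ∧ x 1 = 0 ∧ x 2 = 1} := by
  ext x
  simp only [Set.mem_singleton_iff, Set.mem_setOf_eq]
  constructor
  · rintro rfl; simp
  · rintro ⟨h0, h1, h2⟩; apply eq3 <;> simp [h0, h1, h2]

lemma ratO1 : IsRatPolyhedron ({0} : Set (Fin 3 → ℝ)) := by
  rw [eqO1]
  refine ⟨4, ![![1,0,0],![0,1,0],![0,0,1],![-1,-1,-1]], ![0,0,0,0], ?_⟩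
  ext x
  constructor
  · rintro ⟨h0, h1, h2⟩ i
    fin_cases i <;> simp [Fin.sum_univ_three] <;> linarith
  · intro h
    have h0 := h 0; have h1 := h 1; have h2 := h 2; have h3 := h 3
    simp [Fin.sum_univ_three] at h0 h1 h2 h3
    exact ⟨by linarith, by linarith, by linarith⟩

lemma ratO2 : IsRatPolyhedron ({![0,0,1]} : Set (Fin 3 → ℝ)) := by
  rw [eqO2]
  refine ⟨4, ![![1,0,0],![0,1,0],![0,0,1],![-1,-1,-1]], ![0,0,1,-1], ?_⟩
  ext x
  constructor
  · rintro ⟨h0, h1, h2⟩ i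
    fin_cases i <;> simp [Fin.sum_univ_three] <;> linarith
  · intro h
    have h0 := h 0; have h1 := h 1; have h2 := h 2; have h3 := h 3
    simp [Fin.sum_univ_three] at h0 h1 h2 h3
    exact ⟨by linarith, by linarith, by linarith⟩

end Rat

section SC

lemma sc_subset {E : Type*} [NormedAddCommGroup E] [NormedSpace ℝ E] {S T : Set E}
    (h : S ⊆ T) (hT : StronglyConvexSet T) : StronglyConvexSet S := by
  rintro ⟨p, d, hd, hl⟩
  exact hT ⟨p, d, hd, fun t => h (hl t)⟩

lemma line_coord {p d : ℝ} (h : ∀ t : ℝ, 0 ≤ p + t * d) : d = 0 := by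
  by_contra hd
  have h1 := h ((-p - 1) / d)
  rw [div_mul_cancel₀ _ hd] at h1
  linarith

lemma line_coord_const {p d c : ℝ} (h : ∀ t : ℝ, p + t * d = c) : d = 0 := by
  have h0 := h 0
  have h1 := h 1
  simp at h0 h1
  linarith

lemma scL1 : StronglyConvexSet {x : Fin 3 → ℝ | 0 ≤ x 0 ∧ 0 ≤ x 1 ∧ x 2 = 0} := by
  rintro ⟨p, d, hd, hl⟩
  have key : ∀ i, (∀ t : ℝ, (p + t • d) i = p i + t * d i) := by
    intro i t; simp
  have h0 : d 0 = 0 := line_coord fun t => by have := (hl t).1; rw [key 0 t] at this; exact this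
  have h1 : d 1 = 0 := line_coord fun t => by have := (hl t).2.1; rw [key 1 t] at this; exact this
  have h2 : d 2 = 0 := line_coord_const fun t => by
    have := (hl t).2.2; rw [key 2 t] at this; exact this
  exact hd (by apply eq3 <;> simp [h0, h1, h2])

lemma scL2 : StronglyConvexSet {x : Fin 3 → ℝ | 0 ≤ x 0 + x 1 ∧ 0 ≤ x 0 - x 1 ∧ x 2 = 1} := by
  rintro ⟨p, d, hd, hl⟩
  have key : ∀ i, (∀ t : ℝ, (p + t • d) i = p i + t * d i) := by
    intro i t; simp
  have h0 : d 0 + d 1 = 0 := by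
    apply line_coord (p := p 0 + p 1)
    intro t
    have := (hl t).1
    rw [key 0 t, key 1 t] at this
    linarith
  have h1 : d 0 - d 1 = 0 := by
    apply line_coord (p := p 0 - p 1)
    intro t
    have := (hl t).2.1
    rw [key 0 t, key 1 t] at this
    linarith
  have h2 : d 2 = 0 := line_coord_const (c := 1) fun t => by
    have := (hl t).2.2; rw [key 2 t] at this; exact this
  exact hd (by apply eq3 <;> simp <;> linarith)

end SC

section Rec

lemma recL1 : recPoly {x : Fin 3 → ℝ | 0 ≤ x 0 ∧ 0 ≤ x 1 ∧ x 2 = 0} =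
    {x : Fin 3 → ℝ | 0 ≤ x 0 ∧ 0 ≤ x 1 ∧ x 2 = 0} := by
  ext u
  constructor
  · intro h
    have h0 := h 0 ⟨le_refl 0, le_refl 0, rfl⟩
    simpa using h0
  · rintro ⟨h0, h1, h2⟩ x ⟨hx0, hx1, hx2⟩
    refine ⟨?_, ?_, ?_⟩ <;> simp [hx2, h2] <;> linarith

lemma recL2 : recPoly {x : Fin 3 → ℝ | 0 ≤ x 0 + x 1 ∧ 0 ≤ x 0 - x 1 ∧ x 2 = 1} =
    {x : Fin 3 → ℝ | 0 ≤ x 0 + x 1 ∧ 0 ≤ x 0 - x 1 ∧ x 2 = 0} := by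
  ext u
  constructor
  · intro h
    have hm : (![0,0,1] : Fin 3 → ℝ) ∈ {x : Fin 3 → ℝ | 0 ≤ x 0 + x 1 ∧ 0 ≤ x 0 - x 1 ∧ x 2 = 1} := by
      refine ⟨by simp, by simp, by simp⟩
    have h0 := h _ hm
    obtain ⟨a, b, c⟩ := h0
    simp at a b c
    exact ⟨by linarith, by linarith, by linarith⟩
  · rintro ⟨h0, h1, h2⟩ x ⟨hx0, hx1, hx2⟩
    refine ⟨?_, ?_, ?_⟩ <;> simp [hx2, h2] <;> linarith

end Rec

section Main

lemma pairFace {S T X : Set (Fin 3 → ℝ)} (h : S ∩ T = X) (h1 : IsFaceOf X S)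
    (h2 : IsFaceOf X T) : IsFaceOf (S ∩ T) S ∧ IsFaceOf (S ∩ T) T := by
  rw [h]; exact ⟨h1, h2⟩

-- nonempty facts
lemma neL1 : ({x : Fin 3 → ℝ | 0 ≤ x 0 ∧ 0 ≤ x 1 ∧ x 2 = 0}).Nonempty := ⟨0, by refine ⟨?_, ?_, ?_⟩ <;> simp⟩
lemma neR1 : ({x : Fin 3 → ℝ | 0 ≤ x 0 ∧ x 1 = 0 ∧ x 2 = 0}).Nonempty := ⟨0, by refine ⟨?_, ?_, ?_⟩ <;> simp⟩
lemma neR2 : ({x : Fin 3 → ℝ | 0 ≤ x 1 ∧ x 0 = 0 ∧ x 2 = 0}).Nonempty := ⟨0, by refine ⟨?_, ?_, ?_⟩ <;> simp⟩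
lemma neO1 : (({0} : Set (Fin 3 → ℝ))).Nonempty := ⟨0, rfl⟩
lemma neL2 : ({x : Fin 3 → ℝ | 0 ≤ x 0 + x 1 ∧ 0 ≤ x 0 - x 1 ∧ x 2 = 1}).Nonempty := ⟨![0,0,1], by refine ⟨?_, ?_, ?_⟩ <;> simp⟩
lemma neS1 : ({x : Fin 3 → ℝ | 0 ≤ x 0 ∧ x 1 = x 0 ∧ x 2 = 1}).Nonempty := ⟨![0,0,1], by refine ⟨?_, ?_, ?_⟩ <;> simp⟩
lemma neS2 : ({x : Fin 3 → ℝ | 0 ≤ x 0 ∧ x 1 = -x 0 ∧ x 2 = 1}).Nonempty := ⟨![0,0,1], by refine ⟨?_, ?_, ?_⟩ <;> simp⟩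
lemma neO2 : (({![0,0,1]} : Set (Fin 3 → ℝ))).Nonempty := ⟨![0,0,1], rfl⟩

-- face facts
lemma fL1L1 : IsFaceOf ({x : Fin 3 → ℝ | 0 ≤ x 0 ∧ 0 ≤ x 1 ∧ x 2 = 0}) ({x : Fin 3 → ℝ | 0 ≤ x 0 ∧ 0 ≤ x 1 ∧ x 2 = 0}) := (faceL1 _).mpr (Or.inl rfl)
lemma fR1L1 : IsFaceOf ({x : Fin 3 → ℝ | 0 ≤ x 0 ∧ x 1 = 0 ∧ x 2 = 0}) ({x : Fin 3 → ℝ | 0 ≤ x 0 ∧ 0 ≤ x 1 ∧ x 2 = 0}) := (faceL1 _).mpr (Or.inr (Or.inl rfl))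
lemma fR2L1 : IsFaceOf ({x : Fin 3 → ℝ | 0 ≤ x 1 ∧ x 0 = 0 ∧ x 2 = 0}) ({x : Fin 3 → ℝ | 0 ≤ x 0 ∧ 0 ≤ x 1 ∧ x 2 = 0}) := (faceL1 _).mpr (Or.inr (Or.inr (Or.inl rfl)))
lemma fO1L1 : IsFaceOf (({0} : Set (Fin 3 → ℝ))) ({x : Fin 3 → ℝ | 0 ≤ x 0 ∧ 0 ≤ x 1 ∧ x 2 = 0}) := (faceL1 _).mpr (Or.inr (Or.inr (Or.inr rfl)))
lemma fR1R1 : IsFaceOf ({x : Fin 3 → ℝ | 0 ≤ x 0 ∧ x 1 = 0 ∧ x 2 = 0}) ({x : Fin 3 → ℝ | 0 ≤ x 0 ∧ x 1 = 0 ∧ x 2 = 0}) := (faceR1 _).mpr (Or.inl rfl)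
lemma fO1R1 : IsFaceOf (({0} : Set (Fin 3 → ℝ))) ({x : Fin 3 → ℝ | 0 ≤ x 0 ∧ x 1 = 0 ∧ x 2 = 0}) := (faceR1 _).mpr (Or.inr rfl)
lemma fR2R2 : IsFaceOf ({x : Fin 3 → ℝ | 0 ≤ x 1 ∧ x 0 = 0 ∧ x 2 = 0}) ({x : Fin 3 → ℝ | 0 ≤ x 1 ∧ x 0 = 0 ∧ x 2 = 0}) := (faceR2 _).mpr (Or.inl rfl)
lemma fO1R2 : IsFaceOf (({0} : Set (Fin 3 → ℝ))) ({x : Fin 3 → ℝ | 0 ≤ x 1 ∧ x 0 = 0 ∧ x 2 = 0}) := (faceR2 _).mpr (Or.inr rfl)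
lemma fO1O1 : IsFaceOf (({0} : Set (Fin 3 → ℝ))) (({0} : Set (Fin 3 → ℝ))) := (myPoint_faces _ _).mpr rfl
lemma fL2L2 : IsFaceOf ({x : Fin 3 → ℝ | 0 ≤ x 0 + x 1 ∧ 0 ≤ x 0 - x 1 ∧ x 2 = 1}) ({x : Fin 3 → ℝ | 0 ≤ x 0 + x 1 ∧ 0 ≤ x 0 - x 1 ∧ x 2 = 1}) := (faceL2 _).mpr (Or.inl rfl)
lemma fS1L2 : IsFaceOf ({x : Fin 3 → ℝ | 0 ≤ x 0 ∧ x 1 = x 0 ∧ x 2 = 1}) ({x : Fin 3 → ℝ | 0 ≤ x 0 + x 1 ∧ 0 ≤ x 0 - x 1 ∧ x 2 = 1}) := (faceL2 _).mpr (Or.inr (Or.inl rfl))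
lemma fS2L2 : IsFaceOf ({x : Fin 3 → ℝ | 0 ≤ x 0 ∧ x 1 = -x 0 ∧ x 2 = 1}) ({x : Fin 3 → ℝ | 0 ≤ x 0 + x 1 ∧ 0 ≤ x 0 - x 1 ∧ x 2 = 1}) := (faceL2 _).mpr (Or.inr (Or.inr (Or.inl rfl)))
lemma fO2L2 : IsFaceOf (({![0,0,1]} : Set (Fin 3 → ℝ))) ({x : Fin 3 → ℝ | 0 ≤ x 0 + x 1 ∧ 0 ≤ x 0 - x 1 ∧ x 2 = 1}) := (faceL2 _).mpr (Or.inr (Or.inr (Or.inr rfl)))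
lemma fS1S1 : IsFaceOf ({x : Fin 3 → ℝ | 0 ≤ x 0 ∧ x 1 = x 0 ∧ x 2 = 1}) ({x : Fin 3 → ℝ | 0 ≤ x 0 ∧ x 1 = x 0 ∧ x 2 = 1}) := (faceS1 _).mpr (Or.inl rfl)
lemma fO2S1 : IsFaceOf (({![0,0,1]} : Set (Fin 3 → ℝ))) ({x : Fin 3 → ℝ | 0 ≤ x 0 ∧ x 1 = x 0 ∧ x 2 = 1}) := (faceS1 _).mpr (Or.inr rfl)
lemma fS2S2 : IsFaceOf ({x : Fin 3 → ℝ | 0 ≤ x 0 ∧ x 1 = -x 0 ∧ x 2 = 1}) ({x : Fin 3 → ℝ | 0 ≤ x 0 ∧ x 1 = -x 0 ∧ x 2 = 1}) := (faceS2 _).mpr (Or.inl rfl)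
lemma fO2S2 : IsFaceOf (({![0,0,1]} : Set (Fin 3 → ℝ))) ({x : Fin 3 → ℝ | 0 ≤ x 0 ∧ x 1 = -x 0 ∧ x 2 = 1}) := (faceS2 _).mpr (Or.inr rfl)
lemma fO2O2 : IsFaceOf (({![0,0,1]} : Set (Fin 3 → ℝ))) (({![0,0,1]} : Set (Fin 3 → ℝ))) := (myPoint_faces _ _).mpr rfl

-- subset facts
lemma subR1L1 : ({x : Fin 3 → ℝ | 0 ≤ x 0 ∧ x 1 = 0 ∧ x 2 = 0}) ⊆ ({x : Fin 3 → ℝ | 0 ≤ x 0 ∧ 0 ≤ x 1 ∧ x 2 = 0}) := by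
  rintro x ⟨h0, h1, h2⟩; exact ⟨h0, le_of_eq h1.symm, h2⟩
lemma subR2L1 : ({x : Fin 3 → ℝ | 0 ≤ x 1 ∧ x 0 = 0 ∧ x 2 = 0}) ⊆ ({x : Fin 3 → ℝ | 0 ≤ x 0 ∧ 0 ≤ x 1 ∧ x 2 = 0}) := by
  rintro x ⟨h1, h0, h2⟩; exact ⟨le_of_eq h0.symm, h1, h2⟩
lemma subO1L1 : (({0} : Set (Fin 3 → ℝ))) ⊆ ({x : Fin 3 → ℝ | 0 ≤ x 0 ∧ 0 ≤ x 1 ∧ x 2 = 0}) := by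
  rintro x rfl; exact ⟨le_refl _, le_refl _, rfl⟩
lemma subO1R1 : (({0} : Set (Fin 3 → ℝ))) ⊆ ({x : Fin 3 → ℝ | 0 ≤ x 0 ∧ x 1 = 0 ∧ x 2 = 0}) := by
  rintro x rfl; exact ⟨le_refl _, rfl, rfl⟩
lemma subO1R2 : (({0} : Set (Fin 3 → ℝ))) ⊆ ({x : Fin 3 → ℝ | 0 ≤ x 1 ∧ x 0 = 0 ∧ x 2 = 0}) := by
  rintro x rfl; exact ⟨le_refl _, rfl, rfl⟩
lemma subS1L2 : ({x : Fin 3 → ℝ | 0 ≤ x 0 ∧ x 1 = x 0 ∧ x 2 = 1}) ⊆ ({x : Fin 3 → ℝ | 0 ≤ x 0 + x 1 ∧ 0 ≤ x 0 - x 1 ∧ x 2 = 1}) := by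
  rintro x ⟨h0, h1, h2⟩; refine ⟨by linarith, by linarith, h2⟩
lemma subS2L2 : ({x : Fin 3 → ℝ | 0 ≤ x 0 ∧ x 1 = -x 0 ∧ x 2 = 1}) ⊆ ({x : Fin 3 → ℝ | 0 ≤ x 0 + x 1 ∧ 0 ≤ x 0 - x 1 ∧ x 2 = 1}) := by
  rintro x ⟨h0, h1, h2⟩; refine ⟨by linarith, by linarith, h2⟩
lemma subO2L2 : (({![0,0,1]} : Set (Fin 3 → ℝ))) ⊆ ({x : Fin 3 → ℝ | 0 ≤ x 0 + x 1 ∧ 0 ≤ x 0 - x 1 ∧ x 2 = 1}) := by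
  rintro x rfl; refine ⟨by simp, by simp, by simp⟩
lemma subO2S1 : (({![0,0,1]} : Set (Fin 3 → ℝ))) ⊆ ({x : Fin 3 → ℝ | 0 ≤ x 0 ∧ x 1 = x 0 ∧ x 2 = 1}) := by
  rintro x rfl; refine ⟨by simp, by simp, by simp⟩
lemma subO2S2 : (({![0,0,1]} : Set (Fin 3 → ℝ))) ⊆ ({x : Fin 3 → ℝ | 0 ≤ x 0 ∧ x 1 = -x 0 ∧ x 2 = 1}) := by
  rintro x rfl; refine ⟨by simp, by simp, by simp⟩

-- intersection facts
lemma iR1R2 : ({x : Fin 3 → ℝ | 0 ≤ x 0 ∧ x 1 = 0 ∧ x 2 = 0}) ∩ ({x : Fin 3 → ℝ | 0 ≤ x 1 ∧ x 0 = 0 ∧ x 2 = 0}) = (({0} : Set (Fin 3 → ℝ))) := by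
  rw [eqO1]
  ext x
  simp only [Set.mem_inter_iff, Set.mem_setOf_eq]
  constructor
  · rintro ⟨⟨a0, a1, a2⟩, ⟨b1, b0, b2⟩⟩; exact ⟨b0, a1, a2⟩
  · rintro ⟨h0, h1, h2⟩
    refine ⟨⟨?_, ?_, ?_⟩, ⟨?_, ?_, ?_⟩⟩ <;> simp [h0, h1, h2]
lemma iS1S2 : ({x : Fin 3 → ℝ | 0 ≤ x 0 ∧ x 1 = x 0 ∧ x 2 = 1}) ∩ ({x : Fin 3 → ℝ | 0 ≤ x 0 ∧ x 1 = -x 0 ∧ x 2 = 1}) = (({![0,0,1]} : Set (Fin 3 → ℝ))) := by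
  rw [eqO2]
  ext x
  simp only [Set.mem_inter_iff, Set.mem_setOf_eq]
  constructor
  · rintro ⟨⟨a0, a1, a2⟩, ⟨b0, b1, b2⟩⟩
    refine ⟨by linarith, by linarith, a2⟩
  · rintro ⟨h0, h1, h2⟩
    refine ⟨⟨?_, ?_, ?_⟩, ⟨?_, ?_, ?_⟩⟩ <;> simp [h0, h1, h2]

lemma mainComplex : IsPolyComplex ({S : Set (Fin 3 → ℝ) | IsFaceOf S {x : Fin 3 → ℝ | 0 ≤ x 0 ∧ 0 ≤ x 1 ∧ x 2 = 0} ∨ IsFaceOf S {x : Fin 3 → ℝ | 0 ≤ x 0 + x 1 ∧ 0 ≤ x 0 - x 1 ∧ x 2 = 1}}) := by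
  refine ⟨⟨{x : Fin 3 → ℝ | 0 ≤ x 0 ∧ 0 ≤ x 1 ∧ x 2 = 0}, Or.inl fL1L1⟩, ?_, ?_, ?_, ?_⟩
  · -- finiteness
    apply Set.Finite.subset (s := {{x : Fin 3 → ℝ | 0 ≤ x 0 ∧ 0 ≤ x 1 ∧ x 2 = 0}, {x : Fin 3 → ℝ | 0 ≤ x 0 ∧ x 1 = 0 ∧ x 2 = 0}, {x : Fin 3 → ℝ | 0 ≤ x 1 ∧ x 0 = 0 ∧ x 2 = 0}, ({0} : Set (Fin 3 → ℝ)), {x : Fin 3 → ℝ | 0 ≤ x 0 + x 1 ∧ 0 ≤ x 0 - x 1 ∧ x 2 = 1}, {x : Fin 3 → ℝ | 0 ≤ x 0 ∧ x 1 = x 0 ∧ x 2 = 1}, {x : Fin 3 → ℝ | 0 ≤ x 0 ∧ x 1 = -x 0 ∧ x 2 = 1}, ({![0,0,1]} : Set (Fin 3 → ℝ))})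
    · exact Set.Finite.insert _ (Set.Finite.insert _ (Set.Finite.insert _
        (Set.Finite.insert _ (Set.Finite.insert _ (Set.Finite.insert _
        (Set.Finite.insert _ (Set.finite_singleton _)))))))
    · rintro S (h | h)
      · rcases (faceL1 S).mp h with rfl | rfl | rfl | rfl <;> simp
      · rcases (faceL2 S).mp h with rfl | rfl | rfl | rfl <;> simp
  · -- polyhedron and nonempty
    rintro S (h | h)
    · rcases (faceL1 S).mp h with rfl | rfl | rfl | rfl
      · exact ⟨isPolyhedron_of_rat ratL1, neL1⟩
      · exact ⟨isPolyhedron_of_rat ratR1, neR1⟩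
      · exact ⟨isPolyhedron_of_rat ratR2, neR2⟩
      · exact ⟨isPolyhedron_of_rat ratO1, neO1⟩
    · rcases (faceL2 S).mp h with rfl | rfl | rfl | rfl
      · exact ⟨isPolyhedron_of_rat ratL2, neL2⟩
      · exact ⟨isPolyhedron_of_rat ratS1, neS1⟩
      · exact ⟨isPolyhedron_of_rat ratS2, neS2⟩
      · exact ⟨isPolyhedron_of_rat ratO2, neO2⟩
  · -- closed under faces
    rintro S (h | h) F hF
    · rcases (faceL1 S).mp h with rfl | rfl | rfl | rfl
      · exact Or.inl hF
      · rcases (faceR1 F).mp hF with rfl | rfl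
        · exact Or.inl fR1L1
        · exact Or.inl fO1L1
      · rcases (faceR2 F).mp hF with rfl | rfl
        · exact Or.inl fR2L1
        · exact Or.inl fO1L1
      · rcases (myPoint_faces _ F).mp hF with rfl
        exact Or.inl fO1L1
    · rcases (faceL2 S).mp h with rfl | rfl | rfl | rfl
      · exact Or.inr hF
      · rcases (faceS1 F).mp hF with rfl | rfl
        · exact Or.inr fS1L2
        · exact Or.inr fO2L2
      · rcases (faceS2 F).mp hF with rfl | rfl
        · exact Or.inr fS2L2
        · exact Or.inr fO2L2
      · rcases (myPoint_faces _ F).mp hF with rfl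
        exact Or.inr fO2L2
  · -- pairwise intersections
    rintro S (hS | hS) T (hT | hT) hne
    · rcases (faceL1 S).mp hS with rfl | rfl | rfl | rfl <;>
        rcases (faceL1 T).mp hT with rfl | rfl | rfl | rfl
      · exact pairFace (Set.inter_self _) fL1L1 fL1L1
      · exact pairFace (Set.inter_eq_right.mpr subR1L1) fR1L1 fR1R1
      · exact pairFace (Set.inter_eq_right.mpr subR2L1) fR2L1 fR2R2
      · exact pairFace (Set.inter_eq_right.mpr subO1L1) fO1L1 fO1O1
      · exact pairFace (Set.inter_eq_left.mpr subR1L1) fR1R1 fR1L1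
      · exact pairFace (Set.inter_self _) fR1R1 fR1R1
      · exact pairFace iR1R2 fO1R1 fO1R2
      · exact pairFace (Set.inter_eq_right.mpr subO1R1) fO1R1 fO1O1
      · exact pairFace (Set.inter_eq_left.mpr subR2L1) fR2R2 fR2L1
      · exact pairFace (by rw [Set.inter_comm]; exact iR1R2) fO1R2 fO1R1
      · exact pairFace (Set.inter_self _) fR2R2 fR2R2
      · exact pairFace (Set.inter_eq_right.mpr subO1R2) fO1R2 fO1O1
      · exact pairFace (Set.inter_eq_left.mpr subO1L1) fO1O1 fO1L1
      · exact pairFace (Set.inter_eq_left.mpr subO1R1) fO1O1 fO1R1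
      · exact pairFace (Set.inter_eq_left.mpr subO1R2) fO1O1 fO1R2
      · exact pairFace (Set.inter_self _) fO1O1 fO1O1
    · -- cross family 1-2 : empty intersection
      exfalso
      obtain ⟨x, hx1, hx2⟩ := hne
      have e0 := (myFace_subset hS hx1).2.2
      have e1 := (myFace_subset hT hx2).2.2
      rw [e0] at e1
      norm_num at e1
    · exfalso
      obtain ⟨x, hx1, hx2⟩ := hne
      have e0 := (myFace_subset hS hx1).2.2
      have e1 := (myFace_subset hT hx2).2.2
      rw [e0] at e1
      norm_num at e1
    · rcases (faceL2 S).mp hS with rfl | rfl | rfl | rfl <;>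
        rcases (faceL2 T).mp hT with rfl | rfl | rfl | rfl
      · exact pairFace (Set.inter_self _) fL2L2 fL2L2
      · exact pairFace (Set.inter_eq_right.mpr subS1L2) fS1L2 fS1S1
      · exact pairFace (Set.inter_eq_right.mpr subS2L2) fS2L2 fS2S2
      · exact pairFace (Set.inter_eq_right.mpr subO2L2) fO2L2 fO2O2
      · exact pairFace (Set.inter_eq_left.mpr subS1L2) fS1S1 fS1L2
      · exact pairFace (Set.inter_self _) fS1S1 fS1S1
      · exact pairFace iS1S2 fO2S1 fO2S2
      · exact pairFace (Set.inter_eq_right.mpr subO2S1) fO2S1 fO2O2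
      · exact pairFace (Set.inter_eq_left.mpr subS2L2) fS2S2 fS2L2
      · exact pairFace (by rw [Set.inter_comm]; exact iS1S2) fO2S2 fO2S1
      · exact pairFace (Set.inter_self _) fS2S2 fS2S2
      · exact pairFace (Set.inter_eq_right.mpr subO2S2) fO2S2 fO2O2
      · exact pairFace (Set.inter_eq_left.mpr subO2L2) fO2O2 fO2L2
      · exact pairFace (Set.inter_eq_left.mpr subO2S1) fO2O2 fO2S1
      · exact pairFace (Set.inter_eq_left.mpr subO2S2) fO2O2 fO2S2
      · exact pairFace (Set.inter_self _) fO2O2 fO2O2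

lemma mainRatSC : ∀ S ∈ ({S : Set (Fin 3 → ℝ) | IsFaceOf S {x : Fin 3 → ℝ | 0 ≤ x 0 ∧ 0 ≤ x 1 ∧ x 2 = 0} ∨ IsFaceOf S {x : Fin 3 → ℝ | 0 ≤ x 0 + x 1 ∧ 0 ≤ x 0 - x 1 ∧ x 2 = 1}}), IsRatPolyhedron S ∧ StronglyConvexSet S := by
  rintro S (h | h)
  · rcases (faceL1 S).mp h with rfl | rfl | rfl | rfl
    · exact ⟨ratL1, sc_subset (le_refl _) scL1⟩
    · exact ⟨ratR1, sc_subset subR1L1 scL1⟩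
    · exact ⟨ratR2, sc_subset subR2L1 scL1⟩
    · exact ⟨ratO1, sc_subset subO1L1 scL1⟩
  · rcases (faceL2 S).mp h with rfl | rfl | rfl | rfl
    · exact ⟨ratL2, sc_subset (le_refl _) scL2⟩
    · exact ⟨ratS1, sc_subset subS1L2 scL2⟩
    · exact ⟨ratS2, sc_subset subS2L2 scL2⟩
    · exact ⟨ratO2, sc_subset subO2L2 scL2⟩

lemma mainInter : recPoly ({x : Fin 3 → ℝ | 0 ≤ x 0 ∧ 0 ≤ x 1 ∧ x 2 = 0}) ∩ recPoly ({x : Fin 3 → ℝ | 0 ≤ x 0 + x 1 ∧ 0 ≤ x 0 - x 1 ∧ x 2 = 1}) = ({x : Fin 3 → ℝ | 0 ≤ x 1 ∧ 0 ≤ x 0 - x 1 ∧ x 2 = 0}) := by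
  rw [recL1, recL2]
  ext x
  simp only [Set.mem_inter_iff, Set.mem_setOf_eq]
  constructor
  · rintro ⟨⟨a0, a1, a2⟩, ⟨b0, b1, b2⟩⟩
    exact ⟨a1, b1, a2⟩
  · rintro ⟨h1, h2, h3⟩
    exact ⟨⟨by linarith, h1, h3⟩, ⟨by linarith, h2, h3⟩⟩

lemma mainNotFace1 : ¬ IsFaceOf (recPoly ({x : Fin 3 → ℝ | 0 ≤ x 0 ∧ 0 ≤ x 1 ∧ x 2 = 0}) ∩ recPoly ({x : Fin 3 → ℝ | 0 ≤ x 0 + x 1 ∧ 0 ≤ x 0 - x 1 ∧ x 2 = 1})) (recPoly ({x : Fin 3 → ℝ | 0 ≤ x 0 ∧ 0 ≤ x 1 ∧ x 2 = 0})) := by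
  rw [mainInter, recL1]
  intro h
  rcases (faceL1 _).mp h with h' | h' | h' | h'
  · have := (Set.ext_iff.mp h') ![0,1,0]
    norm_num at this
    exact this rfl
  · have := (Set.ext_iff.mp h') ![1,1,0]
    norm_num at this
    exact this rfl
  · have := (Set.ext_iff.mp h') ![1,1,0]
    norm_num at this
    exact this rfl
  · rw [eqO1] at h'
    have := (Set.ext_iff.mp h') ![1,1,0]
    norm_num at this
    exact this rfl

lemma mainNotFace2 : ¬ IsFaceOf (recPoly ({x : Fin 3 → ℝ | 0 ≤ x 0 ∧ 0 ≤ x 1 ∧ x 2 = 0}) ∩ recPoly ({x : Fin 3 → ℝ | 0 ≤ x 0 + x 1 ∧ 0 ≤ x 0 - x 1 ∧ x 2 = 1})) (recPoly ({x : Fin 3 → ℝ | 0 ≤ x 0 + x 1 ∧ 0 ≤ x 0 - x 1 ∧ x 2 = 1})) := by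
  rw [mainInter, recL2]
  intro h
  rcases (faceL2' _).mp h with h' | h' | h' | h'
  · have := (Set.ext_iff.mp h') ![1,-1,0]
    norm_num at this
    exact this rfl
  · have := (Set.ext_iff.mp h') ![1,0,0]
    norm_num at this
    exact this rfl
  · have := (Set.ext_iff.mp h') ![2,1,0]
    norm_num at this
    exact this rfl
  · rw [eqO1] at h'
    have := (Set.ext_iff.mp h') ![1,1,0]
    norm_num at this
    exact this rfl

lemma mainNotComplex : ¬ IsPolyComplex (recComplex ({S : Set (Fin 3 → ℝ) | IsFaceOf S {x : Fin 3 → ℝ | 0 ≤ x 0 ∧ 0 ≤ x 1 ∧ x 2 = 0} ∨ IsFaceOf S {x : Fin 3 → ℝ | 0 ≤ x 0 + x 1 ∧ 0 ≤ x 0 - x 1 ∧ x 2 = 1}})) := by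
  intro h
  obtain ⟨-, -, -, -, h5⟩ := h
  have hm1 : recPoly ({x : Fin 3 → ℝ | 0 ≤ x 0 ∧ 0 ≤ x 1 ∧ x 2 = 0}) ∈ recComplex ({S : Set (Fin 3 → ℝ) | IsFaceOf S {x : Fin 3 → ℝ | 0 ≤ x 0 ∧ 0 ≤ x 1 ∧ x 2 = 0} ∨ IsFaceOf S {x : Fin 3 → ℝ | 0 ≤ x 0 + x 1 ∧ 0 ≤ x 0 - x 1 ∧ x 2 = 1}}) :=
    ⟨{x : Fin 3 → ℝ | 0 ≤ x 0 ∧ 0 ≤ x 1 ∧ x 2 = 0}, Or.inl fL1L1, rfl⟩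
  have hm2 : recPoly ({x : Fin 3 → ℝ | 0 ≤ x 0 + x 1 ∧ 0 ≤ x 0 - x 1 ∧ x 2 = 1}) ∈ recComplex ({S : Set (Fin 3 → ℝ) | IsFaceOf S {x : Fin 3 → ℝ | 0 ≤ x 0 ∧ 0 ≤ x 1 ∧ x 2 = 0} ∨ IsFaceOf S {x : Fin 3 → ℝ | 0 ≤ x 0 + x 1 ∧ 0 ≤ x 0 - x 1 ∧ x 2 = 1}}) :=
    ⟨{x : Fin 3 → ℝ | 0 ≤ x 0 + x 1 ∧ 0 ≤ x 0 - x 1 ∧ x 2 = 1}, Or.inr fL2L2, rfl⟩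
  have hne : (recPoly ({x : Fin 3 → ℝ | 0 ≤ x 0 ∧ 0 ≤ x 1 ∧ x 2 = 0}) ∩ recPoly ({x : Fin 3 → ℝ | 0 ≤ x 0 + x 1 ∧ 0 ≤ x 0 - x 1 ∧ x 2 = 1})).Nonempty := by
    rw [mainInter]
    exact ⟨0, by refine ⟨?_, ?_, ?_⟩ <;> simp⟩
  exact mainNotFace1 (h5 _ hm1 _ hm2 hne).1

end Main


/-- Example 17: the strongly convex rational polyhedral
complex `Π` in `ℝ³` consisting of all faces of
`Λ₁ = {(x₁,x₂,0) | x₁, x₂ ≥ 0}` and `Λ₂ = {(x₁,x₂,1) | x₁+x₂ ≥ 0, x₁−x₂ ≥ 0}`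
has `rec(Λ₁) ∩ rec(Λ₂) = {(x₁,x₂,0) | x₂ ≥ 0, x₁−x₂ ≥ 0}`, which is a face of
neither `rec(Λ₁)` nor `rec(Λ₂)`; hence `rec(Π)` is not a polyhedral complex. -/
theorem statement12 :
    let Λ₁ : Set (Fin 3 → ℝ) := {x | 0 ≤ x 0 ∧ 0 ≤ x 1 ∧ x 2 = 0}
    let Λ₂ : Set (Fin 3 → ℝ) := {x | 0 ≤ x 0 + x 1 ∧ 0 ≤ x 0 - x 1 ∧ x 2 = 1}
    let P : Set (Set (Fin 3 → ℝ)) := {S | IsFaceOf S Λ₁ ∨ IsFaceOf S Λ₂}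
    IsPolyComplex P ∧
    (∀ S ∈ P, IsRatPolyhedron S ∧ StronglyConvexSet S) ∧
    recPoly Λ₁ ∩ recPoly Λ₂ = {x | 0 ≤ x 1 ∧ 0 ≤ x 0 - x 1 ∧ x 2 = 0} ∧
    ¬ IsFaceOf (recPoly Λ₁ ∩ recPoly Λ₂) (recPoly Λ₁) ∧
    ¬ IsFaceOf (recPoly Λ₁ ∩ recPoly Λ₂) (recPoly Λ₂) ∧
    ¬ IsPolyComplex (recComplex P) := by
  intro Λ₁ Λ₂ P
  exact ⟨mainComplex, mainRatSC, mainInter, mainNotFace1, mainNotFace2, mainNotComplex⟩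
end
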